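/- arXiv:2307.06269 — 7 statements merged into one kernel-verified Lean document; each statement's English description precedes it below -/
import Mathlib

section
/- (Second-order product bias of the one-step functional for Γ0.) Let π0(x,z) := z·e(x) + (1−z)·(1−e(x)), where e∘X is a version of E[Z | σ(X)] with ε ≤ e ≤ 1−ε, and let m_0, m_1 be versions of E[Y | X, Z=0] and E[Y | X, Z=1]. Then for every measurable π* : S × {0,1} → ℝ with π*(x,z) ≥ ε′ > 0 and every bounded measurable μ* : S × {0,1} → ℝ, E[ (2Z−1)/π*(X,Z) · (Y − μ*(X,Z)) + μ*(X,1) − μ*(X,0) ] − Γ0 = E[ Σ_{z ∈ {0,1}} (2z−1) · (π0(X,z)/π*(X,z) − 1) · (m_z(X) − μ*(X,z)) ], where Γ0 := E[m1(X) − m0(X)]. In particular the bias vanishes whenever π* = π0 or μ*(·,z) = m_z for both z. -/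
open MeasureTheory ProbabilityTheory


lemma integ_bdd {Ω : Type*} [MeasurableSpace Ω] {P : Measure Ω} [IsFiniteMeasure P]
    {f : Ω → ℝ} (hf : Measurable f) {C : ℝ} (h : ∀ ω, |f ω| ≤ C) : Integrable f P :=
  (integrable_const C).mono' hf.aestronglyMeasurable
    (Filter.Eventually.of_forall (fun ω => by simpa [Real.norm_eq_abs] using h ω))

lemma aux_bound {Ω S : Type*} [MeasurableSpace Ω] [MeasurableSpace S]
    (P : Measure Ω) [IsProbabilityMeasure P]
    (X : Ω → S) (hX : Measurable X)
    (W : Ω → ℝ) (hW : Measurable W) (hW01 : ∀ ω, 0 ≤ W ω ∧ W ω ≤ 1)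
    (Y : Ω → ℝ) (hY : Measurable Y) (Cy : ℝ) (hCy0 : 0 ≤ Cy) (hCy : ∀ ω, |Y ω| ≤ Cy)
    (w : S → ℝ) (hw : Measurable w) (hwub : ∀ x, w x ≤ 1)
    (ε : ℝ) (hε : 0 < ε) (hwlb : ∀ x, ε ≤ w x)
    (m : S → ℝ) (hm : Measurable m)
    (hweq : ∀ g : S → ℝ, Measurable g → (∃ C, ∀ x, |g x| ≤ C) →
      ∫ ω, W ω * g (X ω) ∂P = ∫ ω, w (X ω) * g (X ω) ∂P)
    (hmv : ∀ g : S → ℝ, Measurable g → (∃ C, ∀ x, |g x| ≤ C) →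
      ∫ ω, Y ω * W ω * g (X ω) ∂P = ∫ ω, m (X ω) * W ω * g (X ω) ∂P) :
    ∀ᵐ ω ∂P, |m (X ω)| ≤ (Cy + 1) / ε := by
  set C := (Cy + 1) / ε with hCdef
  have hC0 : 0 < C := by positivity
  have hwabs : ∀ x, |w x| ≤ 1 := fun x =>
    abs_le.2 ⟨by linarith [hwlb x], hwub x⟩
  have key : ∀ N : ℕ, ∀ᵐ ω ∂P, ¬ (C < |m (X ω)| ∧ |m (X ω)| ≤ C + N) := by
    intro N
    set ind : S → ℝ := fun x => if C < |m x| ∧ |m x| ≤ C + N then 1 else 0 with hinddef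
    set g : S → ℝ := fun x => if C < |m x| ∧ |m x| ≤ C + N then (if m x < 0 then -1 else 1) else 0
      with hgdef
    have hBset : MeasurableSet {x : S | C < |m x| ∧ |m x| ≤ C + N} :=
      (measurableSet_lt measurable_const hm.abs).inter (measurableSet_le hm.abs measurable_const)
    have hindm : Measurable ind := Measurable.ite hBset measurable_const measurable_const
    have hgm : Measurable g :=
      Measurable.ite hBset
        (Measurable.ite (measurableSet_lt hm measurable_const) measurable_const measurable_const)
        measurable_const
    have hind0 : ∀ x, 0 ≤ ind x := by
      intro x; simp only [hinddef]; split <;> norm_num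
    have hindb : ∀ x, |ind x| ≤ 1 := by
      intro x; simp only [hinddef]; split <;> norm_num
    have hgb : ∀ x, |g x| ≤ 1 := by
      intro x; simp only [hgdef]; split
      · split <;> norm_num
      · norm_num
    have habsg : ∀ x, |g x| = ind x := by
      intro x; simp only [hgdef, hinddef]; split
      · split <;> norm_num
      · norm_num
    have hmg : ∀ x, m x * g x = |m x| * ind x := by
      intro x; simp only [hgdef, hinddef]
      split_ifs with h1 h2
      · rw [abs_of_neg h2]; ring
      · rw [abs_of_nonneg (not_lt.1 h2)]
      · ring
    have hWabs : ∀ ω, |W ω| ≤ 1 := fun ω =>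
      abs_le.2 ⟨by linarith [(hW01 ω).1], (hW01 ω).2⟩
    -- integrability
    have i_ind : Integrable (fun ω => ind (X ω)) P := integ_bdd (hindm.comp hX) (fun ω => hindb _)
    have i_Cyind : Integrable (fun ω => Cy * ind (X ω)) P :=
      integ_bdd (measurable_const.mul (hindm.comp hX))
        (fun ω => by
          calc |Cy * ind (X ω)| ≤ |Cy| * 1 := by
                rw [abs_mul]; exact mul_le_mul_of_nonneg_left (hindb _) (abs_nonneg _)
            _ = |Cy| := mul_one _)
    have i_YWg : Integrable (fun ω => Y ω * W ω * g (X ω)) P :=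
      integ_bdd ((hY.mul hW).mul (hgm.comp hX))
        (fun ω => by
          calc |Y ω * W ω * g (X ω)| = |Y ω| * |W ω| * |g (X ω)| := by rw [abs_mul, abs_mul]
            _ ≤ Cy * 1 * 1 :=
                mul_le_mul (mul_le_mul (hCy ω) (hWabs ω) (abs_nonneg _) hCy0) (hgb _)
                  (abs_nonneg _) (by positivity)
            _ = Cy := by ring)
    have i_Cu : Integrable (fun ω => C * (W ω * ind (X ω))) P :=
      integ_bdd (measurable_const.mul (hW.mul (hindm.comp hX)))
        (fun ω => by
          calc |C * (W ω * ind (X ω))| = |C| * (|W ω| * |ind (X ω)|) := by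
                rw [abs_mul, abs_mul]
            _ ≤ |C| * (1 * 1) := by
                apply mul_le_mul_of_nonneg_left _ (abs_nonneg _)
                exact mul_le_mul (hWabs ω) (hindb _) (abs_nonneg _) zero_le_one
            _ = |C| := by ring)
    have i_mu : Integrable (fun ω => |m (X ω)| * (W ω * ind (X ω))) P :=
      integ_bdd ((hm.comp hX).abs.mul (hW.mul (hindm.comp hX)))
        (fun ω => by
          by_cases hx : C < |m (X ω)| ∧ |m (X ω)| ≤ C + N
          · calc |(|m (X ω)|) * (W ω * ind (X ω))| = |m (X ω)| * (|W ω| * |ind (X ω)|) := by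
                  rw [abs_mul, abs_mul, abs_abs]
              _ ≤ (C + N) * (1 * 1) :=
                  mul_le_mul hx.2 (mul_le_mul (hWabs ω) (hindb _) (abs_nonneg _) zero_le_one)
                    (by positivity) (by positivity)
              _ = C + N := by ring
          · simp only [hinddef, if_neg hx, mul_zero, abs_zero]; positivity)
    set t := ∫ ω, ind (X ω) ∂P with htdef
    have ht0 : 0 ≤ t := integral_nonneg (fun ω => hind0 _)
    -- upper bound
    have hup : ∫ ω, m (X ω) * W ω * g (X ω) ∂P ≤ Cy * t := by
      rw [← hmv g hgm ⟨1, hgb⟩, htdef, ← integral_const_mul]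
      apply integral_mono i_YWg i_Cyind
      intro ω
      calc Y ω * W ω * g (X ω) ≤ |Y ω * W ω * g (X ω)| := le_abs_self _
        _ = |Y ω| * |W ω| * |g (X ω)| := by rw [abs_mul, abs_mul]
        _ ≤ Cy * 1 * ind (X ω) := by
            rw [habsg]
            exact mul_le_mul_of_nonneg_right (mul_le_mul (hCy ω) (hWabs ω) (abs_nonneg _) hCy0)
              (hind0 _)
        _ = Cy * ind (X ω) := by ring
    -- lower bound
    have hmid : ∫ ω, m (X ω) * W ω * g (X ω) ∂P = ∫ ω, |m (X ω)| * (W ω * ind (X ω)) ∂P := by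
      apply integral_congr_ae (Filter.Eventually.of_forall (fun ω => ?_))
      rw [mul_right_comm, hmg, mul_right_comm]
      ring
    have hlow1 : ∫ ω, C * (W ω * ind (X ω)) ∂P ≤ ∫ ω, |m (X ω)| * (W ω * ind (X ω)) ∂P := by
      apply integral_mono i_Cu i_mu
      intro ω
      by_cases hx : C < |m (X ω)| ∧ |m (X ω)| ≤ C + N
      · exact mul_le_mul_of_nonneg_right hx.1.le (mul_nonneg (hW01 ω).1 (hind0 _))
      · simp only [hinddef, if_neg hx, mul_zero]; exact le_rfl
    have hWind : ∫ ω, W ω * ind (X ω) ∂P = ∫ ω, w (X ω) * ind (X ω) ∂P :=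
      hweq ind hindm ⟨1, hindb⟩
    have hεind : ε * t ≤ ∫ ω, w (X ω) * ind (X ω) ∂P := by
      rw [htdef, ← integral_const_mul]
      apply integral_mono
      · exact integ_bdd (measurable_const.mul (hindm.comp hX))
          (fun ω => by
            calc |ε * ind (X ω)| ≤ |ε| * 1 := by
                  rw [abs_mul]; exact mul_le_mul_of_nonneg_left (hindb _) (abs_nonneg _)
              _ = |ε| := mul_one _)
      · exact integ_bdd ((hw.comp hX).mul (hindm.comp hX))
          (fun ω => by
            calc |w (X ω) * ind (X ω)| = |w (X ω)| * |ind (X ω)| := abs_mul _ _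
              _ ≤ 1 * 1 := mul_le_mul (hwabs _) (hindb _) (abs_nonneg _) zero_le_one
              _ = 1 := one_mul _)
      · intro ω
        exact mul_le_mul_of_nonneg_right (hwlb _) (hind0 _)
    have hlow : C * (ε * t) ≤ ∫ ω, m (X ω) * W ω * g (X ω) ∂P := by
      calc C * (ε * t) ≤ C * ∫ ω, w (X ω) * ind (X ω) ∂P :=
            mul_le_mul_of_nonneg_left hεind hC0.le
        _ = C * ∫ ω, W ω * ind (X ω) ∂P := by rw [hWind]
        _ = ∫ ω, C * (W ω * ind (X ω)) ∂P := (integral_const_mul _ _).symm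
        _ ≤ ∫ ω, |m (X ω)| * (W ω * ind (X ω)) ∂P := hlow1
        _ = ∫ ω, m (X ω) * W ω * g (X ω) ∂P := hmid.symm
    have hCε : C * ε = Cy + 1 := div_mul_cancel₀ _ hε.ne'
    have ht : t = 0 := by
      have h1 : C * (ε * t) ≤ Cy * t := hlow.trans hup
      have h2 : (Cy + 1) * t ≤ Cy * t := by
        calc (Cy + 1) * t = C * (ε * t) := by rw [← hCε]; ring
          _ ≤ Cy * t := h1
      nlinarith
    have hae0 : (fun ω => ind (X ω)) =ᵐ[P] 0 :=
      (integral_eq_zero_iff_of_nonneg (fun ω => hind0 (X ω)) i_ind).1 ht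
    filter_upwards [hae0] with ω h0
    intro hcond
    simp only [hinddef, Pi.zero_apply] at h0
    rw [if_pos hcond] at h0
    exact one_ne_zero h0
  have hall := (ae_all_iff).2 key
  filter_upwards [hall] with ω hω
  by_contra hlt
  push_neg at hlt
  obtain ⟨N, hN⟩ := exists_nat_ge (|m (X ω)| - C)
  exact hω N ⟨hlt, by linarith⟩

lemma abs_mul_le' {a b A B : ℝ} (ha : |a| ≤ A) (hb : |b| ≤ B) : |a * b| ≤ A * B := by
  rw [abs_mul]
  exact mul_le_mul ha hb (abs_nonneg _) ((abs_nonneg a).trans ha)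

lemma abs_mul3_le' {a b c A B C : ℝ} (ha : |a| ≤ A) (hb : |b| ≤ B) (hc : |c| ≤ C) :
    |a * b * c| ≤ A * B * C := abs_mul_le' (abs_mul_le' ha hb) hc

lemma abs_sub_le'' {a b A B : ℝ} (ha : |a| ≤ A) (hb : |b| ≤ B) : |a - b| ≤ A + B := by
  rw [sub_eq_add_neg]
  exact (abs_add_le _ _).trans (by rw [abs_neg]; exact add_le_add ha hb)

lemma div_bound' {a b c d : ℝ} (ha : |a| ≤ c) (hd : 0 < d) (hb : d ≤ b) : |a / b| ≤ c / d := by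
  rw [abs_div, abs_of_pos (lt_of_lt_of_le hd hb)]
  exact div_le_div₀ ((abs_nonneg a).trans ha) ha hd hb

lemma aux_main {Ω S : Type*} [MeasurableSpace Ω] [MeasurableSpace S]
    (P : Measure Ω) [IsProbabilityMeasure P]
    (X : Ω → S) (hX : Measurable X)
    (Z Y : Ω → ℝ) (hZ : Measurable Z) (hY : Measurable Y)
    (hZ01 : ∀ ω, Z ω = 0 ∨ Z ω = 1)
    (Cy : ℝ) (hCy0 : 0 ≤ Cy) (hYb : ∀ ω, |Y ω| ≤ Cy)
    (e : S → ℝ) (he : Measurable e) (hee : ∀ x, 0 ≤ e x ∧ e x ≤ 1)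
    (hVe : ∀ g : S → ℝ, Measurable g → (∃ C, ∀ x, |g x| ≤ C) →
      ∫ ω, Z ω * g (X ω) ∂P = ∫ ω, e (X ω) * g (X ω) ∂P)
    (m0 m1 : S → ℝ) (hm0 : Measurable m0) (hm1 : Measurable m1)
    (Cm : ℝ) (hCm0 : 0 ≤ Cm) (hm0b : ∀ x, |m0 x| ≤ Cm) (hm1b : ∀ x, |m1 x| ≤ Cm)
    (hm0v : ∀ g : S → ℝ, Measurable g → (∃ C, ∀ x, |g x| ≤ C) →
      ∫ ω, Y ω * (if Z ω = 0 then (1:ℝ) else 0) * g (X ω) ∂P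
        = ∫ ω, m0 (X ω) * (if Z ω = 0 then (1:ℝ) else 0) * g (X ω) ∂P)
    (hm1v : ∀ g : S → ℝ, Measurable g → (∃ C, ∀ x, |g x| ≤ C) →
      ∫ ω, Y ω * (if Z ω = 1 then (1:ℝ) else 0) * g (X ω) ∂P
        = ∫ ω, m1 (X ω) * (if Z ω = 1 then (1:ℝ) else 0) * g (X ω) ∂P)
    (π0s π1s : S → ℝ) (ε' : ℝ) (hπ0m : Measurable π0s) (hπ1m : Measurable π1s) (hε' : 0 < ε')
    (hπ0 : ∀ x, ε' ≤ π0s x) (hπ1 : ∀ x, ε' ≤ π1s x)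
    (μ0s μ1s : S → ℝ) (hμ0m : Measurable μ0s) (hμ1m : Measurable μ1s)
    (C0 : ℝ) (hC00 : 0 ≤ C0) (hμ0b : ∀ x, |μ0s x| ≤ C0)
    (C1 : ℝ) (hC10 : 0 ≤ C1) (hμ1b : ∀ x, |μ1s x| ≤ C1) :
    (∫ ω, (2 * Z ω - 1) / (if Z ω = 1 then π1s (X ω) else π0s (X ω))
          * (Y ω - (if Z ω = 1 then μ1s (X ω) else μ0s (X ω)))
        + (μ1s (X ω) - μ0s (X ω)) ∂P)
      - (∫ ω, m1 (X ω) - m0 (X ω) ∂P)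
    = ∫ ω, (e (X ω) / π1s (X ω) - 1) * (m1 (X ω) - μ1s (X ω))
        - ((1 - e (X ω)) / π0s (X ω) - 1) * (m0 (X ω) - μ0s (X ω)) ∂P := by
  -- abbreviations (opaque local constants with defining equations)
  set p1 : S → ℝ := fun x => 1 / π1s x with hp1def
  set p0 : S → ℝ := fun x => 1 / π0s x with hp0def
  set q1 : S → ℝ := fun x => μ1s x / π1s x with hq1def
  set q0 : S → ℝ := fun x => μ0s x / π0s x with hq0def
  set g1 : S → ℝ := fun x => (m1 x - μ1s x) / π1s x with hg1def
  set g0 : S → ℝ := fun x => (m0 x - μ0s x) / π0s x with hg0def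
  set G : S → ℝ := fun x => g1 x + g0 x with hGdef
  set H : S → ℝ := fun x => μ1s x - μ0s x - g0 x with hHdef
  -- measurability
  have hp1m : Measurable p1 := measurable_const.div hπ1m
  have hp0m : Measurable p0 := measurable_const.div hπ0m
  have hq1m : Measurable q1 := hμ1m.div hπ1m
  have hq0m : Measurable q0 := hμ0m.div hπ0m
  have hg1m : Measurable g1 := (hm1.sub hμ1m).div hπ1m
  have hg0m : Measurable g0 := (hm0.sub hμ0m).div hπ0m
  have hGm : Measurable G := hg1m.add hg0m
  have hHm : Measurable H := (hμ1m.sub hμ0m).sub hg0m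
  have hI1m : Measurable (fun ω => if Z ω = 1 then (1:ℝ) else 0) :=
    Measurable.ite (hZ (measurableSet_singleton 1)) measurable_const measurable_const
  have hI0m : Measurable (fun ω => if Z ω = 0 then (1:ℝ) else 0) :=
    Measurable.ite (hZ (measurableSet_singleton 0)) measurable_const measurable_const
  -- bounds
  have hp1b : ∀ x, |p1 x| ≤ 1 / ε' := fun x => by
    rw [hp1def]; exact div_bound' (by norm_num) hε' (hπ1 x)
  have hp0b : ∀ x, |p0 x| ≤ 1 / ε' := fun x => by
    rw [hp0def]; exact div_bound' (by norm_num) hε' (hπ0 x)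
  have hq1b : ∀ x, |q1 x| ≤ C1 / ε' := fun x => by
    rw [hq1def]; exact div_bound' (hμ1b x) hε' (hπ1 x)
  have hq0b : ∀ x, |q0 x| ≤ C0 / ε' := fun x => by
    rw [hq0def]; exact div_bound' (hμ0b x) hε' (hπ0 x)
  have hg1b : ∀ x, |g1 x| ≤ (Cm + C1) / ε' := fun x => by
    rw [hg1def]; exact div_bound' (abs_sub_le'' (hm1b x) (hμ1b x)) hε' (hπ1 x)
  have hg0b : ∀ x, |g0 x| ≤ (Cm + C0) / ε' := fun x => by
    rw [hg0def]; exact div_bound' (abs_sub_le'' (hm0b x) (hμ0b x)) hε' (hπ0 x)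
  have hGb : ∀ x, |G x| ≤ (Cm + C1) / ε' + (Cm + C0) / ε' := fun x => by
    rw [hGdef]; exact (abs_add_le _ _).trans (add_le_add (hg1b x) (hg0b x))
  have hHb : ∀ x, |H x| ≤ (C1 + C0) + (Cm + C0) / ε' := fun x => by
    rw [hHdef]; exact abs_sub_le'' (abs_sub_le'' (hμ1b x) (hμ0b x)) (hg0b x)
  have hZb : ∀ ω, |Z ω| ≤ 1 := fun ω => by rcases hZ01 ω with h | h <;> rw [h] <;> norm_num
  have hZ1b : ∀ ω, |1 - Z ω| ≤ 1 := fun ω => by rcases hZ01 ω with h | h <;> rw [h] <;> norm_num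
  have hI1b : ∀ ω, |if Z ω = 1 then (1:ℝ) else 0| ≤ 1 := fun ω => by split <;> norm_num
  have hI0b : ∀ ω, |if Z ω = 0 then (1:ℝ) else 0| ≤ 1 := fun ω => by split <;> norm_num
  have heb : ∀ x, |e x| ≤ 1 := fun x => abs_le.2 ⟨by linarith [(hee x).1], (hee x).2⟩
  -- integrable pieces
  have iA : Integrable (fun ω => Y ω * (if Z ω = 1 then (1:ℝ) else 0) * p1 (X ω)) P :=
    integ_bdd ((hY.mul hI1m).mul (hp1m.comp hX))
      (fun ω => abs_mul3_le' (hYb ω) (hI1b ω) (hp1b (X ω)))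
  have iB : Integrable (fun ω => Y ω * (if Z ω = 0 then (1:ℝ) else 0) * p0 (X ω)) P :=
    integ_bdd ((hY.mul hI0m).mul (hp0m.comp hX))
      (fun ω => abs_mul3_le' (hYb ω) (hI0b ω) (hp0b (X ω)))
  have iR1 : Integrable (fun ω => -(Z ω) * q1 (X ω)) P :=
    integ_bdd (hZ.neg.mul (hq1m.comp hX))
      (fun ω => abs_mul_le' (by rw [abs_neg]; exact hZb ω) (hq1b (X ω)))
  have iR2 : Integrable (fun ω => (1 - Z ω) * q0 (X ω)) P :=
    integ_bdd ((measurable_const.sub hZ).mul (hq0m.comp hX))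
      (fun ω => abs_mul_le' (hZ1b ω) (hq0b (X ω)))
  have iR3 : Integrable (fun ω => μ1s (X ω) - μ0s (X ω)) P :=
    integ_bdd ((hμ1m.comp hX).sub (hμ0m.comp hX))
      (fun ω => abs_sub_le'' (hμ1b (X ω)) (hμ0b (X ω)))
  have iR : Integrable (fun ω => -(Z ω) * q1 (X ω) + (1 - Z ω) * q0 (X ω)
      + (μ1s (X ω) - μ0s (X ω))) P := (iR1.add iR2).add iR3
  have iZm1 : Integrable (fun ω => Z ω * (m1 (X ω) * p1 (X ω))) P :=
    integ_bdd (hZ.mul ((hm1.comp hX).mul (hp1m.comp hX)))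
      (fun ω => abs_mul_le' (hZb ω) (abs_mul_le' (hm1b (X ω)) (hp1b (X ω))))
  have iZm0 : Integrable (fun ω => (1 - Z ω) * (m0 (X ω) * p0 (X ω))) P :=
    integ_bdd ((measurable_const.sub hZ).mul ((hm0.comp hX).mul (hp0m.comp hX)))
      (fun ω => abs_mul_le' (hZ1b ω) (abs_mul_le' (hm0b (X ω)) (hp0b (X ω))))
  have iZG : Integrable (fun ω => Z ω * G (X ω)) P :=
    integ_bdd (hZ.mul (hGm.comp hX)) (fun ω => abs_mul_le' (hZb ω) (hGb (X ω)))
  have ieG : Integrable (fun ω => e (X ω) * G (X ω)) P :=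
    integ_bdd ((he.comp hX).mul (hGm.comp hX))
      (fun ω => abs_mul_le' (heb (X ω)) (hGb (X ω)))
  have iH : Integrable (fun ω => H (X ω)) P :=
    integ_bdd (hHm.comp hX) (fun ω => hHb (X ω))
  have ieGH : Integrable (fun ω => e (X ω) * G (X ω) + H (X ω)) P := ieG.add iH
  have iAB : Integrable (fun ω => Y ω * (if Z ω = 1 then (1:ℝ) else 0) * p1 (X ω)
      - Y ω * (if Z ω = 0 then (1:ℝ) else 0) * p0 (X ω)) P := iA.sub iB
  have iZm10 : Integrable (fun ω => Z ω * (m1 (X ω) * p1 (X ω))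
      - (1 - Z ω) * (m0 (X ω) * p0 (X ω))) P := iZm1.sub iZm0
  have im10 : Integrable (fun ω => m1 (X ω) - m0 (X ω)) P :=
    integ_bdd ((hm1.comp hX).sub (hm0.comp hX))
      (fun ω => abs_sub_le'' (hm1b (X ω)) (hm0b (X ω)))
  -- Step 1: decompose the one-step integrand
  have step1 : (∫ ω, (2 * Z ω - 1) / (if Z ω = 1 then π1s (X ω) else π0s (X ω))
          * (Y ω - (if Z ω = 1 then μ1s (X ω) else μ0s (X ω)))
        + (μ1s (X ω) - μ0s (X ω)) ∂P)
      = (∫ ω, Y ω * (if Z ω = 1 then (1:ℝ) else 0) * p1 (X ω) ∂P)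
        - (∫ ω, Y ω * (if Z ω = 0 then (1:ℝ) else 0) * p0 (X ω) ∂P)
        + ∫ ω, -(Z ω) * q1 (X ω) + (1 - Z ω) * q0 (X ω) + (μ1s (X ω) - μ0s (X ω)) ∂P := by
    rw [← integral_sub iA iB, ← integral_add iAB iR]
    apply integral_congr_ae (Filter.Eventually.of_forall (fun ω => ?_))
    rcases hZ01 ω with h | h <;>
      simp only [h, hp1def, hp0def, hq1def, hq0def] <;> norm_num <;> ring
  -- Step 2: replace Y by m1 / m0 and indicators by Z
  have step2 : (∫ ω, Y ω * (if Z ω = 1 then (1:ℝ) else 0) * p1 (X ω) ∂P)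
      = ∫ ω, Z ω * (m1 (X ω) * p1 (X ω)) ∂P := by
    rw [hm1v p1 hp1m ⟨1 / ε', hp1b⟩]
    apply integral_congr_ae (Filter.Eventually.of_forall (fun ω => ?_))
    rcases hZ01 ω with h | h <;> simp only [h] <;> norm_num
  have step3 : (∫ ω, Y ω * (if Z ω = 0 then (1:ℝ) else 0) * p0 (X ω) ∂P)
      = ∫ ω, (1 - Z ω) * (m0 (X ω) * p0 (X ω)) ∂P := by
    rw [hm0v p0 hp0m ⟨1 / ε', hp0b⟩]
    apply integral_congr_ae (Filter.Eventually.of_forall (fun ω => ?_))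
    rcases hZ01 ω with h | h <;> simp only [h] <;> norm_num <;> ring
  -- Step 4: regroup into Z * G + H
  have step4 : (∫ ω, Z ω * (m1 (X ω) * p1 (X ω)) ∂P)
      - (∫ ω, (1 - Z ω) * (m0 (X ω) * p0 (X ω)) ∂P)
      + (∫ ω, -(Z ω) * q1 (X ω) + (1 - Z ω) * q0 (X ω) + (μ1s (X ω) - μ0s (X ω)) ∂P)
      = (∫ ω, Z ω * G (X ω) ∂P) + ∫ ω, H (X ω) ∂P := by
    rw [← integral_sub iZm1 iZm0, ← integral_add iZm10 iR, ← integral_add iZG iH]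
    apply integral_congr_ae (Filter.Eventually.of_forall (fun ω => ?_))
    simp only [hGdef, hHdef, hg1def, hg0def, hp1def, hp0def, hq1def, hq0def]
    ring
  -- Step 5: apply hVe
  have step5 : (∫ ω, Z ω * G (X ω) ∂P) = ∫ ω, e (X ω) * G (X ω) ∂P :=
    hVe G hGm ⟨(Cm + C1) / ε' + (Cm + C0) / ε', hGb⟩
  -- put it together
  rw [step1, step2, step3, step4, step5, ← integral_add ieG iH,
    ← integral_sub ieGH im10]
  apply integral_congr_ae (Filter.Eventually.of_forall (fun ω => ?_))
  simp only [hGdef, hHdef, hg1def, hg0def]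
  ring


/-- second-order product bias of the one-step functional for Γ0:
E[(2Z−1)/π*(X,Z)·(Y − μ*(X,Z)) + μ*(X,1) − μ*(X,0)] − Γ0
  = E[Σ_{z∈{0,1}} (2z−1)·(π0(X,z)/π*(X,z) − 1)·(m_z(X) − μ*(X,z))],
written out explicitly with π0(X,1) = e(X) and π0(X,0) = 1 − e(X). -/
theorem stmt_9
    {Ω : Type*} [MeasurableSpace Ω] (P : Measure Ω) [IsProbabilityMeasure P]
    {S : Type*} [mS : MeasurableSpace S]
    (X : Ω → S) (hX : Measurable X)
    (Z Y : Ω → ℝ) (hZ : Measurable Z) (hY : Measurable Y)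
    (hZ01 : ∀ ω, Z ω = 0 ∨ Z ω = 1)
    (hYb : ∃ C, ∀ ω, |Y ω| ≤ C)
    (e : S → ℝ) (he : Measurable e) (ε : ℝ) (hε : 0 < ε) (hε2 : ε < 1/2)
    (hebd : ∀ x, ε ≤ e x ∧ e x ≤ 1 - ε)
    (hVe : ∀ g : S → ℝ, Measurable g → (∃ C, ∀ x, |g x| ≤ C) →
      ∫ ω, Z ω * g (X ω) ∂P = ∫ ω, e (X ω) * g (X ω) ∂P)
    (m0 m1 : S → ℝ) (hm0 : Measurable m0) (hm1 : Measurable m1)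
    (hm0v : ∀ g : S → ℝ, Measurable g → (∃ C, ∀ x, |g x| ≤ C) →
      ∫ ω, Y ω * (if Z ω = 0 then (1:ℝ) else 0) * g (X ω) ∂P
        = ∫ ω, m0 (X ω) * (if Z ω = 0 then (1:ℝ) else 0) * g (X ω) ∂P)
    (hm1v : ∀ g : S → ℝ, Measurable g → (∃ C, ∀ x, |g x| ≤ C) →
      ∫ ω, Y ω * (if Z ω = 1 then (1:ℝ) else 0) * g (X ω) ∂P
        = ∫ ω, m1 (X ω) * (if Z ω = 1 then (1:ℝ) else 0) * g (X ω) ∂P) :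
    ∀ (π0s π1s : S → ℝ) (ε' : ℝ), Measurable π0s → Measurable π1s → 0 < ε' →
      (∀ x, ε' ≤ π0s x) → (∀ x, ε' ≤ π1s x) →
      ∀ μ0s μ1s : S → ℝ, Measurable μ0s → Measurable μ1s →
        (∃ C, ∀ x, |μ0s x| ≤ C) → (∃ C, ∀ x, |μ1s x| ≤ C) →
        (∫ ω, (2 * Z ω - 1) / (if Z ω = 1 then π1s (X ω) else π0s (X ω))
              * (Y ω - (if Z ω = 1 then μ1s (X ω) else μ0s (X ω)))
            + (μ1s (X ω) - μ0s (X ω)) ∂P)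
          - (∫ ω, m1 (X ω) - m0 (X ω) ∂P)
        = ∫ ω, (e (X ω) / π1s (X ω) - 1) * (m1 (X ω) - μ1s (X ω))
            - ((1 - e (X ω)) / π0s (X ω) - 1) * (m0 (X ω) - μ0s (X ω)) ∂P := by
  intro π0s π1s ε' hπ0m hπ1m hε' hπ0 hπ1 μ0s μ1s hμ0m hμ1m hμ0b hμ1b
  obtain ⟨Cy, hCy⟩ := hYb
  obtain ⟨C0, hC0b⟩ := hμ0b
  obtain ⟨C1, hC1b⟩ := hμ1b
  have hCy' : ∀ ω, |Y ω| ≤ |Cy| := fun ω => (hCy ω).trans (le_abs_self _)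
  have hC0b' : ∀ x, |μ0s x| ≤ |C0| := fun x => (hC0b x).trans (le_abs_self _)
  have hC1b' : ∀ x, |μ1s x| ≤ |C1| := fun x => (hC1b x).trans (le_abs_self _)
  have hee : ∀ x, 0 ≤ e x ∧ e x ≤ 1 := fun x =>
    ⟨hε.le.trans (hebd x).1, (hebd x).2.trans (by linarith)⟩
  -- a.e. bounds on m1 and m0
  have hW1m : Measurable (fun ω => if Z ω = 1 then (1:ℝ) else 0) :=
    Measurable.ite (hZ (measurableSet_singleton 1)) measurable_const measurable_const
  have hW0m : Measurable (fun ω => if Z ω = 0 then (1:ℝ) else 0) :=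
    Measurable.ite (hZ (measurableSet_singleton 0)) measurable_const measurable_const
  have hW101 : ∀ ω, 0 ≤ (if Z ω = 1 then (1:ℝ) else 0) ∧ (if Z ω = 1 then (1:ℝ) else 0) ≤ 1 :=
    fun ω => by split <;> norm_num
  have hW001 : ∀ ω, 0 ≤ (if Z ω = 0 then (1:ℝ) else 0) ∧ (if Z ω = 0 then (1:ℝ) else 0) ≤ 1 :=
    fun ω => by split <;> norm_num
  have hweq1 : ∀ g : S → ℝ, Measurable g → (∃ C, ∀ x, |g x| ≤ C) →
      ∫ ω, (if Z ω = 1 then (1:ℝ) else 0) * g (X ω) ∂P = ∫ ω, e (X ω) * g (X ω) ∂P := by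
    intro g hg hgb
    have h1 : ∫ ω, (if Z ω = 1 then (1:ℝ) else 0) * g (X ω) ∂P = ∫ ω, Z ω * g (X ω) ∂P := by
      apply integral_congr_ae (Filter.Eventually.of_forall (fun ω => ?_))
      rcases hZ01 ω with h | h <;> simp [h]
    rw [h1, hVe g hg hgb]
  have hweq0 : ∀ g : S → ℝ, Measurable g → (∃ C, ∀ x, |g x| ≤ C) →
      ∫ ω, (if Z ω = 0 then (1:ℝ) else 0) * g (X ω) ∂P
        = ∫ ω, (1 - e (X ω)) * g (X ω) ∂P := by
    intro g hg hgb
    obtain ⟨Cg, hCg⟩ := hgb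
    have ig : Integrable (fun ω => g (X ω)) P := integ_bdd (hg.comp hX) (fun ω => hCg _)
    have iZg : Integrable (fun ω => Z ω * g (X ω)) P :=
      integ_bdd (hZ.mul (hg.comp hX))
        (fun ω => abs_mul_le'
          (show |Z ω| ≤ 1 by rcases hZ01 ω with h | h <;> rw [h] <;> norm_num) (hCg _))
    have ieg : Integrable (fun ω => e (X ω) * g (X ω)) P :=
      integ_bdd ((he.comp hX).mul (hg.comp hX))
        (fun ω => abs_mul_le'
          (abs_le.2 ⟨by linarith [(hee (X ω)).1], (hee (X ω)).2⟩) (hCg _))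
    have h1 : ∫ ω, (if Z ω = 0 then (1:ℝ) else 0) * g (X ω) ∂P
        = ∫ ω, g (X ω) - Z ω * g (X ω) ∂P := by
      apply integral_congr_ae (Filter.Eventually.of_forall (fun ω => ?_))
      rcases hZ01 ω with h | h <;> rw [h] <;> norm_num
    have h2 : ∫ ω, (1 - e (X ω)) * g (X ω) ∂P
        = ∫ ω, g (X ω) - e (X ω) * g (X ω) ∂P := by
      apply integral_congr_ae (Filter.Eventually.of_forall (fun ω => ?_))
      ring
    rw [h1, h2, integral_sub ig iZg, integral_sub ig ieg, hVe g hg ⟨Cg, hCg⟩]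
  have hb1 : ∀ᵐ ω ∂P, |m1 (X ω)| ≤ (|Cy| + 1) / ε :=
    aux_bound P X hX _ hW1m hW101 Y hY |Cy| (abs_nonneg _) hCy' e he
      (fun x => (hee x).2) ε hε (fun x => (hebd x).1) m1 hm1 hweq1 hm1v
  have hb0 : ∀ᵐ ω ∂P, |m0 (X ω)| ≤ (|Cy| + 1) / ε :=
    aux_bound P X hX _ hW0m hW001 Y hY |Cy| (abs_nonneg _) hCy'
      (fun x => 1 - e x) (measurable_const.sub he)
      (fun x => by show (1:ℝ) - e x ≤ 1; linarith [(hee x).1])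
      ε hε (fun x => by show ε ≤ 1 - e x; linarith [(hebd x).2]) m0 hm0 hweq0 hm0v
  -- truncations
  have hpack : ∃ Cm : ℝ, 0 ≤ Cm ∧ (∀ᵐ ω ∂P, |m1 (X ω)| ≤ Cm) ∧ (∀ᵐ ω ∂P, |m0 (X ω)| ≤ Cm) :=
    ⟨(|Cy| + 1) / ε, by positivity, hb1, hb0⟩
  obtain ⟨Cm, hCm0, hbm1, hbm0⟩ := hpack
  set m1' : S → ℝ := fun x => max (-Cm) (min Cm (m1 x)) with hm1'def
  set m0' : S → ℝ := fun x => max (-Cm) (min Cm (m0 x)) with hm0'def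
  have hm1'm : Measurable m1' := measurable_const.max (measurable_const.min hm1)
  have hm0'm : Measurable m0' := measurable_const.max (measurable_const.min hm0)
  have hm1'b : ∀ x, |m1' x| ≤ Cm := fun x => abs_le.2
    ⟨le_max_left _ _, max_le (by linarith) (min_le_left _ _)⟩
  have hm0'b : ∀ x, |m0' x| ≤ Cm := fun x => abs_le.2
    ⟨le_max_left _ _, max_le (by linarith) (min_le_left _ _)⟩
  have h1ae : ∀ᵐ ω ∂P, m1' (X ω) = m1 (X ω) := by
    filter_upwards [hbm1] with ω h
    rw [hm1'def]
    simp only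
    rw [min_eq_right (abs_le.1 h).2, max_eq_right (abs_le.1 h).1]
  have h0ae : ∀ᵐ ω ∂P, m0' (X ω) = m0 (X ω) := by
    filter_upwards [hbm0] with ω h
    rw [hm0'def]
    simp only
    rw [min_eq_right (abs_le.1 h).2, max_eq_right (abs_le.1 h).1]
  have hm1v' : ∀ g : S → ℝ, Measurable g → (∃ C, ∀ x, |g x| ≤ C) →
      ∫ ω, Y ω * (if Z ω = 1 then (1:ℝ) else 0) * g (X ω) ∂P
        = ∫ ω, m1' (X ω) * (if Z ω = 1 then (1:ℝ) else 0) * g (X ω) ∂P := by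
    intro g hg hgb
    rw [hm1v g hg hgb]
    apply integral_congr_ae
    filter_upwards [h1ae] with ω h
    rw [h]
  have hm0v' : ∀ g : S → ℝ, Measurable g → (∃ C, ∀ x, |g x| ≤ C) →
      ∫ ω, Y ω * (if Z ω = 0 then (1:ℝ) else 0) * g (X ω) ∂P
        = ∫ ω, m0' (X ω) * (if Z ω = 0 then (1:ℝ) else 0) * g (X ω) ∂P := by
    intro g hg hgb
    rw [hm0v g hg hgb]
    apply integral_congr_ae
    filter_upwards [h0ae] with ω h
    rw [h]
  have EQ := aux_main P X hX Z Y hZ hY hZ01 |Cy| (abs_nonneg _) hCy' e he hee hVe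
    m0' m1' hm0'm hm1'm Cm hCm0 hm0'b hm1'b hm0v' hm1v'
    π0s π1s ε' hπ0m hπ1m hε' hπ0 hπ1 μ0s μ1s hμ0m hμ1m
    |C0| (abs_nonneg _) hC0b' |C1| (abs_nonneg _) hC1b'
  have hΓ : ∫ ω, m1 (X ω) - m0 (X ω) ∂P = ∫ ω, m1' (X ω) - m0' (X ω) ∂P := by
    apply integral_congr_ae
    filter_upwards [h1ae, h0ae] with ω h1 h0
    rw [h1, h0]
  have hRHS : (∫ ω, (e (X ω) / π1s (X ω) - 1) * (m1 (X ω) - μ1s (X ω))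
        - ((1 - e (X ω)) / π0s (X ω) - 1) * (m0 (X ω) - μ0s (X ω)) ∂P)
      = ∫ ω, (e (X ω) / π1s (X ω) - 1) * (m1' (X ω) - μ1s (X ω))
        - ((1 - e (X ω)) / π0s (X ω) - 1) * (m0' (X ω) - μ0s (X ω)) ∂P := by
    apply integral_congr_ae
    filter_upwards [h1ae, h0ae] with ω h1 h0
    rw [h1, h0]
  rw [hΓ, hRHS]
  exact EQ
end

section
/- (Double robustness of the uncentered influence function for Δ0.) Let π0(x,z) := z·e(x) + (1−z)·(1−e(x)), where e∘X is a version of E[Z | σ(X)] with ε ≤ e ≤ 1−ε, and let ℓ_0, ℓ_1 be versions of E[A | X, Z=0] and E[A | X, Z=1], and set Δ0 := E[ℓ1(X) − ℓ0(X)]. Then (i) for every bounded measurable λ* : S × {0,1} → ℝ, E[ (2Z−1)/π0(X,Z) · (A − λ*(X,Z)) + λ*(X,1) − λ*(X,0) ] = Δ0; and (ii) for every measurable π* : S × {0,1} → ℝ with π*(x,z) ≥ ε′ > 0, E[ (2Z−1)/π*(X,Z) · (A − ℓ_Z(X)) + ℓ_1(X) − ℓ_0(X) ] = Δ0. -/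
/-!
On `{Z = 1}` and `{Z = 0}` the integrand is the difference of two one-arm AIPW terms
`W · h(X) · (A − m(X)) + m(X)`, with `W = Z` resp. `1 − Z`. Each has mean `E[ℓ(X)]` as soon as
either the weight `h` is the true inverse propensity `1 / w` (then `E[W A / w(X)] = E[W ℓ(X) / w(X)]
= E[ℓ(X)]` and `E[W m(X) / w(X)] = E[m(X)]`) or the regression `m` is the true `ℓ` (then
`E[W h(X) (A − ℓ(X))] = 0`).

The only analytic point is that `ℓ` is merely measurable, so `ℓ(X)` must first be shown
integrable. Testing the defining identity of `ℓ` against `1_C / (1 + |ℓ|)` for `C = {ℓ > 1}`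
(resp. `{ℓ < 0}`) forces `W = 0` a.s. on `{X ∈ C}`, and positivity of `w` then gives
`P(X ∈ C) = 0`; hence `ℓ(X) ∈ [0, 1]` almost surely.
-/

open MeasureTheory Set

lemma norm_le_one_of_mem_Icc {x : ℝ} (hx : x ∈ Icc (0 : ℝ) 1) : ‖x‖ ≤ 1 := by
  rw [Real.norm_of_nonneg hx.1]
  exact hx.2

lemma norm_inv_le_inv_of_le {ε a : ℝ} (hε : 0 < ε) (ha : ε ≤ a) : ‖a⁻¹‖ ≤ ε⁻¹ := by
  rw [norm_inv, Real.norm_of_nonneg (hε.trans_le ha).le]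
  exact inv_anti₀ hε ha

lemma mul_add_one_sub_mul_one_sub {z p : ℝ} (hz : z = 0 ∨ z = 1) :
    z * p + (1 - z) * (1 - p) = if z = 1 then p else 1 - p := by
  rcases hz with rfl | rfl <;> simp

lemma sign_div_mul_sub_add_sub {z a p₀ p₁ m₀ m₁ : ℝ} (hz : z = 0 ∨ z = 1) :
    (2 * z - 1) / (if z = 1 then p₁ else p₀) * (a - if z = 1 then m₁ else m₀) + (m₁ - m₀)
      = (z * p₁⁻¹ * (a - m₁) + m₁) - ((1 - z) * p₀⁻¹ * (a - m₀) + m₀) := by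
  rcases hz with rfl | rfl <;> simp <;> ring

lemma norm_mul_inv_one_add_abs_le (σ t : ℝ) :
    ‖σ * (1 + |t|)⁻¹‖ ≤ |σ| ∧ ‖t * (σ * (1 + |t|)⁻¹)‖ ≤ |σ| := by
  have hpos : 0 < 1 + |t| := by positivity
  simp only [Real.norm_eq_abs, abs_mul, abs_inv, abs_of_pos hpos]
  constructor
  · exact mul_le_of_le_one_right (abs_nonneg σ) (inv_le_one_of_one_le₀ (by linarith [abs_nonneg t]))
  · rw [mul_left_comm, ← div_eq_mul_inv]
    exact mul_le_of_le_one_right (abs_nonneg σ) ((div_le_one hpos).2 (by linarith))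

def CondExpEqGiven {Ω S : Type*} [MeasurableSpace Ω] [MeasurableSpace S]
    (P : Measure Ω) (X : Ω → S) (U V : Ω → ℝ) : Prop :=
  ∀ g : S → ℝ, Measurable g → (∃ C, ∀ x, |g x| ≤ C) →
    ∫ ω, U ω * g (X ω) ∂P = ∫ ω, V ω * g (X ω) ∂P

section

variable {Ω S : Type*} [MeasurableSpace Ω] [MeasurableSpace S] {P : Measure Ω} {X : Ω → S}
  {U V W : Ω → ℝ} {w : S → ℝ}

namespace CondExpEqGiven

lemma of_ae_bound (h : CondExpEqGiven P X U V) {g : S → ℝ} (hg : Measurable g) {C : ℝ}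
    (hgC : ∀ᵐ ω ∂P, ‖g (X ω)‖ ≤ C) :
    ∫ ω, U ω * g (X ω) ∂P = ∫ ω, V ω * g (X ω) ∂P := by
  set g' : S → ℝ := fun x => if ‖g x‖ ≤ C then g x else 0
  have hg' : Measurable g' := Measurable.ite (measurableSet_le hg.norm measurable_const) hg
    measurable_const
  have hg'C : ∀ x, |g' x| ≤ |C| := fun x => by
    simp only [g']
    split_ifs with hx
    · exact hx.trans (le_abs_self C)
    · simp
  have hae : ∀ᵐ ω ∂P, g' (X ω) = g (X ω) := hgC.mono fun ω hω => if_pos hω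
  calc ∫ ω, U ω * g (X ω) ∂P = ∫ ω, U ω * g' (X ω) ∂P :=
        integral_congr_ae (hae.mono fun ω hω => congrArg (U ω * ·) hω.symm)
    _ = ∫ ω, V ω * g' (X ω) ∂P := h g' hg' ⟨|C|, hg'C⟩
    _ = ∫ ω, V ω * g (X ω) ∂P := integral_congr_ae (hae.mono fun ω hω => congrArg (V ω * ·) hω)

lemma one_sub [IsFiniteMeasure P] (h : CondExpEqGiven P X U V) (hX : Measurable X)
    (hU : Integrable U P) (hV : Integrable V P) :
    CondExpEqGiven P X (fun ω => 1 - U ω) (fun ω => 1 - V ω) := by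
  rintro g hg ⟨C, hC⟩
  have hgC : ∀ᵐ ω ∂P, ‖g (X ω)‖ ≤ C := ae_of_all _ fun ω => hC _
  have hgX : Integrable (fun ω => g (X ω)) P :=
    .of_bound (hg.comp hX).aestronglyMeasurable C hgC
  have hUg : Integrable (fun ω => U ω * g (X ω)) P :=
    hU.mul_bdd (hg.comp hX).aestronglyMeasurable hgC
  have hVg : Integrable (fun ω => V ω * g (X ω)) P :=
    hV.mul_bdd (hg.comp hX).aestronglyMeasurable hgC
  simp only [sub_mul, one_mul]
  rw [integral_sub hgX hUg, integral_sub hgX hVg, h g hg ⟨C, hC⟩]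

lemma ae_notMem [IsFiniteMeasure P] (h : CondExpEqGiven P X W (fun ω => w (X ω)))
    (hX : Measurable X) (hw : Measurable w) (hw_pos : ∀ x, 0 < w x) (hw_le : ∀ x, w x ≤ 1)
    {C : Set S} (hC : MeasurableSet C) (hW : ∀ᵐ ω ∂P, X ω ∈ C → W ω = 0) :
    ∀ᵐ ω ∂P, X ω ∉ C := by
  have hind : ∀ x, |C.indicator (1 : S → ℝ) x| ≤ 1 := fun x => by
    by_cases hx : x ∈ C <;> simp [hx]
  have hzero : ∫ ω, W ω * C.indicator 1 (X ω) ∂P = 0 :=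
    integral_eq_zero_of_ae (hW.mono fun ω hω => by by_cases hx : X ω ∈ C <;> simp [hx, hω])
  rw [h _ (measurable_one.indicator hC) ⟨1, hind⟩] at hzero
  have hint : Integrable (fun ω => w (X ω) * C.indicator 1 (X ω)) P :=
    .of_bound ((hw.comp hX).mul ((measurable_one.indicator hC).comp hX)).aestronglyMeasurable
      (1 * 1) (ae_of_all _ fun ω => norm_mul_le_of_le
        (norm_le_one_of_mem_Icc ⟨(hw_pos _).le, hw_le _⟩) (hind _))
  have hnonneg : 0 ≤ fun ω => w (X ω) * C.indicator 1 (X ω) := fun ω =>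
    mul_nonneg (hw_pos _).le (indicator_nonneg (fun _ _ => zero_le_one) _)
  filter_upwards [(integral_eq_zero_iff_of_nonneg hnonneg hint).1 hzero] with ω hω hx
  simp [hx, (hw_pos _).ne'] at hω

lemma integral_mul_mul_inv [IsFiniteMeasure P] (h : CondExpEqGiven P X W (fun ω => w (X ω)))
    (hw : Measurable w) {ε : ℝ} (hε : 0 < ε) (hwε : ∀ x, ε ≤ w x) {f : S → ℝ}
    (hf : Measurable f) {M : ℝ} (hfM : ∀ᵐ ω ∂P, ‖f (X ω)‖ ≤ M) :
    ∫ ω, f (X ω) * W ω * (w (X ω))⁻¹ ∂P = ∫ ω, f (X ω) ∂P := by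
  have hbound : ∀ᵐ ω ∂P, ‖f (X ω) * (w (X ω))⁻¹‖ ≤ M * ε⁻¹ :=
    hfM.mono fun ω hω => norm_mul_le_of_le hω (norm_inv_le_inv_of_le hε (hwε _))
  calc ∫ ω, f (X ω) * W ω * (w (X ω))⁻¹ ∂P = ∫ ω, W ω * (f (X ω) * (w (X ω))⁻¹) ∂P := by
        congr 1 with ω
        ring
    _ = ∫ ω, w (X ω) * (f (X ω) * (w (X ω))⁻¹) ∂P := h.of_ae_bound (hf.mul hw.inv) hbound
    _ = ∫ ω, f (X ω) ∂P := by
        congr 1 with ω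
        field_simp [(hε.trans_le (hwε (X ω))).ne']

end CondExpEqGiven

/-- The arm `W = 1{Z = z}`, with propensity `w(X) = P(W = 1 | X)` and outcome regression
`l(X) = E[A | X, W = 1]` (the paper's `ℓ_z`). -/
structure TreatmentArm (P : Measure Ω) (X : Ω → S) (A W : Ω → ℝ) (w l : S → ℝ) : Prop where
  measurable_X : Measurable X
  measurable_A : Measurable A
  measurable_W : Measurable W
  measurable_w : Measurable w
  measurable_l : Measurable l
  mem_Icc_A : ∀ ω, A ω ∈ Icc (0 : ℝ) 1
  mem_Icc_W : ∀ ω, W ω ∈ Icc (0 : ℝ) 1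
  pos_w : ∀ x, 0 < w x
  le_one_w : ∀ x, w x ≤ 1
  condExp_W : CondExpEqGiven P X W (fun ω => w (X ω))
  condExp_AW : CondExpEqGiven P X (fun ω => A ω * W ω) (fun ω => l (X ω) * W ω)

/-- Augmented inverse-probability-weighted term of one arm, with working outcome regression `m`
and working inverse propensity `h`. -/
def aipw (X : Ω → S) (A W : Ω → ℝ) (m h : S → ℝ) (ω : Ω) : ℝ :=
  W ω * h (X ω) * (A ω - m (X ω)) + m (X ω)

namespace TreatmentArm

variable {A : Ω → ℝ} {l : S → ℝ}

lemma ae_W_eq_zero_of_sign [IsFiniteMeasure P] (h : TreatmentArm P X A W w l) {C : Set S}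
    (hC : MeasurableSet C) (σ : ℝ) (hσ : ∀ ω, X ω ∈ C → 0 < σ * (l (X ω) - A ω)) :
    ∀ᵐ ω ∂P, X ω ∈ C → W ω = 0 := by
  set g : S → ℝ := C.indicator fun x => σ * (1 + |l x|)⁻¹
  have hg : Measurable g :=
    (measurable_const.mul (measurable_const.add h.measurable_l.abs).inv).indicator hC
  have hgσ : ∀ x, ‖g x‖ ≤ |σ| ∧ ‖l x * g x‖ ≤ |σ| := fun x => by
    by_cases hx : x ∈ C
    · simpa only [g, indicator_of_mem hx] using norm_mul_inv_one_add_abs_le σ (l x)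
    · simp [g, hx]
  have hAWg : Integrable (fun ω => A ω * W ω * g (X ω)) P :=
    .of_bound ((h.measurable_A.mul h.measurable_W).mul
      (hg.comp h.measurable_X)).aestronglyMeasurable (1 * 1 * |σ|)
      (ae_of_all _ fun ω => norm_mul_le_of_le (norm_mul_le_of_le
        (norm_le_one_of_mem_Icc (h.mem_Icc_A ω)) (norm_le_one_of_mem_Icc (h.mem_Icc_W ω)))
        (hgσ _).1)
  have hlWg : Integrable (fun ω => l (X ω) * W ω * g (X ω)) P := by
    refine .of_bound (((h.measurable_l.comp h.measurable_X).mul h.measurable_W).mul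
      (hg.comp h.measurable_X)).aestronglyMeasurable (|σ| * 1) (ae_of_all _ fun ω => ?_)
    rw [mul_right_comm]
    exact norm_mul_le_of_le (hgσ _).2 (norm_le_one_of_mem_Icc (h.mem_Icc_W ω))
  have hle : (fun ω => A ω * W ω * g (X ω)) ≤ᵐ[P] fun ω => l (X ω) * W ω * g (X ω) :=
    ae_of_all _ fun ω => by
      by_cases hx : X ω ∈ C
      · have := mul_nonneg (mul_nonneg (h.mem_Icc_W ω).1 (hσ ω hx).le)
          (inv_nonneg.2 (by positivity : (0 : ℝ) ≤ 1 + |l (X ω)|))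
        simp only [g, indicator_of_mem hx]
        nlinarith
      · simp [g, hx]
  have heq := (integral_eq_iff_of_ae_le hAWg hlWg hle).1
    (h.condExp_AW g hg ⟨|σ|, fun x => (hgσ x).1⟩)
  filter_upwards [heq] with ω hω hx
  have hprod : W ω * (σ * (l (X ω) - A ω) * (1 + |l (X ω)|)⁻¹) = 0 := by
    simp only [g, indicator_of_mem hx] at hω
    linear_combination -hω
  exact (mul_eq_zero.1 hprod).resolve_right (mul_pos (hσ ω hx) (by positivity)).ne'

lemma ae_mem_Icc [IsFiniteMeasure P] (h : TreatmentArm P X A W w l) :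
    ∀ᵐ ω ∂P, l (X ω) ∈ Icc (0 : ℝ) 1 := by
  have hnull : ∀ {C : Set S}, MeasurableSet C → ∀ σ : ℝ,
      (∀ ω, X ω ∈ C → 0 < σ * (l (X ω) - A ω)) → ∀ᵐ ω ∂P, X ω ∉ C :=
    fun hC σ hσ => h.condExp_W.ae_notMem h.measurable_X h.measurable_w h.pos_w h.le_one_w hC
      (h.ae_W_eq_zero_of_sign hC σ hσ)
  have hgt := hnull (measurableSet_lt measurable_const h.measurable_l) 1 fun ω (hx : 1 < l (X ω)) =>
    by linarith [(h.mem_Icc_A ω).2]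
  have hlt := hnull (measurableSet_lt h.measurable_l measurable_const) (-1)
    fun ω (hx : l (X ω) < 0) => by linarith [(h.mem_Icc_A ω).1]
  filter_upwards [hgt, hlt] with ω h1 h2
  exact ⟨not_lt.1 h2, not_lt.1 h1⟩

lemma ae_norm_le_one [IsFiniteMeasure P] (h : TreatmentArm P X A W w l) :
    ∀ᵐ ω ∂P, ‖l (X ω)‖ ≤ 1 :=
  h.ae_mem_Icc.mono fun _ hω => norm_le_one_of_mem_Icc hω

lemma integrable_comp [IsFiniteMeasure P] (h : TreatmentArm P X A W w l) :
    Integrable (fun ω => l (X ω)) P :=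
  .of_bound (h.measurable_l.comp h.measurable_X).aestronglyMeasurable 1 h.ae_norm_le_one

lemma integrable_aipw [IsFiniteMeasure P] (h : TreatmentArm P X A W w l) {m g : S → ℝ}
    (hm : Measurable m) {M : ℝ} (hmM : ∀ᵐ ω ∂P, ‖m (X ω)‖ ≤ M) (hg : Measurable g) {G : ℝ}
    (hgG : ∀ x, ‖g x‖ ≤ G) : Integrable (aipw X A W m g) P := by
  have hmX := hm.comp h.measurable_X
  refine .of_bound (((h.measurable_W.mul (hg.comp h.measurable_X)).mul
    (h.measurable_A.sub hmX)).add hmX).aestronglyMeasurable (1 * G * (1 + M) + M) ?_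
  filter_upwards [hmM] with ω hω
  exact (norm_add_le _ _).trans (add_le_add (norm_mul_le_of_le
    (norm_mul_le_of_le (norm_le_one_of_mem_Icc (h.mem_Icc_W ω)) (hgG _))
    ((norm_sub_le _ _).trans (add_le_add (norm_le_one_of_mem_Icc (h.mem_Icc_A ω)) hω))) hω)

lemma integral_aipw_inv_propensity [IsFiniteMeasure P] (h : TreatmentArm P X A W w l) {ε : ℝ}
    (hε : 0 < ε) (hwε : ∀ x, ε ≤ w x) {m : S → ℝ} (hm : Measurable m) {M : ℝ}
    (hmM : ∀ x, ‖m x‖ ≤ M) :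
    ∫ ω, aipw X A W m (fun x => (w x)⁻¹) ω ∂P = ∫ ω, l (X ω) ∂P := by
  have hmX := hm.comp h.measurable_X
  have hw_inv : ∀ x, ‖(w x)⁻¹‖ ≤ ε⁻¹ := fun x => norm_inv_le_inv_of_le hε (hwε x)
  have hW := fun ω => norm_le_one_of_mem_Icc (h.mem_Icc_W ω)
  have hAW : Integrable (fun ω => A ω * W ω * (w (X ω))⁻¹) P :=
    .of_bound ((h.measurable_A.mul h.measurable_W).mul
      (h.measurable_w.comp h.measurable_X).inv).aestronglyMeasurable (1 * 1 * ε⁻¹)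
      (ae_of_all _ fun ω => norm_mul_le_of_le (norm_mul_le_of_le
        (norm_le_one_of_mem_Icc (h.mem_Icc_A ω)) (hW ω)) (hw_inv _))
  have hmW : Integrable (fun ω => m (X ω) * W ω * (w (X ω))⁻¹) P :=
    .of_bound ((hmX.mul h.measurable_W).mul
      (h.measurable_w.comp h.measurable_X).inv).aestronglyMeasurable (M * 1 * ε⁻¹)
      (ae_of_all _ fun ω => norm_mul_le_of_le (norm_mul_le_of_le (hmM _) (hW ω)) (hw_inv _))
  have hm_int : Integrable (fun ω => m (X ω)) P :=
    .of_bound hmX.aestronglyMeasurable M (ae_of_all _ fun ω => hmM _)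
  have hsplit : ∫ ω, aipw X A W m (fun x => (w x)⁻¹) ω ∂P
      = ∫ ω, A ω * W ω * (w (X ω))⁻¹ ∂P - ∫ ω, m (X ω) * W ω * (w (X ω))⁻¹ ∂P
        + ∫ ω, m (X ω) ∂P := by
    have hdiff : Integrable
        (fun ω => A ω * W ω * (w (X ω))⁻¹ - m (X ω) * W ω * (w (X ω))⁻¹) P := hAW.sub hmW
    rw [← integral_sub hAW hmW, ← integral_add hdiff hm_int]
    congr 1 with ω
    simp only [aipw]
    ring
  have hA_l : ∫ ω, A ω * W ω * (w (X ω))⁻¹ ∂P = ∫ ω, l (X ω) * W ω * (w (X ω))⁻¹ ∂P :=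
    h.condExp_AW (fun x => (w x)⁻¹) h.measurable_w.inv ⟨ε⁻¹, hw_inv⟩
  rw [hsplit, hA_l,
    h.condExp_W.integral_mul_mul_inv h.measurable_w hε hwε h.measurable_l h.ae_norm_le_one,
    h.condExp_W.integral_mul_mul_inv h.measurable_w hε hwε hm (ae_of_all _ fun ω => hmM _)]
  ring

lemma integral_aipw_self [IsFiniteMeasure P] (h : TreatmentArm P X A W w l) {g : S → ℝ}
    (hg : Measurable g) {G : ℝ} (hgG : ∀ x, ‖g x‖ ≤ G) :
    ∫ ω, aipw X A W l g ω ∂P = ∫ ω, l (X ω) ∂P := by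
  have hlX := h.measurable_l.comp h.measurable_X
  have hgX := hg.comp h.measurable_X
  have hW := fun ω => norm_le_one_of_mem_Icc (h.mem_Icc_W ω)
  have hAW : Integrable (fun ω => A ω * W ω * g (X ω)) P :=
    .of_bound ((h.measurable_A.mul h.measurable_W).mul hgX).aestronglyMeasurable (1 * 1 * G)
      (ae_of_all _ fun ω => norm_mul_le_of_le (norm_mul_le_of_le
        (norm_le_one_of_mem_Icc (h.mem_Icc_A ω)) (hW ω)) (hgG _))
  have hlW : Integrable (fun ω => l (X ω) * W ω * g (X ω)) P :=
    .of_bound ((hlX.mul h.measurable_W).mul hgX).aestronglyMeasurable (1 * 1 * G)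
      (h.ae_norm_le_one.mono fun ω hω => norm_mul_le_of_le (norm_mul_le_of_le hω (hW ω)) (hgG _))
  have hsplit : ∫ ω, aipw X A W l g ω ∂P
      = ∫ ω, A ω * W ω * g (X ω) ∂P - ∫ ω, l (X ω) * W ω * g (X ω) ∂P
        + ∫ ω, l (X ω) ∂P := by
    have hdiff : Integrable (fun ω => A ω * W ω * g (X ω) - l (X ω) * W ω * g (X ω)) P :=
      hAW.sub hlW
    rw [← integral_sub hAW hlW, ← integral_add hdiff h.integrable_comp]
    congr 1 with ω
    simp only [aipw]
    ring
  have hA_l : ∫ ω, A ω * W ω * g (X ω) ∂P = ∫ ω, l (X ω) * W ω * g (X ω) ∂P :=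
    h.condExp_AW g hg ⟨G, hgG⟩
  rw [hsplit, hA_l, sub_self, zero_add]

lemma compl [IsFiniteMeasure P] (h : TreatmentArm P X A W w l) {l' : S → ℝ}
    (hl' : Measurable l') (hw_lt : ∀ x, w x < 1)
    (hAW' : CondExpEqGiven P X (fun ω => A ω * (1 - W ω)) (fun ω => l' (X ω) * (1 - W ω))) :
    TreatmentArm P X A (fun ω => 1 - W ω) (fun x => 1 - w x) l' where
  measurable_X := h.measurable_X
  measurable_A := h.measurable_A
  measurable_W := measurable_const.sub h.measurable_W
  measurable_w := measurable_const.sub h.measurable_w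
  measurable_l := hl'
  mem_Icc_A := h.mem_Icc_A
  mem_Icc_W ω := ⟨sub_nonneg.2 (h.mem_Icc_W ω).2, sub_le_self _ (h.mem_Icc_W ω).1⟩
  pos_w x := sub_pos.2 (hw_lt x)
  le_one_w x := sub_le_self _ (h.pos_w x).le
  condExp_W := h.condExp_W.one_sub h.measurable_X
    (.of_bound h.measurable_W.aestronglyMeasurable 1
      (ae_of_all _ fun ω => norm_le_one_of_mem_Icc (h.mem_Icc_W ω)))
    (.of_bound (h.measurable_w.comp h.measurable_X).aestronglyMeasurable 1
      (ae_of_all _ fun _ => norm_le_one_of_mem_Icc ⟨(h.pos_w _).le, h.le_one_w _⟩))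
  condExp_AW := hAW'

end TreatmentArm

end

theorem stmt_10_general
    {Ω : Type*} [MeasurableSpace Ω] (P : Measure Ω) [IsProbabilityMeasure P]
    {S : Type*} [mS : MeasurableSpace S]
    (X : Ω → S) (hX : Measurable X)
    (Z A : Ω → ℝ) (hZ : Measurable Z) (hA : Measurable A)
    (hZ01 : ∀ ω, Z ω = 0 ∨ Z ω = 1)
    (hA01 : ∀ ω, A ω = 0 ∨ A ω = 1)
    (e : S → ℝ) (he : Measurable e) (ε : ℝ) (hε : 0 < ε)
    (hebd : ∀ x, ε ≤ e x ∧ e x ≤ 1 - ε)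
    (hVe : ∀ g : S → ℝ, Measurable g → (∃ C, ∀ x, |g x| ≤ C) →
      ∫ ω, Z ω * g (X ω) ∂P = ∫ ω, e (X ω) * g (X ω) ∂P)
    (l0 l1 : S → ℝ) (hl0 : Measurable l0) (hl1 : Measurable l1)
    (hl0v : ∀ g : S → ℝ, Measurable g → (∃ C, ∀ x, |g x| ≤ C) →
      ∫ ω, A ω * (if Z ω = 0 then (1:ℝ) else 0) * g (X ω) ∂P
        = ∫ ω, l0 (X ω) * (if Z ω = 0 then (1:ℝ) else 0) * g (X ω) ∂P)
    (hl1v : ∀ g : S → ℝ, Measurable g → (∃ C, ∀ x, |g x| ≤ C) →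
      ∫ ω, A ω * (if Z ω = 1 then (1:ℝ) else 0) * g (X ω) ∂P
        = ∫ ω, l1 (X ω) * (if Z ω = 1 then (1:ℝ) else 0) * g (X ω) ∂P) :
    (∀ lam0s lam1s : S → ℝ, Measurable lam0s → Measurable lam1s →
      (∃ C, ∀ x, |lam0s x| ≤ C) → (∃ C, ∀ x, |lam1s x| ≤ C) →
      ∫ ω, (2 * Z ω - 1) / (Z ω * e (X ω) + (1 - Z ω) * (1 - e (X ω)))
            * (A ω - (if Z ω = 1 then lam1s (X ω) else lam0s (X ω)))
          + (lam1s (X ω) - lam0s (X ω)) ∂P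
        = ∫ ω, l1 (X ω) - l0 (X ω) ∂P)
    ∧ (∀ (π0s π1s : S → ℝ) (ε' : ℝ), Measurable π0s → Measurable π1s → 0 < ε' →
      (∀ x, ε' ≤ π0s x) → (∀ x, ε' ≤ π1s x) →
      ∫ ω, (2 * Z ω - 1) / (if Z ω = 1 then π1s (X ω) else π0s (X ω))
            * (A ω - (if Z ω = 1 then l1 (X ω) else l0 (X ω)))
          + (l1 (X ω) - l0 (X ω)) ∂P
        = ∫ ω, l1 (X ω) - l0 (X ω) ∂P) := by
  have hZ1 : ∀ ω, (if Z ω = 1 then (1 : ℝ) else 0) = Z ω := fun ω => by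
    rcases hZ01 ω with h | h <;> simp [h]
  have hZ0 : ∀ ω, (if Z ω = 0 then (1 : ℝ) else 0) = 1 - Z ω := fun ω => by
    rcases hZ01 ω with h | h <;> simp [h]
  simp only [hZ1] at hl1v
  simp only [hZ0] at hl0v
  have hmem : ∀ {t : ℝ}, t = 0 ∨ t = 1 → t ∈ Icc (0 : ℝ) 1 := by
    rintro t (rfl | rfl) <;> simp
  have arm1 : TreatmentArm P X A Z e l1 :=
    ⟨hX, hA, hZ, he, hl1, fun ω => hmem (hA01 ω), fun ω => hmem (hZ01 ω),
      fun x => hε.trans_le (hebd x).1, fun x => by linarith [(hebd x).2], hVe, hl1v⟩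
  have he_lt : ∀ x, ε ≤ 1 - e x := fun x => by linarith [(hebd x).2]
  have arm0 := arm1.compl hl0 (fun x => by linarith [he_lt x]) hl0v
  have hsub : ∀ φ1 φ0 : Ω → ℝ, Integrable φ1 P → Integrable φ0 P →
      ∫ ω, φ1 ω ∂P = ∫ ω, l1 (X ω) ∂P → ∫ ω, φ0 ω ∂P = ∫ ω, l0 (X ω) ∂P →
      ∫ ω, φ1 ω - φ0 ω ∂P = ∫ ω, l1 (X ω) - l0 (X ω) ∂P := fun φ1 φ0 h1 h0 hφ1 hφ0 => by
    rw [integral_sub h1 h0, integral_sub arm1.integrable_comp arm0.integrable_comp, hφ1, hφ0]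
  refine ⟨fun lam0s lam1s hm0 hm1 ⟨C0, hC0⟩ ⟨C1, hC1⟩ => ?_,
    fun π0s π1s ε' hp0 hp1 hε' hπ0 hπ1 => ?_⟩
  · convert hsub _ _
      (arm1.integrable_aipw hm1 (ae_of_all _ fun ω => hC1 _) he.inv
        fun x => norm_inv_le_inv_of_le hε (hebd x).1)
      (arm0.integrable_aipw hm0 (ae_of_all _ fun ω => hC0 _) (measurable_const.sub he).inv
        fun x => norm_inv_le_inv_of_le hε (he_lt x))
      (arm1.integral_aipw_inv_propensity hε (fun x => (hebd x).1) hm1 hC1)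
      (arm0.integral_aipw_inv_propensity hε he_lt hm0 hC0) using 3 with ω
    rw [mul_add_one_sub_mul_one_sub (hZ01 ω)]
    exact sign_div_mul_sub_add_sub (hZ01 ω)
  · have hπ1_inv := fun x => norm_inv_le_inv_of_le hε' (hπ1 x)
    have hπ0_inv := fun x => norm_inv_le_inv_of_le hε' (hπ0 x)
    convert hsub _ _
      (arm1.integrable_aipw hl1 arm1.ae_norm_le_one hp1.inv hπ1_inv)
      (arm0.integrable_aipw hl0 arm0.ae_norm_le_one hp0.inv hπ0_inv)
      (arm1.integral_aipw_self hp1.inv hπ1_inv)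
      (arm0.integral_aipw_self hp0.inv hπ0_inv) using 3 with ω
    exact sign_div_mul_sub_add_sub (hZ01 ω)

/-- double robustness of the uncentered influence function for Δ0:
(i) for every bounded measurable λ* : S × {0,1} → ℝ (encoded by its sections λ0*, λ1*),
E[(2Z−1)/π0(X,Z)·(A − λ*(X,Z)) + λ*(X,1) − λ*(X,0)] = Δ0; and
(ii) for every measurable π* ≥ ε′ > 0,
E[(2Z−1)/π*(X,Z)·(A − ℓ_Z(X)) + ℓ1(X) − ℓ0(X)] = Δ0. -/
theorem stmt_10
    {Ω : Type*} [MeasurableSpace Ω] (P : Measure Ω) [IsProbabilityMeasure P]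
    {S : Type*} [mS : MeasurableSpace S]
    (X : Ω → S) (hX : Measurable X)
    (Z A : Ω → ℝ) (hZ : Measurable Z) (hA : Measurable A)
    (hZ01 : ∀ ω, Z ω = 0 ∨ Z ω = 1)
    (hA01 : ∀ ω, A ω = 0 ∨ A ω = 1)
    (e : S → ℝ) (he : Measurable e) (ε : ℝ) (hε : 0 < ε) (hε2 : ε < 1/2)
    (hebd : ∀ x, ε ≤ e x ∧ e x ≤ 1 - ε)
    (hVe : ∀ g : S → ℝ, Measurable g → (∃ C, ∀ x, |g x| ≤ C) →
      ∫ ω, Z ω * g (X ω) ∂P = ∫ ω, e (X ω) * g (X ω) ∂P)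
    (l0 l1 : S → ℝ) (hl0 : Measurable l0) (hl1 : Measurable l1)
    (hl0v : ∀ g : S → ℝ, Measurable g → (∃ C, ∀ x, |g x| ≤ C) →
      ∫ ω, A ω * (if Z ω = 0 then (1:ℝ) else 0) * g (X ω) ∂P
        = ∫ ω, l0 (X ω) * (if Z ω = 0 then (1:ℝ) else 0) * g (X ω) ∂P)
    (hl1v : ∀ g : S → ℝ, Measurable g → (∃ C, ∀ x, |g x| ≤ C) →
      ∫ ω, A ω * (if Z ω = 1 then (1:ℝ) else 0) * g (X ω) ∂P
        = ∫ ω, l1 (X ω) * (if Z ω = 1 then (1:ℝ) else 0) * g (X ω) ∂P) :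
    (∀ lam0s lam1s : S → ℝ, Measurable lam0s → Measurable lam1s →
      (∃ C, ∀ x, |lam0s x| ≤ C) → (∃ C, ∀ x, |lam1s x| ≤ C) →
      ∫ ω, (2 * Z ω - 1) / (Z ω * e (X ω) + (1 - Z ω) * (1 - e (X ω)))
            * (A ω - (if Z ω = 1 then lam1s (X ω) else lam0s (X ω)))
          + (lam1s (X ω) - lam0s (X ω)) ∂P
        = ∫ ω, l1 (X ω) - l0 (X ω) ∂P)
    ∧ (∀ (π0s π1s : S → ℝ) (ε' : ℝ), Measurable π0s → Measurable π1s → 0 < ε' →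
      (∀ x, ε' ≤ π0s x) → (∀ x, ε' ≤ π1s x) →
      ∫ ω, (2 * Z ω - 1) / (if Z ω = 1 then π1s (X ω) else π0s (X ω))
            * (A ω - (if Z ω = 1 then l1 (X ω) else l0 (X ω)))
          + (l1 (X ω) - l0 (X ω)) ∂P
        = ∫ ω, l1 (X ω) - l0 (X ω) ∂P) :=
  stmt_10_general P (mS := mS) X hX Z A hZ hA hZ01 hA01 e he ε hε hebd hVe l0 l1 hl0 hl1 hl0v hl1v
end

section
/- (Conditional unbiasedness of the DR-Learner pseudo-outcome.) Let π0(x,z) := z·e(x) + (1−z)·(1−e(x)), where e∘X is a version of E[Z | σ(X)] with ε ≤ e ≤ 1−ε, and let m_0, m_1 be versions of E[Y | X, Z=0] and E[Y | X, Z=1]. Then E[ (2Z−1)/π0(X,Z) · (Y − m_Z(X)) | σ(X) ] = 0 P-almost surely; consequently, for the pseudo-outcome Γ̇0 := (2Z−1)/π0(X,Z)·(Y − m_Z(X)) + m_1(X) − m_0(X) one has E[Γ̇0 | σ(X)] = m_1(X) − m_0(X) almost surely, and hence for any sub-σ-algebra G of σ(X), E[Γ̇0 | G] = E[m_1(X)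 − m_0(X) | G] almost surely. -/
open MeasureTheory ProbabilityTheory

/-!
Write `W = (2Z - 1) / π₀(X, Z) · (Y - m_Z(X))`. For bounded measurable `g`,
`W g(X) = (Y - m₁(X)) Z (g / e)(X) - (Y - m₀(X)) (1 - Z) (g / (1 - e))(X)`, and positivity keeps
`g / e` and `g / (1 - e)` bounded, so the defining identities of `m₁` and `m₀` give
`∫ W g(X) = 0`, i.e. `E[W | X] = 0`. The delicate point is integrability, as `m_z` is only
measurable: testing the identity of `m_z` against `1_{|m_z| > C} / m_z` shows `|m_z(X)| ≤ C` on
`{Z = z}`, and a propensity `≥ ε` spreads this bound to almost all of `Ω`. The other two claims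
follow because `m₁(X) - m₀(X)` is `σ(X)`-measurable, and by the tower property.
-/

lemma exists_abs_div_le {α : Type*} {g q : α → ℝ} {ε : ℝ} (hgb : ∃ C, ∀ x, |g x| ≤ C)
    (hε : 0 < ε) (hq : ∀ x, ε ≤ q x) : ∃ C, ∀ x, |(g / q) x| ≤ C := by
  obtain ⟨C, hC⟩ := hgb
  refine ⟨C / ε, fun x => ?_⟩
  rw [Pi.div_apply, abs_div, abs_of_pos (hε.trans_le (hq x))]
  exact div_le_div₀ ((abs_nonneg _).trans (hC x)) (hC x) hε (hq x)

lemma exists_abs_indicator_one_le {α : Type*} (B : Set α) :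
    ∃ C, ∀ x, |B.indicator (1 : α → ℝ) x| ≤ C :=
  ⟨1, fun x => by by_cases hx : x ∈ B <;> simp [hx]⟩

lemma abs_indicator_inv_le {α : Type*} {m : α → ℝ} {C : ℝ} (hC : 0 < C) (x : α) :
    |{x | C < |m x|}.indicator (fun x => (m x)⁻¹) x| ≤ C⁻¹ := by
  by_cases hx : C < |m x|
  · simpa [hx, abs_inv] using inv_anti₀ hC hx.le
  · simp [hx, hC.le]

section CondMean

variable {Ω S : Type*} [MeasurableSpace Ω] [mS : MeasurableSpace S] {P : Measure Ω} {X : Ω → S}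

/-- `E[f | X] = E[h | X]` in the weak sense of the paper. As the Bochner integral of a
non-integrable function is `0`, this says nothing about the integrability of `h`. -/
def CondMeanEq (P : Measure Ω) (X : Ω → S) (f h : Ω → ℝ) : Prop :=
  ∀ g : S → ℝ, Measurable g → (∃ C, ∀ x, |g x| ≤ C) →
    ∫ ω, f ω * g (X ω) ∂P = ∫ ω, h ω * g (X ω) ∂P

lemma MeasureTheory.integrable_of_forall_mem_Icc [IsFiniteMeasure P] {f : Ω → ℝ}
    (hf : Measurable f) {a b : ℝ} (hab : ∀ ω, f ω ∈ Set.Icc a b) : Integrable f P :=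
  .of_bound hf.aestronglyMeasurable (max |a| |b|)
    (ae_of_all _ fun ω => abs_le_max_abs_abs (hab ω).1 (hab ω).2)

lemma MeasureTheory.Integrable.mul_comp_of_bdd {f : Ω → ℝ} (hf : Integrable f P)
    (hX : Measurable X) {g : S → ℝ} (hg : Measurable g) (hgb : ∃ C, ∀ x, |g x| ≤ C) :
    Integrable (fun ω => f ω * g (X ω)) P :=
  let ⟨C, hC⟩ := hgb
  hf.mul_bdd (hg.comp hX).aestronglyMeasurable (c := C) (ae_of_all _ fun ω => hC (X ω))

lemma setIntegral_preimage_eq_integral_mul_indicator (hX : Measurable X) {B : Set S}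
    (hB : MeasurableSet B) (f : Ω → ℝ) :
    ∫ ω in X ⁻¹' B, f ω ∂P = ∫ ω, f ω * B.indicator 1 (X ω) ∂P := by
  rw [← integral_indicator (hX hB)]
  congr 1 with ω
  by_cases h : X ω ∈ B <;> simp [h]

namespace CondMeanEq

lemma const_sub [IsFiniteMeasure P] {f h : Ω → ℝ} (hfh : CondMeanEq P X f h)
    (hX : Measurable X) (hf : Integrable f P) (hh : Integrable h P) (c : ℝ) :
    CondMeanEq P X (fun ω => c - f ω) (fun ω => c - h ω) := by
  intro g hg hgb
  have hcg := (integrable_const (μ := P) c).mul_comp_of_bdd hX hg hgb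
  simp_rw [sub_mul]
  rw [integral_sub hcg (hf.mul_comp_of_bdd hX hg hgb),
    integral_sub hcg (hh.mul_comp_of_bdd hX hg hgb), hfh g hg hgb]

lemma integral_sub_mul_eq_zero {f h : Ω → ℝ} (hfh : CondMeanEq P X f h) (hX : Measurable X)
    (hf : Integrable f P) (hh : Integrable h P) {g : S → ℝ} (hg : Measurable g)
    (hgb : ∃ C, ∀ x, |g x| ≤ C) :
    ∫ ω, (f ω - h ω) * g (X ω) ∂P = 0 := by
  simp_rw [sub_mul]
  rw [integral_sub (hf.mul_comp_of_bdd hX hg hgb) (hh.mul_comp_of_bdd hX hg hgb),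
    hfh g hg hgb, sub_self]

/-- Testing against `1_B / m` with `B = {C < |m|}` keeps both integrands bounded, and
`Y χ 1_B(X) / m(X) ≤ χ 1_B(X)` pointwise, strictly where `χ 1_B(X) ≠ 0`. -/
lemma ae_mul_indicator_eq_zero [IsFiniteMeasure P] {Y χ : Ω → ℝ} {m : S → ℝ} {C : ℝ}
    (hv : CondMeanEq P X (fun ω => Y ω * χ ω) (fun ω => m (X ω) * χ ω))
    (hX : Measurable X) (hY : Measurable Y) (hχ : Measurable χ) (hm : Measurable m)
    (hC : 0 < C) (hYC : ∀ ω, |Y ω| ≤ C) (hχ01 : ∀ ω, χ ω ∈ Set.Icc 0 1) :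
    (fun ω => χ ω * {x | C < |m x|}.indicator 1 (X ω)) =ᵐ[P] 0 := by
  set B := {x | C < |m x|}
  have hB : MeasurableSet B := measurableSet_lt measurable_const hm.abs
  set g : S → ℝ := B.indicator fun x => (m x)⁻¹
  have hg : Measurable g := hm.inv.indicator hB
  have hgC : ∀ x, |g x| ≤ C⁻¹ := abs_indicator_inv_le hC
  have hYg : ∀ ω, X ω ∈ B → Y ω * g (X ω) < 1 := by
    intro ω hx
    have hmC : 0 < |m (X ω)| := hC.trans hx
    calc Y ω * g (X ω) ≤ |Y ω| / |m (X ω)| := by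
          simpa [g, hx, ← div_eq_mul_inv, abs_div] using le_abs_self (Y ω / m (X ω))
      _ < 1 := (div_lt_one hmC).2 ((hYC ω).trans_lt hx)
  have hmg : ∀ ω, m (X ω) * χ ω * g (X ω) = χ ω * B.indicator 1 (X ω) := by
    intro ω
    by_cases hx : X ω ∈ B
    · have : m (X ω) ≠ 0 := abs_pos.mp (hC.trans hx)
      simp [g, hx]
      field_simp
    · simp [g, hx]
  have hle : ∀ ω, Y ω * χ ω * g (X ω) ≤ χ ω * B.indicator 1 (X ω) := by
    intro ω
    by_cases hx : X ω ∈ B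
    · simpa [hx, mul_right_comm _ (χ ω)] using
        mul_le_mul_of_nonneg_right (hYg ω hx).le (hχ01 ω).1
    · simp [g, hx]
  have hχ1 : ∀ ω, ‖χ ω‖ ≤ 1 := fun ω => abs_le.2 ⟨by linarith [(hχ01 ω).1], (hχ01 ω).2⟩
  have hYχ : Integrable (fun ω => Y ω * χ ω) P :=
    (Integrable.of_bound hY.aestronglyMeasurable C (ae_of_all _ hYC)).mul_bdd
      hχ.aestronglyMeasurable (ae_of_all _ hχ1)
  have hχB : Integrable (fun ω => χ ω * B.indicator 1 (X ω)) P :=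
    (integrable_of_forall_mem_Icc hχ hχ01).mul_comp_of_bdd hX
      (measurable_const.indicator hB) (exists_abs_indicator_one_le B)
  have heq := (integral_eq_iff_of_ae_le (hYχ.mul_comp_of_bdd hX hg ⟨_, hgC⟩) hχB
    (ae_of_all _ hle)).1 (by rw [hv g hg ⟨_, hgC⟩]; exact integral_congr_ae (ae_of_all _ hmg))
  filter_upwards [heq] with ω hω
  by_cases hx : X ω ∈ B
  · rw [Set.indicator_of_mem hx, Pi.one_apply] at hω
    have h : χ ω * (1 - Y ω * g (X ω)) = 0 := by linear_combination -hω
    simp [hx, (mul_eq_zero.1 h).resolve_right (sub_pos.2 (hYg ω hx)).ne']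
  · simp [hx]

lemma measure_preimage_eq_zero [IsFiniteMeasure P] {χ : Ω → ℝ} {q : S → ℝ} {ε : ℝ} {B : Set S}
    (hq : CondMeanEq P X χ (fun ω => q (X ω))) (hX : Measurable X) (hqm : Measurable q)
    (hε : 0 < ε) (hqε : ∀ x, ε ≤ q x) (hB : MeasurableSet B)
    (hχB : (fun ω => χ ω * B.indicator 1 (X ω)) =ᵐ[P] 0) :
    P (X ⁻¹' B) = 0 := by
  set g : S → ℝ := B.indicator 1 / q
  have h := hq g ((measurable_const.indicator hB).div hqm)
    (exists_abs_div_le (exists_abs_indicator_one_le B) hε hqε)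
  have hlhs : ∫ ω, χ ω * g (X ω) ∂P = 0 := by
    refine integral_eq_zero_of_ae ?_
    filter_upwards [hχB] with ω hω
    rw [Pi.zero_apply] at hω ⊢
    rw [show g (X ω) = B.indicator 1 (X ω) / q (X ω) from rfl, ← mul_div_assoc, hω, zero_div]
  have hrhs : ∀ ω, q (X ω) * g (X ω) = (X ⁻¹' B).indicator 1 ω := by
    intro ω
    have : q (X ω) ≠ 0 := (hε.trans_le (hqε _)).ne'
    by_cases hx : X ω ∈ B <;> simp [g, hx, this]
  rw [hlhs, integral_congr_ae (ae_of_all _ hrhs), integral_indicator_one (hX hB)] at h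
  exact (measureReal_eq_zero_iff).1 h.symm

lemma ae_abs_comp_le [IsFiniteMeasure P] {Y χ : Ω → ℝ} {m q : S → ℝ} {C ε : ℝ}
    (hv : CondMeanEq P X (fun ω => Y ω * χ ω) (fun ω => m (X ω) * χ ω))
    (hq : CondMeanEq P X χ (fun ω => q (X ω)))
    (hX : Measurable X) (hY : Measurable Y) (hχ : Measurable χ) (hm : Measurable m)
    (hqm : Measurable q) (hC : 0 < C) (hYC : ∀ ω, |Y ω| ≤ C) (hχ01 : ∀ ω, χ ω ∈ Set.Icc 0 1)
    (hε : 0 < ε) (hqε : ∀ x, ε ≤ q x) :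
    ∀ᵐ ω ∂P, |m (X ω)| ≤ C := by
  have h := hq.measure_preimage_eq_zero hX hqm hε hqε (measurableSet_lt measurable_const hm.abs)
    (hv.ae_mul_indicator_eq_zero hX hY hχ hm hC hYC hχ01)
  rw [ae_iff]
  simp only [not_le]
  exact h

lemma integrable_comp [IsFiniteMeasure P] {Y χ : Ω → ℝ} {m q : S → ℝ} {C ε : ℝ}
    (hv : CondMeanEq P X (fun ω => Y ω * χ ω) (fun ω => m (X ω) * χ ω))
    (hq : CondMeanEq P X χ (fun ω => q (X ω)))
    (hX : Measurable X) (hY : Measurable Y) (hχ : Measurable χ) (hm : Measurable m)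
    (hqm : Measurable q) (hC : 0 < C) (hYC : ∀ ω, |Y ω| ≤ C) (hχ01 : ∀ ω, χ ω ∈ Set.Icc 0 1)
    (hε : 0 < ε) (hqε : ∀ x, ε ≤ q x) :
    Integrable (fun ω => m (X ω)) P :=
  .of_bound (hm.comp hX).aestronglyMeasurable C
    (hv.ae_abs_comp_le hq hX hY hχ hm hqm hC hYC hχ01 hε hqε)

lemma condExp_comap_ae_eq [IsFiniteMeasure P] {f h : Ω → ℝ} (hfh : CondMeanEq P X f h)
    (hX : Measurable X) (hf : Integrable f P) (hhm : StronglyMeasurable[mS.comap X] h)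
    (hh : Integrable h P) :
    P[f | mS.comap X] =ᵐ[P] h := by
  refine (ae_eq_condExp_of_forall_setIntegral_eq hX.comap_le hf (fun _ _ _ => hh.integrableOn)
    (fun s hs _ => ?_) hhm.aestronglyMeasurable).symm
  obtain ⟨B, hB, rfl⟩ := hs
  rw [setIntegral_preimage_eq_integral_mul_indicator hX hB,
    setIntegral_preimage_eq_integral_mul_indicator hX hB]
  exact (hfh _ (measurable_const.indicator hB) (exists_abs_indicator_one_le B)).symm

end CondMeanEq

end CondMean

lemma condExp_add_ae_eq_of_condExp_ae_eq_zero {Ω E : Type*} [NormedAddCommGroup E]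
    [NormedSpace ℝ E] [CompleteSpace E] {m m₀ : MeasurableSpace Ω} {μ : Measure Ω}
    (hm : m ≤ m₀) [SigmaFinite (μ.trim hm)] {f g : Ω → E} (hf : Integrable f μ)
    (hg : Integrable g μ) (hgm : StronglyMeasurable[m] g) (hf0 : μ[f | m] =ᵐ[μ] 0) :
    μ[f + g | m] =ᵐ[μ] g := by
  filter_upwards [condExp_add hf hg m, hf0] with ω hadd hω
  rw [hadd, Pi.add_apply, hω, condExp_of_stronglyMeasurable hm hgm hg, Pi.zero_apply, zero_add]

section DRLearner

variable {Ω S : Type*} {X : Ω → S} {Z Y : Ω → ℝ} {e m0 m1 : S → ℝ} {ε : ℝ}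

noncomputable def drResidual (X : Ω → S) (Z Y : Ω → ℝ) (e m0 m1 : S → ℝ) (ω : Ω) : ℝ :=
  (2 * Z ω - 1) / (Z ω * e (X ω) + (1 - Z ω) * (1 - e (X ω)))
    * (Y ω - (if Z ω = 1 then m1 (X ω) else m0 (X ω)))

lemma drResidual_mul_eq (hZ01 : ∀ ω, Z ω = 0 ∨ Z ω = 1) (hε : 0 < ε) (he : ∀ x, ε ≤ e x)
    (he' : ∀ x, ε ≤ 1 - e x) (g : S → ℝ) (ω : Ω) :
    drResidual X Z Y e m0 m1 ω * g (X ω)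
      = (Y ω * Z ω - m1 (X ω) * Z ω) * (g / e) (X ω)
        - (Y ω * (1 - Z ω) - m0 (X ω) * (1 - Z ω)) * (g / (1 - e)) (X ω) := by
  have h1 : e (X ω) ≠ 0 := (hε.trans_le (he _)).ne'
  have h0 : 1 - e (X ω) ≠ 0 := (hε.trans_le (he' _)).ne'
  rcases hZ01 ω with h | h
  · simp [drResidual, h]
    field_simp
  · simp [drResidual, h]
    field_simp
    ring

variable [MeasurableSpace Ω] [MeasurableSpace S] {P : Measure Ω}

lemma MeasureTheory.Integrable.mul_zero_one {f : Ω → ℝ} (hf : Integrable f P) (hZ : Measurable Z)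
    (hZ01 : ∀ ω, Z ω = 0 ∨ Z ω = 1) :
    Integrable (fun ω => f ω * Z ω) P ∧ Integrable (fun ω => f ω * (1 - Z ω)) P := by
  have hbd : ∀ ω, |Z ω| ≤ 1 ∧ |1 - Z ω| ≤ 1 := fun ω => by rcases hZ01 ω with h | h <;> simp [h]
  exact ⟨hf.mul_bdd hZ.aestronglyMeasurable (c := 1) (ae_of_all _ fun ω => (hbd ω).1),
    hf.mul_bdd (measurable_const.sub hZ).aestronglyMeasurable (c := 1)
      (ae_of_all _ fun ω => (hbd ω).2)⟩

lemma integrable_drResidual [IsFiniteMeasure P] (hX : Measurable X) (hZ : Measurable Z)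
    (hZ01 : ∀ ω, Z ω = 0 ∨ Z ω = 1) (hY : Integrable Y P) (hm0 : Integrable (fun ω => m0 (X ω)) P)
    (hm1 : Integrable (fun ω => m1 (X ω)) P) (hem : Measurable e) (hε : 0 < ε)
    (he : ∀ x, ε ≤ e x) (he' : ∀ x, ε ≤ 1 - e x) :
    Integrable (drResidual X Z Y e m0 m1) P := by
  have h := drResidual_mul_eq (X := X) (Y := Y) (m0 := m0) (m1 := m1) hZ01 hε he he' 1
  simp only [Pi.one_apply, mul_one] at h
  rw [funext h]
  obtain ⟨hY1, hY0⟩ := hY.mul_zero_one hZ hZ01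
  obtain ⟨hm11, -⟩ := hm1.mul_zero_one hZ hZ01
  obtain ⟨-, hm00⟩ := hm0.mul_zero_one hZ hZ01
  exact ((hY1.sub hm11).mul_comp_of_bdd hX (measurable_const.div hem)
      (exists_abs_div_le (g := 1) ⟨1, fun _ => by simp⟩ hε he)).sub
    ((hY0.sub hm00).mul_comp_of_bdd hX (measurable_const.div (measurable_const.sub hem))
      (exists_abs_div_le (g := 1) ⟨1, fun _ => by simp⟩ hε he'))

lemma condMeanEq_drResidual_zero (hX : Measurable X) (hZ : Measurable Z)
    (hZ01 : ∀ ω, Z ω = 0 ∨ Z ω = 1) (hY : Integrable Y P) (hm0 : Integrable (fun ω => m0 (X ω)) P)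
    (hm1 : Integrable (fun ω => m1 (X ω)) P) (hem : Measurable e) (hε : 0 < ε)
    (he : ∀ x, ε ≤ e x) (he' : ∀ x, ε ≤ 1 - e x)
    (hm0v : CondMeanEq P X (fun ω => Y ω * (1 - Z ω)) (fun ω => m0 (X ω) * (1 - Z ω)))
    (hm1v : CondMeanEq P X (fun ω => Y ω * Z ω) (fun ω => m1 (X ω) * Z ω)) :
    CondMeanEq P X (drResidual X Z Y e m0 m1) 0 := by
  intro g hg hgb
  obtain ⟨hY1, hY0⟩ := hY.mul_zero_one hZ hZ01
  obtain ⟨hm11, -⟩ := hm1.mul_zero_one hZ hZ01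
  obtain ⟨-, hm00⟩ := hm0.mul_zero_one hZ hZ01
  have hg1 := exists_abs_div_le hgb hε he
  have hg0 := exists_abs_div_le (q := 1 - e) hgb hε he'
  have hge : Measurable (g / e) := hg.div hem
  have hge' : Measurable (g / (1 - e)) := hg.div (measurable_const.sub hem)
  have h1 : Integrable (fun ω => (Y ω * Z ω - m1 (X ω) * Z ω) * (g / e) (X ω)) P :=
    (hY1.sub hm11).mul_comp_of_bdd hX hge hg1
  have h0 : Integrable
      (fun ω => (Y ω * (1 - Z ω) - m0 (X ω) * (1 - Z ω)) * (g / (1 - e)) (X ω)) P :=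
    (hY0.sub hm00).mul_comp_of_bdd hX hge' hg0
  simp only [drResidual_mul_eq hZ01 hε he he', Pi.zero_apply, zero_mul, integral_zero]
  rw [integral_sub h1 h0, hm1v.integral_sub_mul_eq_zero hX hY1 hm11 hge hg1,
    hm0v.integral_sub_mul_eq_zero hX hY0 hm00 hge' hg0, sub_zero]

end DRLearner

theorem stmt_11_general
    {Ω : Type*} [mΩ : MeasurableSpace Ω] (P : Measure Ω) [IsProbabilityMeasure P]
    {S : Type*} [mS : MeasurableSpace S]
    (X : Ω → S) (hX : Measurable X)
    (Z Y : Ω → ℝ) (hZ : Measurable Z) (hY : Measurable Y)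
    (hZ01 : ∀ ω, Z ω = 0 ∨ Z ω = 1)
    (hYb : ∃ C, ∀ ω, |Y ω| ≤ C)
    (e : S → ℝ) (he : Measurable e) (ε : ℝ) (hε : 0 < ε)
    (hebd : ∀ x, ε ≤ e x ∧ e x ≤ 1 - ε)
    (hVe : ∀ g : S → ℝ, Measurable g → (∃ C, ∀ x, |g x| ≤ C) →
      ∫ ω, Z ω * g (X ω) ∂P = ∫ ω, e (X ω) * g (X ω) ∂P)
    (m0 m1 : S → ℝ) (hm0 : Measurable m0) (hm1 : Measurable m1)
    (hm0v : ∀ g : S → ℝ, Measurable g → (∃ C, ∀ x, |g x| ≤ C) →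
      ∫ ω, Y ω * (if Z ω = 0 then (1:ℝ) else 0) * g (X ω) ∂P
        = ∫ ω, m0 (X ω) * (if Z ω = 0 then (1:ℝ) else 0) * g (X ω) ∂P)
    (hm1v : ∀ g : S → ℝ, Measurable g → (∃ C, ∀ x, |g x| ≤ C) →
      ∫ ω, Y ω * (if Z ω = 1 then (1:ℝ) else 0) * g (X ω) ∂P
        = ∫ ω, m1 (X ω) * (if Z ω = 1 then (1:ℝ) else 0) * g (X ω) ∂P) :
    (P[fun ω => (2 * Z ω - 1) / (Z ω * e (X ω) + (1 - Z ω) * (1 - e (X ω)))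
          * (Y ω - (if Z ω = 1 then m1 (X ω) else m0 (X ω)))
        | MeasurableSpace.comap X mS] =ᵐ[P] 0)
    ∧ (P[fun ω => (2 * Z ω - 1) / (Z ω * e (X ω) + (1 - Z ω) * (1 - e (X ω)))
            * (Y ω - (if Z ω = 1 then m1 (X ω) else m0 (X ω)))
          + (m1 (X ω) - m0 (X ω))
        | MeasurableSpace.comap X mS] =ᵐ[P] fun ω => m1 (X ω) - m0 (X ω))
    ∧ (∀ G : MeasurableSpace Ω, G ≤ MeasurableSpace.comap X mS →
        P[fun ω => (2 * Z ω - 1) / (Z ω * e (X ω) + (1 - Z ω) * (1 - e (X ω)))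
              * (Y ω - (if Z ω = 1 then m1 (X ω) else m0 (X ω)))
            + (m1 (X ω) - m0 (X ω)) | G]
          =ᵐ[P] P[fun ω => m1 (X ω) - m0 (X ω) | G]) := by
  obtain ⟨C₀, hC₀⟩ := hYb
  have hYC : ∀ ω, |Y ω| ≤ max C₀ 1 := fun ω => (hC₀ ω).trans (le_max_left _ _)
  have hC : 0 < max C₀ 1 := lt_max_of_lt_right one_pos
  have he1 : ∀ x, ε ≤ e x := fun x => (hebd x).1
  have he0 : ∀ x, ε ≤ 1 - e x := fun x => by linarith [(hebd x).2]
  have hZI : ∀ ω, Z ω ∈ Set.Icc 0 1 ∧ 1 - Z ω ∈ Set.Icc 0 1 := fun ω => by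
    rcases hZ01 ω with h | h <;> simp [h]
  have hite : ∀ ω, (if Z ω = 1 then (1 : ℝ) else 0) = Z ω ∧
      (if Z ω = 0 then (1 : ℝ) else 0) = 1 - Z ω := fun ω => by
    rcases hZ01 ω with h | h <;> simp [h]
  simp only [fun ω => (hite ω).1, fun ω => (hite ω).2] at hm1v hm0v
  have hVe0 : CondMeanEq P X (fun ω => 1 - Z ω) (fun ω => 1 - e (X ω)) :=
    CondMeanEq.const_sub hVe hX (integrable_of_forall_mem_Icc hZ fun ω => (hZI ω).1)
      (integrable_of_forall_mem_Icc (he.comp hX) fun ω =>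
        ⟨hε.le.trans (he1 _), show e (X ω) ≤ 1 by linarith [(hebd (X ω)).2]⟩) 1
  have hm1i := CondMeanEq.integrable_comp hm1v hVe hX hY hZ hm1 he hC hYC
    (fun ω => (hZI ω).1) hε he1
  have hm0i := CondMeanEq.integrable_comp hm0v hVe0 hX hY (measurable_const.sub hZ) hm0
    (measurable_const.sub he) hC hYC (fun ω => (hZI ω).2) hε he0
  have hYi : Integrable Y P := .of_bound hY.aestronglyMeasurable _ (ae_of_all _ hYC)
  have hW := integrable_drResidual hX hZ hZ01 hYi hm0i hm1i he hε he1 he0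
  have h1 := (condMeanEq_drResidual_zero hX hZ hZ01 hYi hm0i hm1i he hε he1 he0 hm0v
    hm1v).condExp_comap_ae_eq hX hW stronglyMeasurable_zero (integrable_zero _ _ _)
  have hXσ : Measurable[mS.comap X] X := .of_comap_le le_rfl
  have h2 := condExp_add_ae_eq_of_condExp_ae_eq_zero hX.comap_le hW (hm1i.sub hm0i)
    ((hm1.comp hXσ).sub (hm0.comp hXσ)).stronglyMeasurable h1
  exact ⟨h1, h2, fun G hG =>
    (condExp_condExp_of_le hG hX.comap_le).symm.trans (condExp_congr_ae h2)⟩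

/-- conditional unbiasedness of the DR-Learner pseudo-outcome:
E[(2Z−1)/π0(X,Z)·(Y − m_Z(X)) | σ(X)] = 0 a.s.; consequently the pseudo-outcome
Γ̇0 = (2Z−1)/π0(X,Z)·(Y − m_Z(X)) + m1(X) − m0(X) satisfies E[Γ̇0 | σ(X)] = m1(X) − m0(X)
a.s., and for any sub-σ-algebra G of σ(X), E[Γ̇0 | G] = E[m1(X) − m0(X) | G] a.s. -/
theorem stmt_11
    {Ω : Type*} [mΩ : MeasurableSpace Ω] (P : Measure Ω) [IsProbabilityMeasure P]
    {S : Type*} [mS : MeasurableSpace S]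
    (X : Ω → S) (hX : Measurable X)
    (Z Y : Ω → ℝ) (hZ : Measurable Z) (hY : Measurable Y)
    (hZ01 : ∀ ω, Z ω = 0 ∨ Z ω = 1)
    (hYb : ∃ C, ∀ ω, |Y ω| ≤ C)
    (e : S → ℝ) (he : Measurable e) (ε : ℝ) (hε : 0 < ε) (hε2 : ε < 1/2)
    (hebd : ∀ x, ε ≤ e x ∧ e x ≤ 1 - ε)
    (hVe : ∀ g : S → ℝ, Measurable g → (∃ C, ∀ x, |g x| ≤ C) →
      ∫ ω, Z ω * g (X ω) ∂P = ∫ ω, e (X ω) * g (X ω) ∂P)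
    (m0 m1 : S → ℝ) (hm0 : Measurable m0) (hm1 : Measurable m1)
    (hm0v : ∀ g : S → ℝ, Measurable g → (∃ C, ∀ x, |g x| ≤ C) →
      ∫ ω, Y ω * (if Z ω = 0 then (1:ℝ) else 0) * g (X ω) ∂P
        = ∫ ω, m0 (X ω) * (if Z ω = 0 then (1:ℝ) else 0) * g (X ω) ∂P)
    (hm1v : ∀ g : S → ℝ, Measurable g → (∃ C, ∀ x, |g x| ≤ C) →
      ∫ ω, Y ω * (if Z ω = 1 then (1:ℝ) else 0) * g (X ω) ∂P
        = ∫ ω, m1 (X ω) * (if Z ω = 1 then (1:ℝ) else 0) * g (X ω) ∂P) :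
    (P[fun ω => (2 * Z ω - 1) / (Z ω * e (X ω) + (1 - Z ω) * (1 - e (X ω)))
          * (Y ω - (if Z ω = 1 then m1 (X ω) else m0 (X ω)))
        | MeasurableSpace.comap X mS] =ᵐ[P] 0)
    ∧ (P[fun ω => (2 * Z ω - 1) / (Z ω * e (X ω) + (1 - Z ω) * (1 - e (X ω)))
            * (Y ω - (if Z ω = 1 then m1 (X ω) else m0 (X ω)))
          + (m1 (X ω) - m0 (X ω))
        | MeasurableSpace.comap X mS] =ᵐ[P] fun ω => m1 (X ω) - m0 (X ω))
    ∧ (∀ G : MeasurableSpace Ω, G ≤ MeasurableSpace.comap X mS →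
        P[fun ω => (2 * Z ω - 1) / (Z ω * e (X ω) + (1 - Z ω) * (1 - e (X ω)))
              * (Y ω - (if Z ω = 1 then m1 (X ω) else m0 (X ω)))
            + (m1 (X ω) - m0 (X ω)) | G]
          =ᵐ[P] P[fun ω => m1 (X ω) - m0 (X ω) | G]) :=
  stmt_11_general (mΩ := mΩ) P (mS := mS) X hX Z Y hZ hY hZ01 hYb e he ε hε hebd hVe m0 m1 hm0 hm1
    hm0v hm1v
end

section
/- (Lemma 3: the influence function of the ratio parameter has mean zero.) Let π0(x,z) := z·e(x) + (1−z)·(1−e(x)), let m_0, m_1 be versions of E[Y | X, Z=0] and E[Y | X, Z=1], and ℓ_0, ℓ_1 be versions of E[A | X, Z=0] and E[A | X, Z=1]. Set γ0 := m_1 − m_0, δ0 := ℓ_1 − ℓ_0, Γ0 := E[γ0(X)], Δ0 := E[δ0(X)], and assume Δ0 ≠ 0, with χ0 := Γ0/Δ0. Define χ̇*0 := (1/Δ0)·( (2Z−1)/π0(X,Z) · [ Y − m_Z(X) − χ0·(A − ℓ_Z(X)) ] + γ0(X) − χ0·δ0(X) ). Then E[χ̇*0] = 0. -/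
/-!
On `{Z = 1}` the weight `(2Z - 1) / π₀(X, Z)` is `1 / e(X)`, on `{Z = 0}` it is `-1 / (1 - e(X))`.
Testing the defining identities of `m_z` and `ℓ_z` against the bounded function `1 / e`, resp.
`1 / (1 - e)`, shows that both weighted residuals have mean zero, and what remains is
`(Γ0 - χ0 Δ0) / Δ0 = 0`.

All expectations involved are finite because positivity forces every version `m_z ∘ X` to be
a.s. bounded by a bound `C` of `Y`: testing against `g = 1{m_z > C} / (1 + |m_z|)` shows
`1{Z = z} g(X) = 0` a.s., hence `E[e_z(X) g(X)] = 0` for the propensity `e_z > 0` of stratum `z`,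
hence `g(X) = 0` a.s.
-/

open MeasureTheory ProbabilityTheory

open scoped ENNReal

lemma ite_one_zero_mem_Icc (p : Prop) [Decidable p] :
    (if p then (1 : ℝ) else 0) ∈ Set.Icc 0 1 := by
  split_ifs <;> norm_num

lemma ipw_residual_eq {z e y a m₀ m₁ l₀ l₁ c : ℝ} (hz : z = 0 ∨ z = 1) :
    (2 * z - 1) / (z * e + (1 - z) * (1 - e))
        * (y - (if z = 1 then m₁ else m₀) - c * (a - (if z = 1 then l₁ else l₀)))
      = (if z = 1 then 1 else 0) * (y - m₁ - c * (a - l₁)) * e⁻¹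
        - (if z = 0 then 1 else 0) * (y - m₀ - c * (a - l₀)) * (1 - e)⁻¹ := by
  rcases hz with rfl | rfl <;> norm_num <;> ring

section

variable {Ω S : Type*} [MeasurableSpace Ω] [MeasurableSpace S] {P : Measure Ω} {X : Ω → S}

lemma measurable_ite_eq_one_zero {Z : Ω → ℝ} (hZ : Measurable Z) (z : ℝ) :
    Measurable fun ω => if Z ω = z then (1 : ℝ) else 0 :=
  Measurable.ite (hZ (measurableSet_singleton z)) measurable_const measurable_const

lemma memLp_top_of_mem_Icc {F : Ω → ℝ} (hF : Measurable F) (h : ∀ ω, F ω ∈ Set.Icc 0 1) :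
    MemLp F ∞ P :=
  memLp_top_of_bound hF.aestronglyMeasurable 1
    (ae_of_all _ fun ω => abs_le.2 ⟨by linarith [(h ω).1], (h ω).2⟩)

lemma memLp_top_comp (hX : Measurable X) {g : S → ℝ} (hg : Measurable g)
    (hgb : ∃ C, ∀ x, |g x| ≤ C) : MemLp (fun ω => g (X ω)) ∞ P := by
  obtain ⟨C, hC⟩ := hgb
  exact memLp_top_of_bound (hg.comp hX).aestronglyMeasurable C (ae_of_all _ fun ω => hC (X ω))

lemma integrable_mul_mul_of_memLp_top [IsFiniteMeasure P] {F G H : Ω → ℝ} (hF : MemLp F ∞ P)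
    (hG : MemLp G ∞ P) (hH : MemLp H ∞ P) : Integrable (fun ω => F ω * G ω * H ω) P :=
  (hH.mul' (hG.mul' hF (r := ∞)) (r := ∞)).integrable le_top

lemma integral_ratio_correction_eq_zero {T₁ T₀ γ δ : Ω → ℝ} (hT₁ : Integrable T₁ P)
    (hT₀ : Integrable T₀ P) (hγ : Integrable γ P) (hδ : Integrable δ P)
    (h₁ : ∫ ω, T₁ ω ∂P = 0) (h₀ : ∫ ω, T₀ ω ∂P = 0) (hδ₀ : ∫ ω, δ ω ∂P ≠ 0) :
    ∫ ω, (1 / ∫ ω, δ ω ∂P) * (T₁ ω - T₀ ω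
      + (γ ω - (∫ ω, γ ω ∂P) / (∫ ω, δ ω ∂P) * δ ω)) ∂P = 0 := by
  rw [integral_const_mul, integral_add (hT₁.sub' hT₀) (hγ.sub' (hδ.const_mul _)),
    integral_sub hT₁ hT₀, integral_sub hγ (hδ.const_mul _), integral_const_mul, h₁, h₀,
    div_mul_cancel₀ _ hδ₀]
  ring

/-- `f ∘ X` is a version of `E[W | X, M = 1]`, where `M` is the indicator of a stratum;
`IsCondExpVersion P X 1 W f` says that `f ∘ X` is a version of `E[W | X]`. -/
def IsCondExpVersion (P : Measure Ω) (X : Ω → S) (M W : Ω → ℝ) (f : S → ℝ) : Prop :=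
  ∀ g : S → ℝ, Measurable g → (∃ C, ∀ x, |g x| ≤ C) →
    ∫ ω, W ω * M ω * g (X ω) ∂P = ∫ ω, f (X ω) * M ω * g (X ω) ∂P

variable {M W : Ω → ℝ} {w f : S → ℝ}

lemma IsCondExpVersion.neg (h : IsCondExpVersion P X M W f) :
    IsCondExpVersion P X M (-W) (-f) := by
  intro g hg hgb
  simp only [Pi.neg_apply, neg_mul, integral_neg, h g hg hgb]

lemma IsCondExpVersion.ite_eq_one {Z : Ω → ℝ} {e : S → ℝ} (h : IsCondExpVersion P X 1 Z e)
    (hZ01 : ∀ ω, Z ω = 0 ∨ Z ω = 1) :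
    IsCondExpVersion P X 1 (fun ω => if Z ω = 1 then 1 else 0) e := by
  have hZ : (fun ω => if Z ω = 1 then (1 : ℝ) else 0) = Z := by
    funext ω
    rcases hZ01 ω with h | h <;> simp [h]
  rwa [hZ]

variable [IsFiniteMeasure P]

lemma IsCondExpVersion.ite_eq_zero {Z : Ω → ℝ} {e : S → ℝ} (h : IsCondExpVersion P X 1 Z e)
    (hX : Measurable X) (hZ : Measurable Z) (hZ01 : ∀ ω, Z ω = 0 ∨ Z ω = 1) (he : Measurable e)
    (he1 : ∀ x, e x ∈ Set.Icc 0 1) :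
    IsCondExpVersion P X 1 (fun ω => if Z ω = 0 then 1 else 0) (fun x => 1 - e x) := by
  intro g hg hgb
  have hG : MemLp (fun ω => g (X ω)) ∞ P := memLp_top_comp hX hg hgb
  have hZm : MemLp Z ∞ P := memLp_top_of_bound hZ.aestronglyMeasurable 1 (ae_of_all _ fun ω => by
    rcases hZ01 ω with h | h <;> simp [h])
  have hem : MemLp (fun ω => e (X ω)) ∞ P :=
    memLp_top_comp hX he ⟨1, fun x => abs_le.2 ⟨by linarith [(he1 x).1], (he1 x).2⟩⟩
  have key := h g hg hgb
  simp only [Pi.one_apply, mul_one] at key ⊢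
  calc ∫ ω, (if Z ω = 0 then 1 else 0) * g (X ω) ∂P
      = ∫ ω, g (X ω) - Z ω * g (X ω) ∂P := by
        refine integral_congr_ae (ae_of_all _ fun ω => ?_)
        rcases hZ01 ω with h | h <;> simp [h]
    _ = ∫ ω, g (X ω) - e (X ω) * g (X ω) ∂P := by
        rw [integral_sub (hG.integrable le_top) ((hG.mul' hZm (r := ∞)).integrable le_top), key,
          integral_sub (hG.integrable le_top) ((hG.mul' hem (r := ∞)).integrable le_top)]
    _ = ∫ ω, (1 - e (X ω)) * g (X ω) ∂P := by
        congr 1; funext ω; ring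

lemma IsCondExpVersion.ae_eq_zero_of_mul_ae_eq_zero (hpos : IsCondExpVersion P X 1 M w)
    (hX : Measurable X) (hw_meas : Measurable w) (hw : ∀ x, w x ∈ Set.Ioc 0 1) {g : S → ℝ}
    (hg : Measurable g) (hg_nonneg : ∀ x, 0 ≤ g x) (hgb : ∃ D, ∀ x, |g x| ≤ D)
    (hMg : (fun ω => M ω * g (X ω)) =ᵐ[P] 0) : (fun ω => g (X ω)) =ᵐ[P] 0 := by
  have hwg_nonneg : 0 ≤ᵐ[P] fun ω => w (X ω) * g (X ω) :=
    ae_of_all _ fun ω => mul_nonneg (hw _).1.le (hg_nonneg _)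
  have hwg_int : Integrable (fun ω => w (X ω) * g (X ω)) P := by
    have hW := memLp_top_comp (P := P) hX hw_meas
      ⟨1, fun x => abs_le.2 ⟨by linarith [(hw x).1], (hw x).2⟩⟩
    exact ((memLp_top_comp hX hg hgb).mul' hW (r := ∞)).integrable le_top
  have hwg_zero : ∫ ω, w (X ω) * g (X ω) ∂P = 0 := by
    have h := hpos g hg hgb
    simp only [Pi.one_apply, mul_one] at h
    rw [← h, integral_eq_zero_of_ae hMg]
  filter_upwards [(integral_eq_zero_iff_of_nonneg_ae hwg_nonneg hwg_int).1 hwg_zero] with ω hω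
  exact (mul_eq_zero.1 hω).resolve_left (hw _).1.ne'

lemma IsCondExpVersion.mul_comp_ae_eq_zero (hver : IsCondExpVersion P X M W f)
    (hX : Measurable X) (hM_meas : Measurable M) (hM : ∀ ω, M ω ∈ Set.Icc 0 1)
    (hW : Integrable W P) {C : ℝ} (hWC : ∀ᵐ ω ∂P, W ω ≤ C) (hf : Measurable f) {g : S → ℝ}
    (hg : Measurable g) (hg_nonneg : ∀ x, 0 ≤ g x) (hgb : ∃ D, ∀ x, |g x| ≤ D)
    (hfgb : ∃ D, ∀ x, |f x * g x| ≤ D) (hg_zero : ∀ x, f x ≤ C → g x = 0) :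
    (fun ω => M ω * g (X ω)) =ᵐ[P] 0 := by
  have hMm := memLp_top_of_mem_Icc hM_meas hM (P := P)
  have hMg : Integrable (fun ω => M ω * g (X ω)) P :=
    ((memLp_top_comp hX hg hgb).mul' hMm (r := ∞)).integrable le_top
  have hWMg : Integrable (fun ω => W ω * M ω * g (X ω)) P := by
    simpa only [Pi.mul_def, mul_assoc] using
      hW.mul_of_top_left ((memLp_top_comp hX hg hgb).mul' hMm (r := ∞))
  have hfMg : Integrable (fun ω => f (X ω) * M ω * g (X ω)) P := by
    have hfG := memLp_top_comp (P := P) hX (g := fun x => f x * g x) (hf.mul hg) hfgb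
    refine ((hfG.mul' hMm (r := ∞)).integrable le_top).congr (ae_of_all _ fun ω => ?_)
    ring
  have h_nonneg : 0 ≤ᵐ[P] fun ω => (f (X ω) - C) * (M ω * g (X ω)) := ae_of_all _ fun ω => by
    by_cases hx : f (X ω) ≤ C
    · simp [hg_zero _ hx]
    · exact mul_nonneg (by linarith) (mul_nonneg (hM ω).1 (hg_nonneg _))
  have h_int : Integrable (fun ω => (f (X ω) - C) * (M ω * g (X ω))) P :=
    (hfMg.sub (hMg.const_mul C)).congr (ae_of_all _ fun ω => by simp only [Pi.sub_apply]; ring)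
  have h_nonpos : ∫ ω, (f (X ω) - C) * (M ω * g (X ω)) ∂P ≤ 0 := calc
      ∫ ω, (f (X ω) - C) * (M ω * g (X ω)) ∂P
        = ∫ ω, f (X ω) * M ω * g (X ω) ∂P - ∫ ω, C * (M ω * g (X ω)) ∂P := by
          rw [← integral_sub hfMg (hMg.const_mul C)]; congr 1; funext ω; ring
      _ = ∫ ω, W ω * M ω * g (X ω) ∂P - ∫ ω, C * (M ω * g (X ω)) ∂P := by
          rw [hver g hg hgb]
      _ = ∫ ω, (W ω - C) * (M ω * g (X ω)) ∂P := by
          rw [← integral_sub hWMg (hMg.const_mul C)]; congr 1; funext ω; ring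
      _ ≤ 0 := integral_nonpos_of_ae <| by
          filter_upwards [hWC] with ω hω
          exact mul_nonpos_of_nonpos_of_nonneg (by linarith) (mul_nonneg (hM ω).1 (hg_nonneg _))
  filter_upwards [(integral_eq_zero_iff_of_nonneg_ae h_nonneg h_int).1
    (le_antisymm h_nonpos (integral_nonneg_of_ae h_nonneg))] with ω hω
  by_cases hx : f (X ω) ≤ C
  · simp [hg_zero _ hx]
  · exact (mul_eq_zero.1 hω).resolve_left (sub_ne_zero.2 (ne_of_gt (not_le.1 hx)))

lemma IsCondExpVersion.ae_le (hver : IsCondExpVersion P X M W f) (hX : Measurable X)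
    (hM_meas : Measurable M) (hM : ∀ ω, M ω ∈ Set.Icc 0 1) (hw_meas : Measurable w)
    (hw : ∀ x, w x ∈ Set.Ioc 0 1) (hpos : IsCondExpVersion P X 1 M w) (hW : Integrable W P)
    {C : ℝ} (hWC : ∀ᵐ ω ∂P, W ω ≤ C) (hf : Measurable f) :
    ∀ᵐ ω ∂P, f (X ω) ≤ C := by
  set g : S → ℝ := fun x => if C < f x then (1 + |f x|)⁻¹ else 0 with hg_def
  have hg_meas : Measurable g :=
    Measurable.ite (measurableSet_lt measurable_const hf) (measurable_const.add hf.abs).inv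
      measurable_const
  have hg_pos : ∀ x, C < f x → 0 < g x := fun x hx => by
    simp only [hg_def, if_pos hx]; positivity
  have hg_zero : ∀ x, f x ≤ C → g x = 0 := fun x hx => by simp only [hg_def, if_neg hx.not_gt]
  have hg_nonneg : ∀ x, 0 ≤ g x := fun x => by
    rcases le_or_gt (f x) C with hx | hx
    · exact (hg_zero x hx).ge
    · exact (hg_pos x hx).le
  have hgb : ∀ x, |g x| ≤ 1 := fun x => by
    rcases le_or_gt (f x) C with hx | hx
    · simp [hg_zero x hx]
    · rw [abs_of_pos (hg_pos x hx)]
      simp only [hg_def, if_pos hx]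
      exact inv_le_one_of_one_le₀ (le_add_of_nonneg_right (abs_nonneg _))
  have hfgb : ∀ x, |f x * g x| ≤ 1 := fun x => by
    rcases le_or_gt (f x) C with hx | hx
    · simp [hg_zero x hx]
    · simp only [hg_def, if_pos hx, abs_mul, abs_inv]
      rw [abs_of_pos (by positivity : (0 : ℝ) < 1 + |f x|), ← div_eq_mul_inv,
        div_le_one (by positivity)]
      linarith
  have hMg := hver.mul_comp_ae_eq_zero hX hM_meas hM hW hWC hf hg_meas hg_nonneg ⟨1, hgb⟩
    ⟨1, hfgb⟩ hg_zero
  filter_upwards [hpos.ae_eq_zero_of_mul_ae_eq_zero hX hw_meas hw hg_meas hg_nonneg ⟨1, hgb⟩ hMg]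
    with ω hω
  by_contra hx
  exact (hg_pos _ (not_le.1 hx)).ne' hω

lemma IsCondExpVersion.memLp_top (hver : IsCondExpVersion P X M W f) (hX : Measurable X)
    (hM_meas : Measurable M) (hM : ∀ ω, M ω ∈ Set.Icc 0 1) (hw_meas : Measurable w)
    (hw : ∀ x, w x ∈ Set.Ioc 0 1) (hpos : IsCondExpVersion P X 1 M w) (hW_meas : Measurable W)
    {C : ℝ} (hWC : ∀ ω, |W ω| ≤ C) (hf : Measurable f) :
    MemLp (fun ω => f (X ω)) ∞ P := by
  have hW : Integrable W P := .of_bound hW_meas.aestronglyMeasurable C (ae_of_all _ hWC)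
  have hle := hver.ae_le hX hM_meas hM hw_meas hw hpos hW
    (ae_of_all _ fun ω => (le_abs_self _).trans (hWC ω)) hf
  have hge := hver.neg.ae_le hX hM_meas hM hw_meas hw hpos hW.neg
    (ae_of_all _ fun ω => (neg_le_abs _).trans (hWC ω)) hf.neg
  refine memLp_top_of_bound (hf.comp hX).aestronglyMeasurable C ?_
  filter_upwards [hle, hge] with ω h₁ h₂
  rw [Real.norm_eq_abs, abs_le]
  exact ⟨neg_le.1 h₂, h₁⟩

lemma IsCondExpVersion.integral_residual_mul_eq_zero {Y A : Ω → ℝ} {m l : S → ℝ}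
    (hYm : IsCondExpVersion P X M Y m) (hAl : IsCondExpVersion P X M A l) (hX : Measurable X)
    (hM_meas : Measurable M) (hM : ∀ ω, M ω ∈ Set.Icc 0 1) (hY : MemLp Y ∞ P) (hA : MemLp A ∞ P)
    (hm : MemLp (fun ω => m (X ω)) ∞ P) (hl : MemLp (fun ω => l (X ω)) ∞ P) (c : ℝ)
    {g : S → ℝ} (hg : Measurable g) (hgb : ∃ C, ∀ x, |g x| ≤ C) :
    ∫ ω, M ω * (Y ω - m (X ω) - c * (A ω - l (X ω))) * g (X ω) ∂P = 0 := by
  have hG := memLp_top_comp (P := P) hX hg hgb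
  have hMm := memLp_top_of_mem_Icc hM_meas hM (P := P)
  have hYMg := integrable_mul_mul_of_memLp_top hY hMm hG
  have hmMg := integrable_mul_mul_of_memLp_top hm hMm hG
  have hAMg := integrable_mul_mul_of_memLp_top hA hMm hG
  have hlMg := integrable_mul_mul_of_memLp_top hl hMm hG
  calc ∫ ω, M ω * (Y ω - m (X ω) - c * (A ω - l (X ω))) * g (X ω) ∂P
      = ∫ ω, (Y ω * M ω * g (X ω) - m (X ω) * M ω * g (X ω))
          - c * (A ω * M ω * g (X ω) - l (X ω) * M ω * g (X ω)) ∂P := by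
        congr 1; funext ω; ring
    _ = 0 := by
        rw [integral_sub (hYMg.sub' hmMg) ((hAMg.sub' hlMg).const_mul c), integral_const_mul,
          integral_sub hYMg hmMg, integral_sub hAMg hlMg, hYm g hg hgb, hAl g hg hgb]
        ring

end

theorem stmt_12_general
    {Ω : Type*} [MeasurableSpace Ω] (P : Measure Ω) [IsProbabilityMeasure P]
    {S : Type*} [mS : MeasurableSpace S]
    (X : Ω → S) (hX : Measurable X)
    (Z A Y : Ω → ℝ) (hZ : Measurable Z) (hA : Measurable A) (hY : Measurable Y)
    (hZ01 : ∀ ω, Z ω = 0 ∨ Z ω = 1)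
    (hA01 : ∀ ω, A ω = 0 ∨ A ω = 1)
    (hYb : ∃ C, ∀ ω, |Y ω| ≤ C)
    (e : S → ℝ) (he : Measurable e) (ε : ℝ) (hε : 0 < ε)
    (hebd : ∀ x, ε ≤ e x ∧ e x ≤ 1 - ε)
    (hVe : ∀ g : S → ℝ, Measurable g → (∃ C, ∀ x, |g x| ≤ C) →
      ∫ ω, Z ω * g (X ω) ∂P = ∫ ω, e (X ω) * g (X ω) ∂P)
    (m0 m1 l0 l1 : S → ℝ)
    (hm0 : Measurable m0) (hm1 : Measurable m1)
    (hl0 : Measurable l0) (hl1 : Measurable l1)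
    (hm0v : ∀ g : S → ℝ, Measurable g → (∃ C, ∀ x, |g x| ≤ C) →
      ∫ ω, Y ω * (if Z ω = 0 then (1:ℝ) else 0) * g (X ω) ∂P
        = ∫ ω, m0 (X ω) * (if Z ω = 0 then (1:ℝ) else 0) * g (X ω) ∂P)
    (hm1v : ∀ g : S → ℝ, Measurable g → (∃ C, ∀ x, |g x| ≤ C) →
      ∫ ω, Y ω * (if Z ω = 1 then (1:ℝ) else 0) * g (X ω) ∂P
        = ∫ ω, m1 (X ω) * (if Z ω = 1 then (1:ℝ) else 0) * g (X ω) ∂P)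
    (hl0v : ∀ g : S → ℝ, Measurable g → (∃ C, ∀ x, |g x| ≤ C) →
      ∫ ω, A ω * (if Z ω = 0 then (1:ℝ) else 0) * g (X ω) ∂P
        = ∫ ω, l0 (X ω) * (if Z ω = 0 then (1:ℝ) else 0) * g (X ω) ∂P)
    (hl1v : ∀ g : S → ℝ, Measurable g → (∃ C, ∀ x, |g x| ≤ C) →
      ∫ ω, A ω * (if Z ω = 1 then (1:ℝ) else 0) * g (X ω) ∂P
        = ∫ ω, l1 (X ω) * (if Z ω = 1 then (1:ℝ) else 0) * g (X ω) ∂P)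
    (Γ0 Δ0 χ0 : ℝ)
    (hΓ0 : Γ0 = ∫ ω, m1 (X ω) - m0 (X ω) ∂P)
    (hΔ0 : Δ0 = ∫ ω, l1 (X ω) - l0 (X ω) ∂P)
    (hΔ0ne : Δ0 ≠ 0)
    (hχ0 : χ0 = Γ0 / Δ0) :
    (∫ ω, (1 / Δ0) * ((2 * Z ω - 1) / (Z ω * e (X ω) + (1 - Z ω) * (1 - e (X ω)))
          * (Y ω - (if Z ω = 1 then m1 (X ω) else m0 (X ω))
            - χ0 * (A ω - (if Z ω = 1 then l1 (X ω) else l0 (X ω))))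
        + ((m1 (X ω) - m0 (X ω)) - χ0 * (l1 (X ω) - l0 (X ω)))) ∂P) = 0 := by
  obtain ⟨CY, hYC⟩ := hYb
  have he₁ : ∀ x, e x ∈ Set.Ioc 0 1 := fun x => ⟨hε.trans_le (hebd x).1, by linarith [hebd x]⟩
  have he₀ : ∀ x, 1 - e x ∈ Set.Ioc 0 1 := fun x => ⟨by linarith [hebd x], by linarith [hebd x]⟩
  have hVe' : IsCondExpVersion P X 1 Z e := fun g hg hgb => by
    simpa only [Pi.one_apply, mul_one] using hVe g hg hgb
  have hpos₁ := hVe'.ite_eq_one hZ01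
  have hpos₀ := hVe'.ite_eq_zero hX hZ hZ01 he fun x => Set.Ioc_subset_Icc_self (he₁ x)
  have hZ₁ := measurable_ite_eq_one_zero hZ 1
  have hZ₀ := measurable_ite_eq_one_zero hZ 0
  have hZ₁01 := fun ω => ite_one_zero_mem_Icc (Z ω = 1)
  have hZ₀01 := fun ω => ite_one_zero_mem_Icc (Z ω = 0)
  have hAb : ∀ ω, |A ω| ≤ 1 := fun ω => by rcases hA01 ω with h | h <;> simp [h]
  have hm1X := IsCondExpVersion.memLp_top hm1v hX hZ₁ hZ₁01 he he₁ hpos₁ hY hYC hm1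
  have hm0X := IsCondExpVersion.memLp_top hm0v hX hZ₀ hZ₀01 (he.const_sub 1) he₀ hpos₀ hY hYC hm0
  have hl1X := IsCondExpVersion.memLp_top hl1v hX hZ₁ hZ₁01 he he₁ hpos₁ hA hAb hl1
  have hl0X := IsCondExpVersion.memLp_top hl0v hX hZ₀ hZ₀01 (he.const_sub 1) he₀ hpos₀ hA hAb hl0
  have hYm : MemLp Y ∞ P := memLp_top_of_bound hY.aestronglyMeasurable CY (ae_of_all _ hYC)
  have hAm : MemLp A ∞ P := memLp_top_of_bound hA.aestronglyMeasurable 1 (ae_of_all _ hAb)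
  have hw₁ : ∃ C, ∀ x, |(e x)⁻¹| ≤ C := ⟨ε⁻¹, fun x => by
    rw [abs_inv, abs_of_pos (he₁ x).1]; exact inv_anti₀ hε (hebd x).1⟩
  have hw₀ : ∃ C, ∀ x, |(1 - e x)⁻¹| ≤ C := ⟨ε⁻¹, fun x => by
    rw [abs_inv, abs_of_pos (he₀ x).1]; exact inv_anti₀ hε (by linarith [hebd x])⟩
  have hR₁ : MemLp (fun ω => Y ω - m1 (X ω) - χ0 * (A ω - l1 (X ω))) ∞ P :=
    (hYm.sub hm1X).sub ((hAm.sub hl1X).const_mul χ0)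
  have hR₀ : MemLp (fun ω => Y ω - m0 (X ω) - χ0 * (A ω - l0 (X ω))) ∞ P :=
    (hYm.sub hm0X).sub ((hAm.sub hl0X).const_mul χ0)
  subst hχ0 hΓ0 hΔ0
  refine (integral_congr_ae (ae_of_all _ fun ω => ?_)).trans
    (integral_ratio_correction_eq_zero
      (integrable_mul_mul_of_memLp_top (memLp_top_of_mem_Icc hZ₁ hZ₁01) hR₁
        (memLp_top_comp hX he.inv hw₁))
      (integrable_mul_mul_of_memLp_top (memLp_top_of_mem_Icc hZ₀ hZ₀01) hR₀
        (memLp_top_comp hX (he.const_sub 1).inv hw₀))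
      ((hm1X.integrable le_top).sub' (hm0X.integrable le_top))
      ((hl1X.integrable le_top).sub' (hl0X.integrable le_top))
      (IsCondExpVersion.integral_residual_mul_eq_zero hm1v hl1v hX hZ₁ hZ₁01 hYm hAm hm1X hl1X _
        he.inv hw₁)
      (IsCondExpVersion.integral_residual_mul_eq_zero hm0v hl0v hX hZ₀ hZ₀01 hYm hAm hm0X hl0X _
        (he.const_sub 1).inv hw₀)
      hΔ0ne)
  rw [ipw_residual_eq (hZ01 ω)]
  rfl

/-- Lemma 3: the influence function of the ratio parameter χ0 = Γ0/Δ0 has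
mean zero: with γ0 = m1 − m0, δ0 = ℓ1 − ℓ0, Γ0 = E[γ0(X)], Δ0 = E[δ0(X)] ≠ 0 and
χ0 = Γ0/Δ0,
E[(1/Δ0)·((2Z−1)/π0(X,Z)·(Y − m_Z(X) − χ0·(A − ℓ_Z(X))) + γ0(X) − χ0·δ0(X))] = 0. -/
theorem stmt_12
    {Ω : Type*} [MeasurableSpace Ω] (P : Measure Ω) [IsProbabilityMeasure P]
    {S : Type*} [mS : MeasurableSpace S]
    (X : Ω → S) (hX : Measurable X)
    (Z A Y : Ω → ℝ) (hZ : Measurable Z) (hA : Measurable A) (hY : Measurable Y)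
    (hZ01 : ∀ ω, Z ω = 0 ∨ Z ω = 1)
    (hA01 : ∀ ω, A ω = 0 ∨ A ω = 1)
    (hYb : ∃ C, ∀ ω, |Y ω| ≤ C)
    (e : S → ℝ) (he : Measurable e) (ε : ℝ) (hε : 0 < ε) (hε2 : ε < 1/2)
    (hebd : ∀ x, ε ≤ e x ∧ e x ≤ 1 - ε)
    (hVe : ∀ g : S → ℝ, Measurable g → (∃ C, ∀ x, |g x| ≤ C) →
      ∫ ω, Z ω * g (X ω) ∂P = ∫ ω, e (X ω) * g (X ω) ∂P)
    (m0 m1 l0 l1 : S → ℝ)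
    (hm0 : Measurable m0) (hm1 : Measurable m1)
    (hl0 : Measurable l0) (hl1 : Measurable l1)
    (hm0v : ∀ g : S → ℝ, Measurable g → (∃ C, ∀ x, |g x| ≤ C) →
      ∫ ω, Y ω * (if Z ω = 0 then (1:ℝ) else 0) * g (X ω) ∂P
        = ∫ ω, m0 (X ω) * (if Z ω = 0 then (1:ℝ) else 0) * g (X ω) ∂P)
    (hm1v : ∀ g : S → ℝ, Measurable g → (∃ C, ∀ x, |g x| ≤ C) →
      ∫ ω, Y ω * (if Z ω = 1 then (1:ℝ) else 0) * g (X ω) ∂P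
        = ∫ ω, m1 (X ω) * (if Z ω = 1 then (1:ℝ) else 0) * g (X ω) ∂P)
    (hl0v : ∀ g : S → ℝ, Measurable g → (∃ C, ∀ x, |g x| ≤ C) →
      ∫ ω, A ω * (if Z ω = 0 then (1:ℝ) else 0) * g (X ω) ∂P
        = ∫ ω, l0 (X ω) * (if Z ω = 0 then (1:ℝ) else 0) * g (X ω) ∂P)
    (hl1v : ∀ g : S → ℝ, Measurable g → (∃ C, ∀ x, |g x| ≤ C) →
      ∫ ω, A ω * (if Z ω = 1 then (1:ℝ) else 0) * g (X ω) ∂P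
        = ∫ ω, l1 (X ω) * (if Z ω = 1 then (1:ℝ) else 0) * g (X ω) ∂P)
    (Γ0 Δ0 χ0 : ℝ)
    (hΓ0 : Γ0 = ∫ ω, m1 (X ω) - m0 (X ω) ∂P)
    (hΔ0 : Δ0 = ∫ ω, l1 (X ω) - l0 (X ω) ∂P)
    (hΔ0ne : Δ0 ≠ 0)
    (hχ0 : χ0 = Γ0 / Δ0) :
    (∫ ω, (1 / Δ0) * ((2 * Z ω - 1) / (Z ω * e (X ω) + (1 - Z ω) * (1 - e (X ω)))
          * (Y ω - (if Z ω = 1 then m1 (X ω) else m0 (X ω))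
            - χ0 * (A ω - (if Z ω = 1 then l1 (X ω) else l0 (X ω))))
        + ((m1 (X ω) - m0 (X ω)) - χ0 * (l1 (X ω) - l0 (X ω)))) ∂P) = 0 :=
  stmt_12_general P (mS := mS) X hX Z A Y hZ hA hY hZ01 hA01 hYb e he ε hε hebd hVe m0 m1 l0 l1 hm0
    hm1 hl0 hl1 hm0v hm1v hl0v hl1v Γ0 Δ0 χ0 hΓ0 hΔ0 hΔ0ne hχ0
end

section
/- (Profiling the complier stratum.) Let T be a measurable space, f : S → T measurable, and V := f ∘ X. Under unconfoundedness, positivity, monotonicity, and relevance, for every measurable set T0 ⊆ T: E[(ℓ1(X) − ℓ0(X))·1{V ∈ T0}] = P(A1 > A0 and V ∈ T0), and consequently P(V ∈ T0 | A1 > A0) = E[(ℓ1(X) − ℓ0(X))·1{V ∈ T0}] / E[ℓ1(X) − ℓ0(X)]. The exclusion restriction plays no role in this identity. -/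
open MeasureTheory ProbabilityTheory
open scoped Classical

/-!
Fix one arm of the instrument: `W = Z` (resp. `1 - Z`) with propensity `w = e` (resp. `1 - e`)
and potential treatment `Y = A1` (resp. `A0`). Since `W` is conditionally independent of `Y`
given `X` and `w ≥ ε > 0`, replacing a test function `g` by `g / w` turns the defining identity
`E[W Y g(X)] = E[W ℓ(X) g(X)]` of the regression `ℓ` into `E[Y g(X)] = E[ℓ(X) g(X)]`; at first
only for `g` with `ℓ g` bounded, as `ℓ` need not be integrable. Testing against a bounded `g`
with the sign of the excess of `ℓ` over `[0, 1]` shows `ℓ(X) ∈ [0, 1]` a.s., which lifts that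
restriction. Subtracting the arms, `ℓ₁(X) - ℓ₀(X)` and `A1 - A0` have the same conditional
expectation given `X`, and by monotonicity `A1 - A0` is the indicator of the compliers; the test
functions `1{f ∈ T0}` and `1` give the two identities.
-/

open Set

section

variable {Ω S : Type*} [MeasurableSpace Ω] [MeasurableSpace S]

/-- Weak form of `E[U | X] = E[V | X]`. No integrability is required, so either side may be
Lean's junk value `0` for a non-integrable integrand. -/
def AgreeGiven (P : Measure Ω) (X : Ω → S) (U V : Ω → ℝ) : Prop :=
  ∀ g : S → ℝ, Measurable g → (∃ C, ∀ x, |g x| ≤ C) →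
    ∫ ω, U ω * g (X ω) ∂P = ∫ ω, V ω * g (X ω) ∂P

namespace AgreeGiven

variable {P : Measure Ω} {X : Ω → S} {U V U' V' : Ω → ℝ}

theorem refl (P : Measure Ω) (X : Ω → S) (U : Ω → ℝ) : AgreeGiven P X U U :=
  fun _ _ _ => rfl

theorem congr_ae (h : AgreeGiven P X U V) (hU : U =ᵐ[P] U') (hV : V =ᵐ[P] V') :
    AgreeGiven P X U' V' := by
  intro g hg hgb
  calc ∫ ω, U' ω * g (X ω) ∂P = ∫ ω, U ω * g (X ω) ∂P :=
        integral_congr_ae (hU.mono fun ω h => by simp only [h])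
    _ = ∫ ω, V ω * g (X ω) ∂P := h g hg hgb
    _ = ∫ ω, V' ω * g (X ω) ∂P := integral_congr_ae (hV.mono fun ω h => by simp only [h])

theorem sub (hX : Measurable X) (h : AgreeGiven P X U V) (h' : AgreeGiven P X U' V')
    (hU : Integrable U P) (hV : Integrable V P) (hU' : Integrable U' P) (hV' : Integrable V' P) :
    AgreeGiven P X (fun ω => U ω - U' ω) (fun ω => V ω - V' ω) := by
  rintro g hg ⟨C, hC⟩
  have hgX : AEStronglyMeasurable (fun ω => g (X ω)) P := (hg.comp hX).aestronglyMeasurable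
  have hgC : ∀ᵐ ω ∂P, ‖g (X ω)‖ ≤ C := ae_of_all _ fun ω => hC (X ω)
  simp only [sub_mul]
  rw [integral_sub (hU.mul_bdd hgX hgC) (hU'.mul_bdd hgX hgC),
    integral_sub (hV.mul_bdd hgX hgC) (hV'.mul_bdd hgX hgC), h g hg ⟨C, hC⟩, h' g hg ⟨C, hC⟩]

theorem one_sub_mul {W Y : Ω → ℝ} {w : S → ℝ} (hX : Measurable X)
    (h : AgreeGiven P X (fun ω => W ω * Y ω) fun ω => w (X ω) * Y ω) (hY : Integrable Y P)
    (hWY : Integrable (fun ω => W ω * Y ω) P) (hwY : Integrable (fun ω => w (X ω) * Y ω) P) :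
    AgreeGiven P X (fun ω => (1 - W ω) * Y ω) fun ω => (1 - w (X ω)) * Y ω :=
  ((refl P X Y).sub hX h hY hY hWY hwY).congr_ae (ae_of_all _ fun _ => by ring)
    (ae_of_all _ fun _ => by ring)

theorem of_forall_bdd_comp {α : Type*} [MeasurableSpace α] {R : Ω → α} {W : Ω → ℝ} {w : S → ℝ}
    (h : ∀ ψ : α → ℝ, Measurable ψ → (∃ C, ∀ v, |ψ v| ≤ C) →
      AgreeGiven P X (fun ω => W ω * ψ (R ω)) fun ω => w (X ω) * ψ (R ω))
    {π : α → ℝ} (hπ : Measurable π) (hπ01 : ∀ ω, π (R ω) ∈ Icc 0 1) :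
    AgreeGiven P X (fun ω => W ω * π (R ω)) fun ω => w (X ω) * π (R ω) := by
  have := h (fun v => projIcc (0 : ℝ) 1 zero_le_one (π v))
    (continuous_subtype_val.measurable.comp (continuous_projIcc.measurable.comp hπ))
    ⟨1, fun v => abs_le.2 ⟨by linarith [(projIcc (0 : ℝ) 1 zero_le_one (π v)).2.1],
      (projIcc (0 : ℝ) 1 zero_le_one (π v)).2.2⟩⟩
  simpa only [projIcc_of_mem _ (hπ01 _)] using this

theorem integral_mul_indicator_eq {E : Set Ω} (hE : MeasurableSet E) (hX : Measurable X)
    (h : AgreeGiven P X (E.indicator 1) V) {s : Set S} (hs : MeasurableSet s) :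
    ∫ ω, V ω * s.indicator 1 (X ω) ∂P = (P (E ∩ X ⁻¹' s)).toReal := by
  have h1 : ∀ x, |s.indicator (1 : S → ℝ) x| ≤ 1 := fun x => by
    by_cases hx : x ∈ s <;> simp [hx]
  rw [← h _ (measurable_one.indicator hs) ⟨1, h1⟩, ← measureReal_def,
    ← integral_indicator_one (hE.inter (hX hs)), inter_indicator_one]
  rfl

end AgreeGiven

theorem integrable_of_ae_mem_Icc {P : Measure Ω} [IsFiniteMeasure P] {U : Ω → ℝ}
    (hU : AEStronglyMeasurable U P) (h01 : ∀ᵐ ω ∂P, U ω ∈ Icc 0 1) : Integrable U P :=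
  .of_bound hU 1 (h01.mono fun ω h => by
    rw [Real.norm_eq_abs, abs_le]; constructor <;> linarith [h.1, h.2])

theorem sub_ae_eq_indicator_of_ae_le {P : Measure Ω} {Y₀ Y₁ : Ω → ℝ}
    (h₀ : ∀ ω, Y₀ ω = 0 ∨ Y₀ ω = 1) (h₁ : ∀ ω, Y₁ ω = 0 ∨ Y₁ ω = 1)
    (hle : ∀ᵐ ω ∂P, Y₀ ω ≤ Y₁ ω) :
    (fun ω => Y₁ ω - Y₀ ω) =ᵐ[P] {ω | Y₁ ω = 1 ∧ Y₀ ω = 0}.indicator 1 := by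
  filter_upwards [hle] with ω hω
  rcases h₀ ω with h0 | h0 <;> rcases h₁ ω with h1 | h1 <;> simp [h0, h1] at hω ⊢
  linarith

theorem exists_bdd_weight_pos_off_Icc : ∃ k : ℝ → ℝ, Measurable k ∧ (∀ t, |k t| ≤ 1) ∧
    (∀ t, |t * k t| ≤ 1) ∧ ∀ t, ∀ y ∈ Icc (0 : ℝ) 1,
      0 ≤ (t - y) * k t ∧ (t ∉ Icc (0 : ℝ) 1 → 0 < (t - y) * k t) := by
  refine ⟨fun t => (if t < 0 then -1 else if 1 < t then 1 else 0) / (1 + |t|), ?_, ?_, ?_, ?_⟩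
  · exact (Measurable.ite measurableSet_Iio measurable_const
      (Measurable.ite measurableSet_Ioi measurable_const measurable_const)).div (by fun_prop)
  · intro t
    have : 0 < 1 + |t| := by positivity
    rw [abs_div, abs_of_pos this, div_le_one this]
    split_ifs <;> simp [this.le]
  · intro t
    have : 0 < 1 + |t| := by positivity
    rw [mul_div_assoc', abs_div, abs_of_pos this, div_le_one this, abs_mul]
    split_ifs <;> simp [this.le]
  · rintro t y ⟨hy0, hy1⟩
    have hd : 0 < 1 + |t| := by positivity
    rw [mul_div_assoc']
    split_ifs with h0 h1
    · exact ⟨by apply div_nonneg <;> linarith, fun _ => by apply div_pos <;> linarith⟩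
    · exact ⟨by apply div_nonneg <;> linarith, fun _ => by apply div_pos <;> linarith⟩
    · exact ⟨by simp, fun h => absurd ⟨not_lt.1 h0, not_lt.1 h1⟩ h⟩

section Regression

variable {P : Measure Ω} {X : Ω → S} {Y : Ω → ℝ} {ℓ : S → ℝ}

theorem ae_mem_Icc_of_integral_eq [IsFiniteMeasure P] (hX : Measurable X) (hY : Measurable Y)
    (hY01 : ∀ ω, Y ω ∈ Icc 0 1) (hℓ : Measurable ℓ)
    (h : ∀ g : S → ℝ, Measurable g → (∃ C, ∀ x, |g x| ≤ C) → (∃ C, ∀ x, |ℓ x * g x| ≤ C) →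
      ∫ ω, Y ω * g (X ω) ∂P = ∫ ω, ℓ (X ω) * g (X ω) ∂P) :
    ∀ᵐ ω ∂P, ℓ (X ω) ∈ Icc 0 1 := by
  obtain ⟨k, hk, hk1, htk1, hpos⟩ := exists_bdd_weight_pos_off_Icc
  have hkX : Measurable fun ω => k (ℓ (X ω)) := hk.comp (hℓ.comp hX)
  have hℓk : Integrable (fun ω => ℓ (X ω) * k (ℓ (X ω))) P :=
    .of_bound ((hℓ.comp hX).mul hkX).aestronglyMeasurable 1 (ae_of_all _ fun ω => htk1 _)
  have hYk : Integrable (fun ω => Y ω * k (ℓ (X ω))) P :=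
    .of_bound (hY.mul hkX).aestronglyMeasurable 1 (ae_of_all _ fun ω => by
      rw [Real.norm_eq_abs, abs_mul]
      exact mul_le_one₀ (abs_le.2 ⟨by linarith [(hY01 ω).1], (hY01 ω).2⟩) (abs_nonneg _) (hk1 _))
  have hzero : ∫ ω, (ℓ (X ω) - Y ω) * k (ℓ (X ω)) ∂P = 0 := by
    simp only [sub_mul]
    rw [integral_sub hℓk hYk]
    exact sub_eq_zero.2 (h (k ∘ ℓ) (hk.comp hℓ) ⟨1, fun _ => hk1 _⟩ ⟨1, fun _ => htk1 _⟩).symm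
  have hae := (integral_eq_zero_iff_of_nonneg (fun ω => (hpos _ _ (hY01 ω)).1)
    (by simpa only [sub_mul] using hℓk.sub' hYk)).1 hzero
  filter_upwards [hae] with ω hω
  by_contra hout
  exact (hpos _ _ (hY01 ω)).2 hout |>.ne' hω

theorem agreeGiven_of_integral_eq (hℓ : Measurable ℓ) (hℓ01 : ∀ᵐ ω ∂P, ℓ (X ω) ∈ Icc 0 1)
    (h : ∀ g : S → ℝ, Measurable g → (∃ C, ∀ x, |g x| ≤ C) → (∃ C, ∀ x, |ℓ x * g x| ≤ C) →
      ∫ ω, Y ω * g (X ω) ∂P = ∫ ω, ℓ (X ω) * g (X ω) ∂P) :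
    AgreeGiven P X Y fun ω => ℓ (X ω) := by
  rintro g hg ⟨C, hC⟩
  set g' := (ℓ ⁻¹' Icc 0 1).indicator g with hg'_def
  have hg' : (fun ω => g' (X ω)) =ᵐ[P] fun ω => g (X ω) :=
    hℓ01.mono fun ω hω => indicator_of_mem (s := ℓ ⁻¹' Icc 0 1) hω g
  have hg'C : ∀ x, |g' x| ≤ C := fun x => by
    by_cases hx : x ∈ ℓ ⁻¹' Icc 0 1
    · rw [hg'_def, indicator_of_mem hx]; exact hC x
    · rw [hg'_def, indicator_of_notMem hx, abs_zero]; exact (abs_nonneg _).trans (hC x)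
  have hℓg'C : ∀ x, |ℓ x * g' x| ≤ C := fun x => by
    by_cases hx : x ∈ ℓ ⁻¹' Icc 0 1
    · rw [abs_mul]
      exact mul_le_of_le_one_left (abs_nonneg _) (abs_le.2 ⟨by linarith [hx.1], hx.2⟩)
        |>.trans (hg'C x)
    · rw [hg'_def, indicator_of_notMem hx, mul_zero, abs_zero]; exact (abs_nonneg _).trans (hC x)
  calc ∫ ω, Y ω * g (X ω) ∂P = ∫ ω, Y ω * g' (X ω) ∂P :=
        integral_congr_ae (hg'.mono fun ω h => by simp only [h])
    _ = ∫ ω, ℓ (X ω) * g' (X ω) ∂P :=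
        h g' (hg.indicator (hℓ measurableSet_Icc)) ⟨C, hg'C⟩ ⟨C, hℓg'C⟩
    _ = ∫ ω, ℓ (X ω) * g (X ω) ∂P := integral_congr_ae (hg'.mono fun ω h => by simp only [h])

theorem integral_eq_of_ignorable_selection {W : Ω → ℝ} {w : S → ℝ} {ε : ℝ} (hℓ : Measurable ℓ)
    (hw : Measurable w) (hε : 0 < ε) (hwε : ∀ x, ε ≤ w x)
    (hW : AgreeGiven P X W fun ω => w (X ω))
    (hWY : AgreeGiven P X (fun ω => W ω * Y ω) fun ω => w (X ω) * Y ω)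
    (hWℓ : AgreeGiven P X (fun ω => W ω * Y ω) fun ω => W ω * ℓ (X ω))
    (g : S → ℝ) (hg : Measurable g) (hgC : ∃ C, ∀ x, |g x| ≤ C)
    (hℓgC : ∃ C, ∀ x, |ℓ x * g x| ≤ C) :
    ∫ ω, Y ω * g (X ω) ∂P = ∫ ω, ℓ (X ω) * g (X ω) ∂P := by
  have hw0 : ∀ x, w x ≠ 0 := fun x => (hε.trans_le (hwε x)).ne'
  have hdiv : ∀ u : S → ℝ, (∃ C, ∀ x, |u x| ≤ C) → ∃ C, ∀ x, |u x / w x| ≤ C := by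
    rintro u ⟨C, hC⟩
    refine ⟨C / ε, fun x => ?_⟩
    rw [abs_div, abs_of_pos (hε.trans_le (hwε x))]
    exact div_le_div₀ ((abs_nonneg _).trans (hC x)) (hC x) hε (hwε x)
  calc ∫ ω, Y ω * g (X ω) ∂P = ∫ ω, w (X ω) * Y ω * (g (X ω) / w (X ω)) ∂P := by
        congr with ω; field_simp [hw0 (X ω)]
    _ = ∫ ω, W ω * Y ω * (g (X ω) / w (X ω)) ∂P := (hWY _ (hg.div hw) (hdiv g hgC)).symm
    _ = ∫ ω, W ω * ℓ (X ω) * (g (X ω) / w (X ω)) ∂P := hWℓ _ (hg.div hw) (hdiv g hgC)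
    _ = ∫ ω, W ω * (ℓ (X ω) * g (X ω) / w (X ω)) ∂P := by congr with ω; ring
    _ = ∫ ω, w (X ω) * (ℓ (X ω) * g (X ω) / w (X ω)) ∂P :=
        hW _ ((hℓ.mul hg).div hw) (hdiv _ hℓgC)
    _ = ∫ ω, ℓ (X ω) * g (X ω) ∂P := by congr with ω; field_simp [hw0 (X ω)]

theorem agreeGiven_of_ignorable_selection [IsFiniteMeasure P] {W : Ω → ℝ} {w : S → ℝ} {ε : ℝ}
    (hX : Measurable X) (hY : Measurable Y) (hY01 : ∀ ω, Y ω ∈ Icc 0 1) (hℓ : Measurable ℓ)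
    (hw : Measurable w) (hε : 0 < ε) (hwε : ∀ x, ε ≤ w x)
    (hW : AgreeGiven P X W fun ω => w (X ω))
    (hWY : AgreeGiven P X (fun ω => W ω * Y ω) fun ω => w (X ω) * Y ω)
    (hWℓ : AgreeGiven P X (fun ω => W ω * Y ω) fun ω => W ω * ℓ (X ω)) :
    (∀ᵐ ω ∂P, ℓ (X ω) ∈ Icc 0 1) ∧ AgreeGiven P X Y fun ω => ℓ (X ω) := by
  have h := integral_eq_of_ignorable_selection hℓ hw hε hwε hW hWY hWℓ
  have hℓ01 := ae_mem_Icc_of_integral_eq hX hY hY01 hℓ h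
  exact ⟨hℓ01, agreeGiven_of_integral_eq hℓ hℓ01 h⟩

end Regression

end

theorem stmt_13_general
    {Ω : Type*} [MeasurableSpace Ω] (P : Measure Ω) [IsProbabilityMeasure P]
    {S : Type*} [mS : MeasurableSpace S]
    {T : Type*} [mT : MeasurableSpace T]
    (X : Ω → S) (hX : Measurable X)
    (f : S → T) (hf : Measurable f)
    (Z A0 A1 : Ω → ℝ)
    (hZ : Measurable Z) (hA0 : Measurable A0) (hA1 : Measurable A1)
    (hZ01 : ∀ ω, Z ω = 0 ∨ Z ω = 1)
    (hA0_01 : ∀ ω, A0 ω = 0 ∨ A0 ω = 1)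
    (hA1_01 : ∀ ω, A1 ω = 0 ∨ A1 ω = 1)
    (A : Ω → ℝ) (hA : A = fun ω => (1 - Z ω) * A0 ω + Z ω * A1 ω)
    (e : S → ℝ) (he : Measurable e) (ε : ℝ) (hε : 0 < ε)
    (hebd : ∀ x, ε ≤ e x ∧ e x ≤ 1 - ε)
    (hVe : ∀ g : S → ℝ, Measurable g → (∃ C, ∀ x, |g x| ≤ C) →
      ∫ ω, Z ω * g (X ω) ∂P = ∫ ω, e (X ω) * g (X ω) ∂P)
    -- unconfoundedness: Z ⫫ (A0, A1) | σ(X)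
    (hUnconf : ∀ ψ : ℝ × ℝ → ℝ, Measurable ψ → (∃ C, ∀ v, |ψ v| ≤ C) →
      ∀ g : S → ℝ, Measurable g → (∃ C, ∀ x, |g x| ≤ C) →
      ∫ ω, Z ω * ψ (A0 ω, A1 ω) * g (X ω) ∂P
        = ∫ ω, e (X ω) * ψ (A0 ω, A1 ω) * g (X ω) ∂P)
    (l0 l1 : S → ℝ) (hl0 : Measurable l0) (hl1 : Measurable l1)
    (hl0v : ∀ g : S → ℝ, Measurable g → (∃ C, ∀ x, |g x| ≤ C) →
      ∫ ω, A ω * (if Z ω = 0 then (1:ℝ) else 0) * g (X ω) ∂P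
        = ∫ ω, l0 (X ω) * (if Z ω = 0 then (1:ℝ) else 0) * g (X ω) ∂P)
    (hl1v : ∀ g : S → ℝ, Measurable g → (∃ C, ∀ x, |g x| ≤ C) →
      ∫ ω, A ω * (if Z ω = 1 then (1:ℝ) else 0) * g (X ω) ∂P
        = ∫ ω, l1 (X ω) * (if Z ω = 1 then (1:ℝ) else 0) * g (X ω) ∂P)
    (hMono : P {ω | A0 ω ≤ A1 ω} = 1) :
    ∀ T0 : Set T, MeasurableSet T0 →
      (∫ ω, (l1 (X ω) - l0 (X ω)) * (if f (X ω) ∈ T0 then (1:ℝ) else 0) ∂P)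
        = (P ({ω | A1 ω = 1 ∧ A0 ω = 0} ∩ {ω | f (X ω) ∈ T0})).toReal
      ∧ (P ({ω | A1 ω = 1 ∧ A0 ω = 0} ∩ {ω | f (X ω) ∈ T0})).toReal
          / (P {ω | A1 ω = 1 ∧ A0 ω = 0}).toReal
        = (∫ ω, (l1 (X ω) - l0 (X ω)) * (if f (X ω) ∈ T0 then (1:ℝ) else 0) ∂P)
          / (∫ ω, (l1 (X ω) - l0 (X ω)) ∂P) := by
  intro T0 hT0
  have h01 : ∀ {U : Ω → ℝ}, (∀ ω, U ω = 0 ∨ U ω = 1) → ∀ ω, U ω ∈ Icc (0 : ℝ) 1 := by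
    intro U hU ω; rcases hU ω with h | h <;> simp [h]
  have hint : ∀ {U : Ω → ℝ}, Measurable U → (∀ᵐ ω ∂P, U ω ∈ Icc (0 : ℝ) 1) → Integrable U P :=
    fun hU h => integrable_of_ae_mem_Icc hU.aestronglyMeasurable h
  have he01 : ∀ x, e x ∈ Icc (0 : ℝ) 1 := fun x =>
    ⟨by linarith [(hebd x).1], by linarith [(hebd x).2]⟩
  have hZA1 := AgreeGiven.of_forall_bdd_comp hUnconf measurable_snd (h01 hA1_01)
  have hZA0 := AgreeGiven.of_forall_bdd_comp hUnconf measurable_fst (h01 hA0_01)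
  obtain ⟨hl1_01, hA1l1⟩ := agreeGiven_of_ignorable_selection hX hA1 (h01 hA1_01) hl1 he hε
    (fun x => (hebd x).1) hVe hZA1
    ((show AgreeGiven P X _ _ from hl1v).congr_ae
      (ae_of_all _ fun ω => by rcases hZ01 ω with h | h <;> simp [hA, h])
      (ae_of_all _ fun ω => by rcases hZ01 ω with h | h <;> simp [h]))
  have hZ0 : AgreeGiven P X (fun ω => 1 - Z ω) fun ω => 1 - e (X ω) :=
    (AgreeGiven.refl P X 1).sub hX hVe (integrable_const 1) (integrable_const 1)
      (hint hZ (.of_forall (h01 hZ01))) (hint (he.comp hX) (.of_forall fun ω => he01 (X ω)))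
  have hZ0A0 := hZA0.one_sub_mul hX (hint hA0 (.of_forall (h01 hA0_01)))
    (hint (hZ.mul hA0) (.of_forall fun ω => unitInterval.mul_mem (h01 hZ01 ω) (h01 hA0_01 ω)))
    (hint ((he.comp hX).mul hA0) (.of_forall fun ω => unitInterval.mul_mem (he01 _) (h01 hA0_01 ω)))
  obtain ⟨hl0_01, hA0l0⟩ := agreeGiven_of_ignorable_selection hX hA0 (h01 hA0_01) hl0
    (w := fun x => 1 - e x) (measurable_const.sub he) hε (fun x => by linarith [(hebd x).2])
    hZ0 hZ0A0
    ((show AgreeGiven P X _ _ from hl0v).congr_ae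
      (ae_of_all _ fun ω => by rcases hZ01 ω with h | h <;> simp [hA, h])
      (ae_of_all _ fun ω => by rcases hZ01 ω with h | h <;> simp [h]))
  have hmono : ∀ᵐ ω ∂P, A0 ω ≤ A1 ω :=
    (ae_iff_measure_eq (measurableSet_le hA0 hA1).nullMeasurableSet).2 (by rw [hMono, measure_univ])
  have hcomplier := (hA1l1.sub hX hA0l0 (hint hA1 (.of_forall (h01 hA1_01)))
    (hint (hl1.comp hX) hl1_01) (hint hA0 (.of_forall (h01 hA0_01)))
    (hint (hl0.comp hX) hl0_01)).congr_ae
    (sub_ae_eq_indicator_of_ae_le hA0_01 hA1_01 hmono) Filter.EventuallyEq.rfl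
  have hE : MeasurableSet {ω | A1 ω = 1 ∧ A0 ω = 0} :=
    (hA1 (measurableSet_singleton 1)).inter (hA0 (measurableSet_singleton 0))
  have hT := hcomplier.integral_mul_indicator_eq hE hX (hf hT0)
  have hU := hcomplier.integral_mul_indicator_eq hE hX MeasurableSet.univ
  simp only [indicator_apply, mem_preimage, Pi.one_apply] at hT
  simp only [indicator_univ, Pi.one_apply, mul_one, preimage_univ, inter_univ] at hU
  exact ⟨hT, by rw [hT, hU]; rfl⟩

/-- profiling the complier stratum: under unconfoundedness, positivity,
monotonicity and relevance, for V := f ∘ X and every measurable T0,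
E[(ℓ1(X) − ℓ0(X))·1{V ∈ T0}] = P(A1 > A0, V ∈ T0), and
P(V ∈ T0 | A1 > A0) = E[(ℓ1(X) − ℓ0(X))·1{V ∈ T0}] / E[ℓ1(X) − ℓ0(X)]. -/
theorem stmt_13
    {Ω : Type*} [MeasurableSpace Ω] (P : Measure Ω) [IsProbabilityMeasure P]
    {S : Type*} [mS : MeasurableSpace S]
    {T : Type*} [mT : MeasurableSpace T]
    (X : Ω → S) (hX : Measurable X)
    (f : S → T) (hf : Measurable f)
    (Z A0 A1 : Ω → ℝ)
    (hZ : Measurable Z) (hA0 : Measurable A0) (hA1 : Measurable A1)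
    (hZ01 : ∀ ω, Z ω = 0 ∨ Z ω = 1)
    (hA0_01 : ∀ ω, A0 ω = 0 ∨ A0 ω = 1)
    (hA1_01 : ∀ ω, A1 ω = 0 ∨ A1 ω = 1)
    (A : Ω → ℝ) (hA : A = fun ω => (1 - Z ω) * A0 ω + Z ω * A1 ω)
    (e : S → ℝ) (he : Measurable e) (ε : ℝ) (hε : 0 < ε) (hε2 : ε < 1/2)
    (hebd : ∀ x, ε ≤ e x ∧ e x ≤ 1 - ε)
    (hVe : ∀ g : S → ℝ, Measurable g → (∃ C, ∀ x, |g x| ≤ C) →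
      ∫ ω, Z ω * g (X ω) ∂P = ∫ ω, e (X ω) * g (X ω) ∂P)
    -- unconfoundedness: Z ⫫ (A0, A1) | σ(X)
    (hUnconf : ∀ ψ : ℝ × ℝ → ℝ, Measurable ψ → (∃ C, ∀ v, |ψ v| ≤ C) →
      ∀ g : S → ℝ, Measurable g → (∃ C, ∀ x, |g x| ≤ C) →
      ∫ ω, Z ω * ψ (A0 ω, A1 ω) * g (X ω) ∂P
        = ∫ ω, e (X ω) * ψ (A0 ω, A1 ω) * g (X ω) ∂P)
    (l0 l1 : S → ℝ) (hl0 : Measurable l0) (hl1 : Measurable l1)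
    (hl0v : ∀ g : S → ℝ, Measurable g → (∃ C, ∀ x, |g x| ≤ C) →
      ∫ ω, A ω * (if Z ω = 0 then (1:ℝ) else 0) * g (X ω) ∂P
        = ∫ ω, l0 (X ω) * (if Z ω = 0 then (1:ℝ) else 0) * g (X ω) ∂P)
    (hl1v : ∀ g : S → ℝ, Measurable g → (∃ C, ∀ x, |g x| ≤ C) →
      ∫ ω, A ω * (if Z ω = 1 then (1:ℝ) else 0) * g (X ω) ∂P
        = ∫ ω, l1 (X ω) * (if Z ω = 1 then (1:ℝ) else 0) * g (X ω) ∂P)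
    (hMono : P {ω | A0 ω ≤ A1 ω} = 1)
    (hRel : 0 < P {ω | A1 ω ≠ A0 ω}) :
    ∀ T0 : Set T, MeasurableSet T0 →
      (∫ ω, (l1 (X ω) - l0 (X ω)) * (if f (X ω) ∈ T0 then (1:ℝ) else 0) ∂P)
        = (P ({ω | A1 ω = 1 ∧ A0 ω = 0} ∩ {ω | f (X ω) ∈ T0})).toReal
      ∧ (P ({ω | A1 ω = 1 ∧ A0 ω = 0} ∩ {ω | f (X ω) ∈ T0})).toReal
          / (P {ω | A1 ω = 1 ∧ A0 ω = 0}).toReal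
        = (∫ ω, (l1 (X ω) - l0 (X ω)) * (if f (X ω) ∈ T0 then (1:ℝ) else 0) ∂P)
          / (∫ ω, (l1 (X ω) - l0 (X ω)) ∂P) :=
  stmt_13_general P (mS := mS) (mT := mT) X hX f hf Z A0 A1 hZ hA0 hA1 hZ01 hA0_01 hA1_01 A hA e he
    ε hε hebd hVe hUnconf l0 l1 hl0 hl1 hl0v hl1v hMono
end

section
/- (Profiling the always-taker stratum.) Let T be a measurable space, f : S → T measurable, and V := f ∘ X. Under unconfoundedness, positivity, and monotonicity, and assuming P(A0 = 1) > 0, for every measurable set T0 ⊆ T: E[ℓ0(X)·1{V ∈ T0}] = P(A1 = A0 = 1 and V ∈ T0), and consequently P(V ∈ T0 | A1 = A0 = 1) = E[ℓ0(X)·1{V ∈ T0}] / E[ℓ0(X)]. (Under monotonicity the always-taker event {A1 = A0 = 1} coincides almost surely with {A0 = 1}.) -/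
/-!
Testing the defining identity of `ℓ₀` against the bounded function `(ℓ₀ - clamp ℓ₀) / (1 + ℓ₀²)`
of `X` shows that `ℓ₀(X) ∈ [0, 1]` on `{Z = 0}`, and positivity (`e < 1`) spreads this to almost
all of `Ω`. With `ℓ₀(X)` bounded, dividing a bounded `g` by `1 - e` turns the `(1 - Z)`-weighted
identity `E[A₀ (1 - Z) g(X)] = E[ℓ₀(X) (1 - Z) g(X)]` into `E[ℓ₀(X) g(X)] = E[A₀ g(X)]`, because
`Z` may be replaced by `e(X)` against bounded functions of `X` (propensity score) and against `A₀`
times those (unconfoundedness). For `g = 1{f ∈ T₀}` this is `P(A₀ = 1, V ∈ T₀)`, and monotonicity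
makes `{A₀ = 1}` and the always-takers `{A₁ = A₀ = 1}` agree up to a null set.
-/

open MeasureTheory ProbabilityTheory Set
open scoped Classical

noncomputable def unitClamp (t : ℝ) : ℝ := max 0 (min t 1)

lemma unitClamp_of_mem {t : ℝ} (ht : t ∈ Icc 0 1) : unitClamp t = t := by
  rw [unitClamp, min_eq_left ht.2, max_eq_right ht.1]

lemma unitClamp_of_nonpos {t : ℝ} (ht : t ≤ 0) : unitClamp t = 0 := by
  rw [unitClamp, min_eq_left (by linarith), max_eq_left ht]

lemma unitClamp_of_one_le {t : ℝ} (ht : 1 ≤ t) : unitClamp t = 1 := by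
  rw [unitClamp, min_eq_right ht, max_eq_right zero_le_one]

lemma abs_unitClamp_le_one (t : ℝ) : |unitClamp t| ≤ 1 := by
  rw [unitClamp, abs_of_nonneg (le_max_left _ _)]
  exact max_le zero_le_one (min_le_right _ _)

@[fun_prop]
lemma measurable_unitClamp : Measurable unitClamp := by
  unfold unitClamp; fun_prop

lemma abs_sub_unitClamp_le (t : ℝ) : |t - unitClamp t| ≤ |t| := by
  rcases le_total t 0 with h | h
  · rw [unitClamp_of_nonpos h, sub_zero]
  rcases le_total t 1 with h' | h'
  · rw [unitClamp_of_mem ⟨h, h'⟩, sub_self, abs_zero]; exact abs_nonneg t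
  · rw [unitClamp_of_one_le h', abs_of_nonneg (by linarith), abs_of_nonneg h]; linarith

lemma sub_mul_sub_unitClamp_pos {t w : ℝ} (hw : w ∈ Icc 0 1) (ht : t ∉ Icc 0 1) :
    0 < (t - w) * (t - unitClamp t) := by
  rcases lt_or_ge t 0 with h | h
  · rw [unitClamp_of_nonpos h.le]; nlinarith [hw.1]
  · have h' : 1 < t := lt_of_not_ge fun h' => ht ⟨h, h'⟩
    rw [unitClamp_of_one_le h'.le]; nlinarith [hw.2]

/-- The denominator keeps `t * clampWeight t` bounded too, so `clampWeight ∘ l` is an admissible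
test function even when nothing is known about the integrability of `l ∘ X`. -/
noncomputable def clampWeight (t : ℝ) : ℝ := (t - unitClamp t) / (1 + t ^ 2)

@[fun_prop]
lemma measurable_clampWeight : Measurable clampWeight := by
  unfold clampWeight; fun_prop

lemma abs_clampWeight_le_one (t : ℝ) : |clampWeight t| ≤ 1 := by
  have hpos : (0 : ℝ) < 1 + t ^ 2 := by positivity
  rw [clampWeight, abs_div, abs_of_pos hpos, div_le_one hpos]
  nlinarith [abs_sub_unitClamp_le t, sq_abs t, sq_nonneg (|t| - 1)]

lemma abs_mul_clampWeight_le_one (t : ℝ) : |t * clampWeight t| ≤ 1 := by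
  have hpos : (0 : ℝ) < 1 + t ^ 2 := by positivity
  rw [clampWeight, mul_div_assoc', abs_div, abs_of_pos hpos, div_le_one hpos, abs_mul]
  nlinarith [mul_le_mul_of_nonneg_left (abs_sub_unitClamp_le t) (abs_nonneg t), sq_abs t]

lemma sub_mul_clampWeight_nonneg {t w : ℝ} (hw : w ∈ Icc 0 1) : 0 ≤ (t - w) * clampWeight t := by
  rw [clampWeight, mul_div_assoc']
  by_cases ht : t ∈ Icc 0 1
  · rw [unitClamp_of_mem ht, sub_self, mul_zero, zero_div]
  · exact (div_pos (sub_mul_sub_unitClamp_pos hw ht) (by positivity)).le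

lemma mem_Icc_of_sub_mul_clampWeight_eq_zero {t w : ℝ} (hw : w ∈ Icc 0 1)
    (h : (t - w) * clampWeight t = 0) : t ∈ Icc 0 1 := by
  by_contra ht
  rw [clampWeight, mul_div_assoc'] at h
  exact (div_pos (sub_mul_sub_unitClamp_pos hw ht) (by positivity)).ne' h

lemma exists_abs_mul_le {α : Type*} {f g : α → ℝ} (hf : ∃ C, ∀ x, |f x| ≤ C)
    (hg : ∃ C, ∀ x, |g x| ≤ C) : ∃ C, ∀ x, |f x * g x| ≤ C := by
  obtain ⟨C, hC⟩ := hf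
  obtain ⟨D, hD⟩ := hg
  refine ⟨C * D, fun x => ?_⟩
  rw [abs_mul]
  exact mul_le_mul (hC x) (hD x) (abs_nonneg _) ((abs_nonneg _).trans (hC x))

lemma abs_indicator_one_le_one {α : Type*} (s : Set α) (x : α) :
    |s.indicator (1 : α → ℝ) x| ≤ 1 := by
  by_cases hx : x ∈ s <;> simp [hx]

lemma abs_le_one_of_eq_zero_or_eq_one {t : ℝ} (ht : t = 0 ∨ t = 1) : |t| ≤ 1 := by
  rcases ht with rfl | rfl <;> simp

lemma abs_le_one_of_mem_Icc {t : ℝ} (ht : t ∈ Icc 0 1) : |t| ≤ 1 :=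
  abs_le.mpr ⟨by linarith [ht.1], ht.2⟩

section

variable {Ω : Type*} [MeasurableSpace Ω] {P : Measure Ω}
  {S : Type*} [MeasurableSpace S] {X : Ω → S} {Z : Ω → ℝ} {e : S → ℝ}

lemma integral_mul_ite_eq_measureReal_inter {W : Ω → ℝ} (hW : Measurable W)
    (hW01 : ∀ ω, W ω = 0 ∨ W ω = 1) {s : Set Ω} (hs : MeasurableSet s) :
    ∫ ω, W ω * (if ω ∈ s then 1 else 0) ∂P = P.real ({ω | W ω = 1} ∩ s) := by
  rw [← integral_indicator_one ((measurableSet_eq_fun hW measurable_const).inter hs)]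
  congr with ω
  by_cases hω : ω ∈ s <;> rcases hW01 ω with h | h <;> simp [hω, h]

lemma setOf_and_ae_eq_of_le [IsProbabilityMeasure P] {A0 A1 : Ω → ℝ} (hA0 : Measurable A0)
    (hA1 : Measurable A1) (hA1_01 : ∀ ω, A1 ω = 0 ∨ A1 ω = 1) (hMono : P {ω | A0 ω ≤ A1 ω} = 1) :
    {ω | A1 ω = 1 ∧ A0 ω = 1} =ᵐ[P] {ω | A0 ω = 1} := by
  have hle : ∀ᵐ ω ∂P, A0 ω ≤ A1 ω :=
    mem_ae_iff.mpr ((prob_compl_eq_zero_iff (measurableSet_le hA0 hA1)).mpr hMono)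
  filter_upwards [hle] with ω hω
  refine propext ⟨And.right, fun (h0 : A0 ω = 1) => ⟨?_, h0⟩⟩
  rcases hA1_01 ω with h | h
  · linarith
  · exact h

lemma integral_mul_mul_comp_eq_of_unconfounded {A0 A1 : Ω → ℝ} (hA0 : ∀ ω, A0 ω ∈ Icc 0 1)
    (hUnconf : ∀ ψ : ℝ × ℝ → ℝ, Measurable ψ → (∃ C, ∀ v, |ψ v| ≤ C) →
      ∀ g : S → ℝ, Measurable g → (∃ C, ∀ x, |g x| ≤ C) →
      ∫ ω, Z ω * ψ (A0 ω, A1 ω) * g (X ω) ∂P = ∫ ω, e (X ω) * ψ (A0 ω, A1 ω) * g (X ω) ∂P)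
    {g : S → ℝ} (hg : Measurable g) (hgb : ∃ C, ∀ x, |g x| ≤ C) :
    ∫ ω, Z ω * A0 ω * g (X ω) ∂P = ∫ ω, e (X ω) * A0 ω * g (X ω) ∂P := by
  have hA0_eq : ∀ ω, unitClamp (A0 ω) = A0 ω := fun ω => unitClamp_of_mem (hA0 ω)
  simpa only [hA0_eq] using hUnconf (fun v => unitClamp v.1) (by fun_prop)
    ⟨1, fun v => abs_unitClamp_le_one _⟩ g hg hgb

lemma integral_mul_one_sub_mul_comp_eq_of_observed {A A0 A1 : Ω → ℝ} {l : S → ℝ}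
    (hZ01 : ∀ ω, Z ω = 0 ∨ Z ω = 1) (hA : A = fun ω => (1 - Z ω) * A0 ω + Z ω * A1 ω)
    (hl : ∀ g : S → ℝ, Measurable g → (∃ C, ∀ x, |g x| ≤ C) →
      ∫ ω, A ω * (if Z ω = 0 then (1:ℝ) else 0) * g (X ω) ∂P
        = ∫ ω, l (X ω) * (if Z ω = 0 then (1:ℝ) else 0) * g (X ω) ∂P)
    {g : S → ℝ} (hg : Measurable g) (hgb : ∃ C, ∀ x, |g x| ≤ C) :
    ∫ ω, A0 ω * (1 - Z ω) * g (X ω) ∂P = ∫ ω, l (X ω) * (1 - Z ω) * g (X ω) ∂P := by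
  have hite : ∀ ω, (if Z ω = 0 then (1:ℝ) else 0) = 1 - Z ω := fun ω => by
    rcases hZ01 ω with h | h <;> simp [h]
  have hA_untreated : ∀ ω, A ω * (1 - Z ω) = A0 ω * (1 - Z ω) := fun ω => by
    rcases hZ01 ω with h | h <;> simp [hA, h]
  simpa only [hite, hA_untreated] using hl g hg hgb

variable [IsFiniteMeasure P]

lemma integrable_of_abs_le {F : Ω → ℝ} (hF : Measurable F)
    (hFb : ∃ C, ∀ ω, |F ω| ≤ C) : Integrable F P := by
  obtain ⟨C, hC⟩ := hFb
  exact .of_bound hF.aestronglyMeasurable C (ae_of_all _ hC)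

lemma integral_one_sub_mul_eq {U V F : Ω → ℝ}
    (hU : Measurable U) (hUb : ∃ C, ∀ ω, |U ω| ≤ C) (hV : Measurable V) (hVb : ∃ C, ∀ ω, |V ω| ≤ C)
    (hF : Measurable F) (hFb : ∃ C, ∀ ω, |F ω| ≤ C)
    (h : ∫ ω, U ω * F ω ∂P = ∫ ω, V ω * F ω ∂P) :
    ∫ ω, (1 - U ω) * F ω ∂P = ∫ ω, (1 - V ω) * F ω ∂P := by
  simp only [sub_mul, one_mul]
  rw [integral_sub, integral_sub, h] <;>
    first
    | exact integrable_of_abs_le hF hFb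
    | exact integrable_of_abs_le (by fun_prop) (exists_abs_mul_le ‹_› hFb)

lemma ae_mem_Icc_of_integral_mul_eq {W D : Ω → ℝ} {l : S → ℝ} (hX : Measurable X)
    (hl : Measurable l) (hW : Measurable W) (hW01 : ∀ ω, W ω ∈ Icc 0 1) (hD : Measurable D)
    (hD0 : ∀ ω, 0 ≤ D ω) (hDb : ∃ C, ∀ ω, |D ω| ≤ C)
    (hWl : ∀ g : S → ℝ, Measurable g → (∃ C, ∀ x, |g x| ≤ C) →
      ∫ ω, W ω * D ω * g (X ω) ∂P = ∫ ω, l (X ω) * D ω * g (X ω) ∂P) :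
    ∀ᵐ ω ∂P, D ω ≠ 0 → l (X ω) ∈ Icc 0 1 := by
  set φ : Ω → ℝ := fun ω => D ω * ((l (X ω) - W ω) * clampWeight (l (X ω)))
  have hφ0 : 0 ≤ φ := fun ω => mul_nonneg (hD0 ω) (sub_mul_clampWeight_nonneg (hW01 ω))
  have hWb : ∃ C, ∀ ω, |W ω| ≤ C := ⟨1, fun ω => abs_le_one_of_mem_Icc (hW01 ω)⟩
  have hlκ : Integrable (fun ω => D ω * (l (X ω) * clampWeight (l (X ω)))) P :=
    integrable_of_abs_le (by fun_prop)
      (exists_abs_mul_le hDb ⟨1, fun ω => abs_mul_clampWeight_le_one _⟩)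
  have hWκ : Integrable (fun ω => D ω * (W ω * clampWeight (l (X ω)))) P :=
    integrable_of_abs_le (by fun_prop)
      (exists_abs_mul_le hDb (exists_abs_mul_le hWb ⟨1, fun ω => abs_clampWeight_le_one _⟩))
  have hφ : ∫ ω, φ ω ∂P = 0 := by
    have h := hWl (fun x => clampWeight (l x)) (by fun_prop)
      ⟨1, fun x => abs_clampWeight_le_one _⟩
    calc ∫ ω, φ ω ∂P
        = ∫ ω, D ω * (l (X ω) * clampWeight (l (X ω))) ∂P
          - ∫ ω, D ω * (W ω * clampWeight (l (X ω))) ∂P := by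
          rw [← integral_sub hlκ hWκ]; congr with ω; ring
      _ = 0 := by
          rw [sub_eq_zero]
          calc _ = ∫ ω, l (X ω) * D ω * clampWeight (l (X ω)) ∂P := by congr with ω; ring
            _ = _ := h.symm
            _ = _ := by congr with ω; ring
  filter_upwards [(integral_eq_zero_iff_of_nonneg hφ0 (hlκ.sub hWκ |>.congr
    (ae_of_all _ fun ω => by simp only [φ, Pi.sub_apply]; ring))).mp hφ] with ω hω hD
  exact mem_Icc_of_sub_mul_clampWeight_eq_zero (hW01 ω) ((mul_eq_zero.mp hω).resolve_left hD)

lemma ae_notMem_of_ae_eq_zero_imp (hX : Measurable X) (hZ : Measurable Z)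
    (hZ01 : ∀ ω, Z ω = 0 ∨ Z ω = 1) (he : Measurable e) (he0 : ∀ x, 0 ≤ e x)
    (he1 : ∀ x, e x < 1) {B : Set S} (hB : MeasurableSet B)
    (hZe : ∫ ω, Z ω * B.indicator 1 (X ω) ∂P = ∫ ω, e (X ω) * B.indicator 1 (X ω) ∂P)
    (h : ∀ᵐ ω ∂P, Z ω = 0 → X ω ∉ B) :
    ∀ᵐ ω ∂P, X ω ∉ B := by
  have hBb : ∃ C, ∀ ω, |B.indicator (1 : S → ℝ) (X ω)| ≤ C :=
    ⟨1, fun ω => abs_indicator_one_le_one B (X ω)⟩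
  have hzero : ∫ ω, (1 - Z ω) * B.indicator 1 (X ω) ∂P = 0 := by
    refine integral_eq_zero_of_ae ?_
    filter_upwards [h] with ω hω
    rcases hZ01 ω with h0 | h1
    · simp [h0, hω h0]
    · simp [h1]
  rw [integral_one_sub_mul_eq (V := fun ω => e (X ω)) hZ
    ⟨1, fun ω => abs_le_one_of_eq_zero_or_eq_one (hZ01 ω)⟩ (by fun_prop)
    ⟨1, fun ω => abs_le_one_of_mem_Icc ⟨he0 (X ω), (he1 (X ω)).le⟩⟩ (by fun_prop) hBb hZe] at hzero
  have hnonneg : 0 ≤ fun ω => (1 - e (X ω)) * B.indicator 1 (X ω) := fun ω =>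
    mul_nonneg (by linarith [he1 (X ω)]) (Set.indicator_nonneg (fun _ _ => zero_le_one) _)
  filter_upwards [(integral_eq_zero_iff_of_nonneg hnonneg
    (integrable_of_abs_le (by fun_prop) (exists_abs_mul_le
      ⟨1, fun ω => abs_le_one_of_mem_Icc ⟨by linarith [he1 (X ω)], by linarith [he0 (X ω)]⟩⟩
      hBb))).mp hzero]
    with ω hω hmem
  have : 1 - e (X ω) = 0 := by simpa [hmem] using hω
  linarith [he1 (X ω)]

lemma ae_comp_mem_Icc {W : Ω → ℝ} {l : S → ℝ} (hX : Measurable X) (hZ : Measurable Z)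
    (hZ01 : ∀ ω, Z ω = 0 ∨ Z ω = 1) (he : Measurable e) (he0 : ∀ x, 0 ≤ e x)
    (he1 : ∀ x, e x < 1) (hl : Measurable l) (hW : Measurable W) (hW01 : ∀ ω, W ω ∈ Icc 0 1)
    (hZe : ∀ g : S → ℝ, Measurable g → (∃ C, ∀ x, |g x| ≤ C) →
      ∫ ω, Z ω * g (X ω) ∂P = ∫ ω, e (X ω) * g (X ω) ∂P)
    (hWl : ∀ g : S → ℝ, Measurable g → (∃ C, ∀ x, |g x| ≤ C) →
      ∫ ω, W ω * (1 - Z ω) * g (X ω) ∂P = ∫ ω, l (X ω) * (1 - Z ω) * g (X ω) ∂P) :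
    ∀ᵐ ω ∂P, l (X ω) ∈ Icc 0 1 := by
  have hB : MeasurableSet (l ⁻¹' (Icc 0 1)ᶜ) := hl measurableSet_Icc.compl
  have hZ0 := ae_mem_Icc_of_integral_mul_eq hX hl hW hW01 (by fun_prop)
    (fun ω => by rcases hZ01 ω with h | h <;> simp [h])
    ⟨1, fun ω => by rcases hZ01 ω with h | h <;> simp [h]⟩ hWl
  have h := ae_notMem_of_ae_eq_zero_imp hX hZ hZ01 he he0 he1 hB
    (hZe _ (measurable_const.indicator hB) ⟨1, abs_indicator_one_le_one _⟩)
    (by filter_upwards [hZ0] with ω hω h0; simpa [h0] using hω)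
  filter_upwards [h] with ω hω
  simpa using hω

lemma integral_comp_mul_eq_integral_mul {W : Ω → ℝ} {l : S → ℝ} {ε : ℝ} (hX : Measurable X)
    (hZ : Measurable Z) (hZ01 : ∀ ω, Z ω = 0 ∨ Z ω = 1) (he : Measurable e)
    (he0 : ∀ x, 0 ≤ e x) (hε : 0 < ε) (he1 : ∀ x, e x ≤ 1 - ε) (hl : Measurable l)
    (hW : Measurable W) (hW01 : ∀ ω, W ω ∈ Icc 0 1)
    (hZe : ∀ g : S → ℝ, Measurable g → (∃ C, ∀ x, |g x| ≤ C) →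
      ∫ ω, Z ω * g (X ω) ∂P = ∫ ω, e (X ω) * g (X ω) ∂P)
    (hZWe : ∀ g : S → ℝ, Measurable g → (∃ C, ∀ x, |g x| ≤ C) →
      ∫ ω, Z ω * W ω * g (X ω) ∂P = ∫ ω, e (X ω) * W ω * g (X ω) ∂P)
    (hWl : ∀ g : S → ℝ, Measurable g → (∃ C, ∀ x, |g x| ≤ C) →
      ∫ ω, W ω * (1 - Z ω) * g (X ω) ∂P = ∫ ω, l (X ω) * (1 - Z ω) * g (X ω) ∂P)
    {g : S → ℝ} (hg : Measurable g) (hgb : ∃ C, ∀ x, |g x| ≤ C) :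
    ∫ ω, l (X ω) * g (X ω) ∂P = ∫ ω, W ω * g (X ω) ∂P := by
  have he1' : ∀ x, 0 < 1 - e x := fun x => by linarith [he1 x]
  have hl01 := ae_comp_mem_Icc hX hZ hZ01 he he0 (fun x => by linarith [he1 x]) hl hW hW01 hZe hWl
  set g₁ : S → ℝ := fun x => g x / (1 - e x)
  have hg₁ : Measurable g₁ := by fun_prop
  have hg₁b : ∃ C, ∀ x, |g₁ x| ≤ C := by
    obtain ⟨C, hC⟩ := hgb
    refine ⟨C / ε, fun x => ?_⟩
    rw [abs_div, abs_of_pos (he1' x)]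
    exact div_le_div₀ ((abs_nonneg _).trans (hC x)) (hC x) hε (by linarith [he1 x])
  have hZb : ∃ C, ∀ ω, |Z ω| ≤ C := ⟨1, fun ω => abs_le_one_of_eq_zero_or_eq_one (hZ01 ω)⟩
  have heb : ∃ C, ∀ ω, |e (X ω)| ≤ C :=
    ⟨1, fun ω => abs_le_one_of_mem_Icc ⟨he0 (X ω), by linarith [he1 (X ω)]⟩⟩
  have hWb : ∃ C, ∀ ω, |W ω| ≤ C := ⟨1, fun ω => abs_le_one_of_mem_Icc (hW01 ω)⟩
  have hclb : ∃ C, ∀ x, |unitClamp (l x)| ≤ C := ⟨1, fun x => abs_unitClamp_le_one _⟩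
  calc ∫ ω, l (X ω) * g (X ω) ∂P
      = ∫ ω, (1 - e (X ω)) * (unitClamp (l (X ω)) * g₁ (X ω)) ∂P := by
        refine integral_congr_ae ?_
        filter_upwards [hl01] with ω hω
        rw [unitClamp_of_mem hω]
        simp only [g₁]
        field_simp [(he1' (X ω)).ne']
    _ = ∫ ω, (1 - Z ω) * (unitClamp (l (X ω)) * g₁ (X ω)) ∂P :=
        (integral_one_sub_mul_eq hZ hZb (by fun_prop) heb (by fun_prop)
          ((exists_abs_mul_le hclb hg₁b).imp fun C hC ω => hC (X ω))
          (hZe _ (by fun_prop) (exists_abs_mul_le hclb hg₁b))).symm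
    _ = ∫ ω, W ω * (1 - Z ω) * g₁ (X ω) ∂P := by
        rw [hWl g₁ hg₁ hg₁b]
        refine integral_congr_ae ?_
        filter_upwards [hl01] with ω hω
        rw [unitClamp_of_mem hω]
        ring
    _ = ∫ ω, (1 - e (X ω)) * (W ω * g₁ (X ω)) ∂P := by
        rw [← integral_one_sub_mul_eq hZ hZb (by fun_prop) heb (by fun_prop)
          (exists_abs_mul_le hWb (hg₁b.imp fun C hC ω => hC (X ω)))
          (by simpa only [mul_assoc] using hZWe g₁ hg₁ hg₁b)]
        congr with ω
        ring
    _ = ∫ ω, W ω * g (X ω) ∂P := by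
        congr with ω
        simp only [g₁]
        field_simp [(he1' (X ω)).ne']

end

theorem stmt_14_general
    {Ω : Type*} [MeasurableSpace Ω] (P : Measure Ω) [IsProbabilityMeasure P]
    {S : Type*} [mS : MeasurableSpace S]
    {T : Type*} [mT : MeasurableSpace T]
    (X : Ω → S) (hX : Measurable X)
    (f : S → T) (hf : Measurable f)
    (Z A0 A1 : Ω → ℝ)
    (hZ : Measurable Z) (hA0 : Measurable A0) (hA1 : Measurable A1)
    (hZ01 : ∀ ω, Z ω = 0 ∨ Z ω = 1)
    (hA0_01 : ∀ ω, A0 ω = 0 ∨ A0 ω = 1)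
    (hA1_01 : ∀ ω, A1 ω = 0 ∨ A1 ω = 1)
    (A : Ω → ℝ) (hA : A = fun ω => (1 - Z ω) * A0 ω + Z ω * A1 ω)
    (e : S → ℝ) (he : Measurable e) (ε : ℝ) (hε : 0 < ε)
    (hebd : ∀ x, ε ≤ e x ∧ e x ≤ 1 - ε)
    (hVe : ∀ g : S → ℝ, Measurable g → (∃ C, ∀ x, |g x| ≤ C) →
      ∫ ω, Z ω * g (X ω) ∂P = ∫ ω, e (X ω) * g (X ω) ∂P)
    (hUnconf : ∀ ψ : ℝ × ℝ → ℝ, Measurable ψ → (∃ C, ∀ v, |ψ v| ≤ C) →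
      ∀ g : S → ℝ, Measurable g → (∃ C, ∀ x, |g x| ≤ C) →
      ∫ ω, Z ω * ψ (A0 ω, A1 ω) * g (X ω) ∂P
        = ∫ ω, e (X ω) * ψ (A0 ω, A1 ω) * g (X ω) ∂P)
    (l0 : S → ℝ) (hl0 : Measurable l0)
    (hl0v : ∀ g : S → ℝ, Measurable g → (∃ C, ∀ x, |g x| ≤ C) →
      ∫ ω, A ω * (if Z ω = 0 then (1:ℝ) else 0) * g (X ω) ∂P
        = ∫ ω, l0 (X ω) * (if Z ω = 0 then (1:ℝ) else 0) * g (X ω) ∂P)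
    (hMono : P {ω | A0 ω ≤ A1 ω} = 1) :
    ∀ T0 : Set T, MeasurableSet T0 →
      (∫ ω, l0 (X ω) * (if f (X ω) ∈ T0 then (1:ℝ) else 0) ∂P)
        = (P ({ω | A1 ω = 1 ∧ A0 ω = 1} ∩ {ω | f (X ω) ∈ T0})).toReal
      ∧ (P ({ω | A1 ω = 1 ∧ A0 ω = 1} ∩ {ω | f (X ω) ∈ T0})).toReal
          / (P {ω | A1 ω = 1 ∧ A0 ω = 1}).toReal
        = (∫ ω, l0 (X ω) * (if f (X ω) ∈ T0 then (1:ℝ) else 0) ∂P)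
          / (∫ ω, l0 (X ω) ∂P) := by
  intro T0 hT0
  have hA0_Icc : ∀ ω, A0 ω ∈ Icc 0 1 := fun ω => by rcases hA0_01 ω with h | h <;> simp [h]
  have hkey := fun g hg hgb => integral_comp_mul_eq_integral_mul (P := P) hX hZ hZ01 he
    (fun x => hε.le.trans (hebd x).1) hε (fun x => (hebd x).2) hl0 hA0 hA0_Icc hVe
    (fun _ => integral_mul_mul_comp_eq_of_unconfounded hA0_Icc hUnconf)
    (fun _ => integral_mul_one_sub_mul_comp_eq_of_observed hZ01 hA hl0v) (g := g) hg hgb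
  have hAT := setOf_and_ae_eq_of_le hA0 hA1 hA1_01 hMono
  have hnum : (∫ ω, l0 (X ω) * (if f (X ω) ∈ T0 then (1:ℝ) else 0) ∂P)
      = (P ({ω | A1 ω = 1 ∧ A0 ω = 1} ∩ {ω | f (X ω) ∈ T0})).toReal :=
    calc _ = ∫ ω, A0 ω * (if f (X ω) ∈ T0 then (1:ℝ) else 0) ∂P :=
          hkey (fun x => if f x ∈ T0 then 1 else 0) (measurable_const.ite (hf hT0) measurable_const)
            ⟨1, fun x => by split_ifs <;> simp⟩
      _ = P.real ({ω | A0 ω = 1} ∩ {ω | f (X ω) ∈ T0}) :=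
          integral_mul_ite_eq_measureReal_inter hA0 hA0_01 (hf.comp hX hT0)
      _ = _ := by
          rw [measureReal_def,
            measure_congr (hAT.inter (Filter.EventuallyEq.refl _ {ω | f (X ω) ∈ T0}))]
  have hden : ∫ ω, l0 (X ω) ∂P = (P {ω | A1 ω = 1 ∧ A0 ω = 1}).toReal :=
    calc _ = ∫ ω, A0 ω ∂P := by simpa using hkey 1 measurable_const ⟨1, fun _ => by simp⟩
      _ = P.real {ω | A0 ω = 1} := by
          simpa using integral_mul_ite_eq_measureReal_inter (P := P) hA0 hA0_01 MeasurableSet.univ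
      _ = _ := by rw [measureReal_def, ← measure_congr hAT]
  exact ⟨hnum, by rw [hnum, hden]⟩

/-- profiling the always-taker stratum: under unconfoundedness, positivity,
monotonicity and P(A0 = 1) > 0, for V := f ∘ X and every measurable T0,
E[ℓ0(X)·1{V ∈ T0}] = P(A1 = A0 = 1, V ∈ T0), and
P(V ∈ T0 | A1 = A0 = 1) = E[ℓ0(X)·1{V ∈ T0}] / E[ℓ0(X)]. -/
theorem stmt_14
    {Ω : Type*} [MeasurableSpace Ω] (P : Measure Ω) [IsProbabilityMeasure P]
    {S : Type*} [mS : MeasurableSpace S]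
    {T : Type*} [mT : MeasurableSpace T]
    (X : Ω → S) (hX : Measurable X)
    (f : S → T) (hf : Measurable f)
    (Z A0 A1 : Ω → ℝ)
    (hZ : Measurable Z) (hA0 : Measurable A0) (hA1 : Measurable A1)
    (hZ01 : ∀ ω, Z ω = 0 ∨ Z ω = 1)
    (hA0_01 : ∀ ω, A0 ω = 0 ∨ A0 ω = 1)
    (hA1_01 : ∀ ω, A1 ω = 0 ∨ A1 ω = 1)
    (A : Ω → ℝ) (hA : A = fun ω => (1 - Z ω) * A0 ω + Z ω * A1 ω)
    (e : S → ℝ) (he : Measurable e) (ε : ℝ) (hε : 0 < ε) (hε2 : ε < 1/2)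
    (hebd : ∀ x, ε ≤ e x ∧ e x ≤ 1 - ε)
    (hVe : ∀ g : S → ℝ, Measurable g → (∃ C, ∀ x, |g x| ≤ C) →
      ∫ ω, Z ω * g (X ω) ∂P = ∫ ω, e (X ω) * g (X ω) ∂P)
    (hUnconf : ∀ ψ : ℝ × ℝ → ℝ, Measurable ψ → (∃ C, ∀ v, |ψ v| ≤ C) →
      ∀ g : S → ℝ, Measurable g → (∃ C, ∀ x, |g x| ≤ C) →
      ∫ ω, Z ω * ψ (A0 ω, A1 ω) * g (X ω) ∂P
        = ∫ ω, e (X ω) * ψ (A0 ω, A1 ω) * g (X ω) ∂P)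
    (l0 : S → ℝ) (hl0 : Measurable l0)
    (hl0v : ∀ g : S → ℝ, Measurable g → (∃ C, ∀ x, |g x| ≤ C) →
      ∫ ω, A ω * (if Z ω = 0 then (1:ℝ) else 0) * g (X ω) ∂P
        = ∫ ω, l0 (X ω) * (if Z ω = 0 then (1:ℝ) else 0) * g (X ω) ∂P)
    (hMono : P {ω | A0 ω ≤ A1 ω} = 1)
    (hAT : 0 < P {ω | A0 ω = 1}) :
    ∀ T0 : Set T, MeasurableSet T0 →
      (∫ ω, l0 (X ω) * (if f (X ω) ∈ T0 then (1:ℝ) else 0) ∂P)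
        = (P ({ω | A1 ω = 1 ∧ A0 ω = 1} ∩ {ω | f (X ω) ∈ T0})).toReal
      ∧ (P ({ω | A1 ω = 1 ∧ A0 ω = 1} ∩ {ω | f (X ω) ∈ T0})).toReal
          / (P {ω | A1 ω = 1 ∧ A0 ω = 1}).toReal
        = (∫ ω, l0 (X ω) * (if f (X ω) ∈ T0 then (1:ℝ) else 0) ∂P)
          / (∫ ω, l0 (X ω) ∂P) :=
  stmt_14_general P (mS := mS) (mT := mT) X hX f hf Z A0 A1 hZ hA0 hA1 hZ01 hA0_01 hA1_01 A hA e he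
    ε hε hebd hVe hUnconf l0 hl0 hl0v hMono
end

section
/- (Profiling the never-taker stratum.) Let T be a measurable space, f : S → T measurable, and V := f ∘ X. Under unconfoundedness, positivity, and monotonicity, and assuming P(A1 = 0) > 0, for every measurable set T0 ⊆ T: E[(1 − ℓ1(X))·1{V ∈ T0}] = P(A1 = A0 = 0 and V ∈ T0), and consequently P(V ∈ T0 | A1 = A0 = 0) = E[(1 − ℓ1(X))·1{V ∈ T0}] / E[1 − ℓ1(X)]. (Under monotonicity the never-taker event {A1 = A0 = 0} coincides almost surely with {A1 = 0}.) -/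
open MeasureTheory ProbabilityTheory
open scoped Classical

/-- bounded measurable functions are integrable on a finite measure space -/
lemma stmt15_intg_of_bdd {Ω : Type*} [MeasurableSpace Ω] {P : Measure Ω} [IsFiniteMeasure P]
    {h : Ω → ℝ} (hm : Measurable h) (C : ℝ) (hb : ∀ ω, |h ω| ≤ C) : Integrable h P :=
  ⟨hm.aestronglyMeasurable, HasFiniteIntegral.of_bounded (C := C)
    (Filter.Eventually.of_forall fun ω => by simpa [Real.norm_eq_abs] using hb ω)⟩

lemma stmt15_abs_mul3 {a b c Ca Cb Cc : ℝ} (ha : |a| ≤ Ca) (hb : |b| ≤ Cb) (hc : |c| ≤ Cc) :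
    |a * b * c| ≤ Ca * Cb * Cc := by
  have h1 : |a * b * c| = |a| * |b| * |c| := by rw [abs_mul, abs_mul]
  rw [h1]
  have hCa : 0 ≤ Ca := (abs_nonneg a).trans ha
  have hCb : 0 ≤ Cb := (abs_nonneg b).trans hb
  exact mul_le_mul (mul_le_mul ha hb (abs_nonneg b) hCa) hc (abs_nonneg c)
    (mul_nonneg hCa hCb)

/-- profiling the never-taker stratum: under unconfoundedness, positivity,
monotonicity and P(A1 = 0) > 0, for V := f ∘ X and every measurable T0,
E[(1 − ℓ1(X))·1{V ∈ T0}] = P(A1 = A0 = 0, V ∈ T0), and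
P(V ∈ T0 | A1 = A0 = 0) = E[(1 − ℓ1(X))·1{V ∈ T0}] / E[1 − ℓ1(X)]. -/
theorem stmt_15
    {Ω : Type*} [MeasurableSpace Ω] (P : Measure Ω) [IsProbabilityMeasure P]
    {S : Type*} [mS : MeasurableSpace S]
    {T : Type*} [mT : MeasurableSpace T]
    (X : Ω → S) (hX : Measurable X)
    (f : S → T) (hf : Measurable f)
    (Z A0 A1 : Ω → ℝ)
    (hZ : Measurable Z) (hA0 : Measurable A0) (hA1 : Measurable A1)
    (hZ01 : ∀ ω, Z ω = 0 ∨ Z ω = 1)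
    (hA0_01 : ∀ ω, A0 ω = 0 ∨ A0 ω = 1)
    (hA1_01 : ∀ ω, A1 ω = 0 ∨ A1 ω = 1)
    (A : Ω → ℝ) (hA : A = fun ω => (1 - Z ω) * A0 ω + Z ω * A1 ω)
    (e : S → ℝ) (he : Measurable e) (ε : ℝ) (hε : 0 < ε) (hε2 : ε < 1/2)
    (hebd : ∀ x, ε ≤ e x ∧ e x ≤ 1 - ε)
    (hVe : ∀ g : S → ℝ, Measurable g → (∃ C, ∀ x, |g x| ≤ C) →
      ∫ ω, Z ω * g (X ω) ∂P = ∫ ω, e (X ω) * g (X ω) ∂P)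
    (hUnconf : ∀ ψ : ℝ × ℝ → ℝ, Measurable ψ → (∃ C, ∀ v, |ψ v| ≤ C) →
      ∀ g : S → ℝ, Measurable g → (∃ C, ∀ x, |g x| ≤ C) →
      ∫ ω, Z ω * ψ (A0 ω, A1 ω) * g (X ω) ∂P
        = ∫ ω, e (X ω) * ψ (A0 ω, A1 ω) * g (X ω) ∂P)
    (l1 : S → ℝ) (hl1 : Measurable l1)
    (hl1v : ∀ g : S → ℝ, Measurable g → (∃ C, ∀ x, |g x| ≤ C) →
      ∫ ω, A ω * (if Z ω = 1 then (1:ℝ) else 0) * g (X ω) ∂P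
        = ∫ ω, l1 (X ω) * (if Z ω = 1 then (1:ℝ) else 0) * g (X ω) ∂P)
    (hMono : P {ω | A0 ω ≤ A1 ω} = 1)
    (hNT : 0 < P {ω | A1 ω = 0}) :
    ∀ T0 : Set T, MeasurableSet T0 →
      (∫ ω, (1 - l1 (X ω)) * (if f (X ω) ∈ T0 then (1:ℝ) else 0) ∂P)
        = (P ({ω | A1 ω = 0 ∧ A0 ω = 0} ∩ {ω | f (X ω) ∈ T0})).toReal
      ∧ (P ({ω | A1 ω = 0 ∧ A0 ω = 0} ∩ {ω | f (X ω) ∈ T0})).toReal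
          / (P {ω | A1 ω = 0 ∧ A0 ω = 0}).toReal
        = (∫ ω, (1 - l1 (X ω)) * (if f (X ω) ∈ T0 then (1:ℝ) else 0) ∂P)
          / (∫ ω, (1 - l1 (X ω)) ∂P) := by
  -- basic pointwise facts
  have hZ0 : ∀ ω, 0 ≤ Z ω := fun ω => by rcases hZ01 ω with h | h <;> simp [h]
  have hZle : ∀ ω, Z ω ≤ 1 := fun ω => by rcases hZ01 ω with h | h <;> simp [h]
  have hZabs : ∀ ω, |Z ω| ≤ 1 := fun ω => abs_le.2 ⟨by linarith [hZ0 ω], hZle ω⟩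
  have hA1nn : ∀ ω, 0 ≤ A1 ω := fun ω => by rcases hA1_01 ω with h | h <;> simp [h]
  have hA1le : ∀ ω, A1 ω ≤ 1 := fun ω => by rcases hA1_01 ω with h | h <;> simp [h]
  have hA1abs : ∀ ω, |A1 ω| ≤ 1 := fun ω => abs_le.2 ⟨by linarith [hA1nn ω], hA1le ω⟩
  have hepos : ∀ x, 0 < e x := fun x => lt_of_lt_of_le hε (hebd x).1
  have heabs : ∀ x, ε ≤ |e x| := fun x => (hebd x).1.trans (le_abs_self _)
  -- reduced form of hl1v
  have hl1v' : ∀ g : S → ℝ, Measurable g → (∃ C, ∀ x, |g x| ≤ C) →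
      ∫ ω, Z ω * A1 ω * g (X ω) ∂P = ∫ ω, Z ω * l1 (X ω) * g (X ω) ∂P := by
    intro g hg hgb
    have h1 := hl1v g hg hgb
    have e1 : (fun ω => A ω * (if Z ω = 1 then (1:ℝ) else 0) * g (X ω))
        = fun ω => Z ω * A1 ω * g (X ω) := by
      funext ω; rcases hZ01 ω with h | h <;> simp [hA, h]
    have e2 : (fun ω => l1 (X ω) * (if Z ω = 1 then (1:ℝ) else 0) * g (X ω))
        = fun ω => Z ω * l1 (X ω) * g (X ω) := by
      funext ω; rcases hZ01 ω with h | h <;> simp [h] <;> ring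
    rw [e1, e2] at h1; exact h1
  -- separation lemma: sets on which l1 stays away from [0,1] are X-null
  have Hnull : ∀ B : Set S, MeasurableSet B → ∀ M : ℝ, (∀ x ∈ B, |l1 x| ≤ M) →
      ∀ δ : ℝ, 0 < δ →
      ((∀ x ∈ B, 1 + δ ≤ l1 x) ∨ (∀ x ∈ B, l1 x ≤ -δ)) → P (X ⁻¹' B) = 0 := by
    intro B hB M hM δ hδ hcase
    set χ : S → ℝ := B.indicator (fun _ => 1) with hχdef
    have hχmeas : Measurable χ := measurable_const.indicator hB
    have hχmem : ∀ x ∈ B, χ x = 1 := fun x hx => Set.indicator_of_mem hx _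
    have hχnmem : ∀ x, x ∉ B → χ x = 0 := fun x hx => Set.indicator_of_notMem hx _
    have hχnn : ∀ x, 0 ≤ χ x := fun x => by
      by_cases hx : x ∈ B
      · rw [hχmem x hx]; norm_num
      · rw [hχnmem x hx]
    have hχle : ∀ x, χ x ≤ 1 := fun x => by
      by_cases hx : x ∈ B
      · rw [hχmem x hx]
      · rw [hχnmem x hx]; norm_num
    have hχabs : ∀ x, |χ x| ≤ 1 := fun x => abs_le.2 ⟨by linarith [hχnn x], hχle x⟩
    -- integrability of all relevant integrands
    have hintZχ : Integrable (fun ω => Z ω * χ (X ω)) P :=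
      stmt15_intg_of_bdd (hZ.mul (hχmeas.comp hX)) 1 (fun ω => by
        rw [abs_mul]
        simpa using mul_le_mul (hZabs ω) (hχabs (X ω)) (abs_nonneg _) zero_le_one)
    have hintZA1χ : Integrable (fun ω => Z ω * A1 ω * χ (X ω)) P :=
      stmt15_intg_of_bdd ((hZ.mul hA1).mul (hχmeas.comp hX)) 1 (fun ω => by
        simpa using stmt15_abs_mul3 (hZabs ω) (hA1abs ω) (hχabs (X ω)))
    have hintZl1χ : Integrable (fun ω => Z ω * l1 (X ω) * χ (X ω)) P := by
      refine stmt15_intg_of_bdd ((hZ.mul (hl1.comp hX)).mul (hχmeas.comp hX)) |M| ?_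
      intro ω
      by_cases hx : X ω ∈ B
      · have := stmt15_abs_mul3 (hZabs ω) ((hM _ hx).trans (le_abs_self M))
          ((abs_le.2 ⟨by linarith [hχnn (X ω)], hχle (X ω)⟩ : |χ (X ω)| ≤ 1))
        simpa using this
      · rw [hχnmem _ hx]; simp [abs_nonneg]
    set t := ∫ ω, Z ω * χ (X ω) ∂P with htdef
    have ht0 : 0 ≤ t := integral_nonneg fun ω => mul_nonneg (hZ0 ω) (hχnn _)
    have h1 := hl1v' χ hχmeas ⟨1, hχabs⟩
    have ht : t = 0 := by
      rcases hcase with hup | hdn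
      · have hle1 : ∫ ω, Z ω * A1 ω * χ (X ω) ∂P ≤ t := by
          refine integral_mono hintZA1χ hintZχ fun ω => ?_
          have h2 : Z ω * A1 ω ≤ Z ω := mul_le_of_le_one_right (hZ0 ω) (hA1le ω)
          exact mul_le_mul_of_nonneg_right h2 (hχnn _)
        have hle2 : (1 + δ) * t ≤ ∫ ω, Z ω * l1 (X ω) * χ (X ω) ∂P := by
          rw [htdef, ← integral_const_mul]
          refine integral_mono (hintZχ.const_mul _) hintZl1χ fun ω => ?_
          by_cases hx : X ω ∈ B
          · have h3 := hup _ hx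
            rw [hχmem _ hx]
            simp only [mul_one]
            nlinarith [hZ0 ω]
          · rw [hχnmem _ hx]; simp
        have : t ≤ 0 := by nlinarith
        linarith
      · have hle1 : (0:ℝ) ≤ ∫ ω, Z ω * A1 ω * χ (X ω) ∂P :=
          integral_nonneg fun ω => mul_nonneg (mul_nonneg (hZ0 ω) (hA1nn ω)) (hχnn _)
        have hle2 : ∫ ω, Z ω * l1 (X ω) * χ (X ω) ∂P ≤ (-δ) * t := by
          rw [htdef, ← integral_const_mul]
          refine integral_mono hintZl1χ (hintZχ.const_mul _) fun ω => ?_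
          by_cases hx : X ω ∈ B
          · have h3 := hdn _ hx
            rw [hχmem _ hx]
            simp only [mul_one]
            nlinarith [hZ0 ω]
          · rw [hχnmem _ hx]; simp
        have : t ≤ 0 := by nlinarith
        linarith
    have h2 := hVe χ hχmeas ⟨1, hχabs⟩
    have he0 : ∫ ω, e (X ω) * χ (X ω) ∂P = 0 := by rw [← h2]; exact ht
    have hintχX : Integrable (fun ω => χ (X ω)) P :=
      stmt15_intg_of_bdd (hχmeas.comp hX) 1 (fun ω => hχabs _)
    have hinteχX : Integrable (fun ω => e (X ω) * χ (X ω)) P :=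
      stmt15_intg_of_bdd ((he.comp hX).mul (hχmeas.comp hX)) 1 (fun ω => by
        rw [abs_mul]
        have he1 : |e (X ω)| ≤ 1 := by
          rw [abs_of_pos (hepos _)]; linarith [(hebd (X ω)).2]
        simpa using mul_le_mul he1 (hχabs (X ω)) (abs_nonneg _) zero_le_one)
    have hεle : ε * ∫ ω, χ (X ω) ∂P ≤ 0 := by
      have h3 : ∫ ω, ε * χ (X ω) ∂P ≤ ∫ ω, e (X ω) * χ (X ω) ∂P :=
        integral_mono (hintχX.const_mul ε) hinteχX
          (fun ω => mul_le_mul_of_nonneg_right (hebd _).1 (hχnn _))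
      rw [integral_const_mul] at h3
      linarith [he0 ▸ h3]
    have hχnn' : (0:ℝ) ≤ ∫ ω, χ (X ω) ∂P := integral_nonneg fun ω => hχnn _
    have hχint0 : ∫ ω, χ (X ω) ∂P = 0 := by nlinarith
    have hind : (fun ω => χ (X ω)) = (X ⁻¹' B).indicator (1 : Ω → ℝ) := by
      funext ω
      by_cases hx : X ω ∈ B
      · rw [hχmem _ hx]
        have hx' : ω ∈ X ⁻¹' B := hx
        exact (Set.indicator_of_mem hx' (1 : Ω → ℝ)).symm
      · rw [hχnmem _ hx]
        have hx' : ω ∉ X ⁻¹' B := hx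
        exact (Set.indicator_of_notMem hx' (1 : Ω → ℝ)).symm
    rw [hind, integral_indicator_one (hX hB)] at hχint0
    rcases (ENNReal.toReal_eq_zero_iff _).1 hχint0 with h | h
    · exact h
    · exact absurd h (measure_ne_top _ _)
  -- a.e. bounds on l1 ∘ X
  have hae : ∀ᵐ ω ∂P, 0 ≤ l1 (X ω) ∧ l1 (X ω) ≤ 1 := by
    have hup : ∀ n : ℕ, P (X ⁻¹' {x | 1 + 1/((n:ℝ)+1) ≤ l1 x ∧ l1 x ≤ 2 + (n:ℝ)}) = 0 := by
      intro n
      have hmB : MeasurableSet {x | 1 + 1/((n:ℝ)+1) ≤ l1 x ∧ l1 x ≤ 2 + (n:ℝ)} :=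
        (measurableSet_le measurable_const hl1).inter (measurableSet_le hl1 measurable_const)
      refine Hnull _ hmB (2 + (n:ℝ)) (fun x hx => ?_) (1/((n:ℝ)+1)) (by positivity)
        (Or.inl fun x hx => hx.1)
      have h1 : (0:ℝ) < 1/((n:ℝ)+1) := by positivity
      exact abs_le.2 ⟨by nlinarith [hx.1, (Nat.cast_nonneg n : (0:ℝ) ≤ n)], hx.2⟩
    have hdn : ∀ n : ℕ, P (X ⁻¹' {x | -(2 + (n:ℝ)) ≤ l1 x ∧ l1 x ≤ -(1/((n:ℝ)+1))}) = 0 := by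
      intro n
      have hmB : MeasurableSet {x | -(2 + (n:ℝ)) ≤ l1 x ∧ l1 x ≤ -(1/((n:ℝ)+1))} :=
        (measurableSet_le measurable_const hl1).inter (measurableSet_le hl1 measurable_const)
      refine Hnull _ hmB (2 + (n:ℝ)) (fun x hx => ?_) (1/((n:ℝ)+1)) (by positivity)
        (Or.inr fun x hx => hx.2)
      have h1 : (0:ℝ) < 1/((n:ℝ)+1) := by positivity
      exact abs_le.2 ⟨hx.1, by nlinarith [hx.2, (Nat.cast_nonneg n : (0:ℝ) ≤ n)]⟩
    have hbad : P {ω | ¬ (0 ≤ l1 (X ω) ∧ l1 (X ω) ≤ 1)} = 0 := by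
      refine measure_mono_null ?_
        (measure_iUnion_null (s := fun n : ℕ =>
          X ⁻¹' {x | 1 + 1/((n:ℝ)+1) ≤ l1 x ∧ l1 x ≤ 2 + (n:ℝ)}
          ∪ X ⁻¹' {x | -(2 + (n:ℝ)) ≤ l1 x ∧ l1 x ≤ -(1/((n:ℝ)+1))})
          (fun n => measure_union_null (hup n) (hdn n)))
      intro ω hω
      simp only [Set.mem_setOf_eq, not_and_or, not_le] at hω
      simp only [Set.mem_iUnion, Set.mem_union, Set.mem_preimage, Set.mem_setOf_eq]
      set y := l1 (X ω) with hy
      rcases hω with hneg | hgt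
      · obtain ⟨n, hn⟩ := exists_nat_gt (max (1 / (-y)) (-y))
        have hny : -y < n := lt_of_le_of_lt (le_max_right _ _) hn
        have h1 : (0:ℝ) < -y := by linarith
        have h2 : 1 / (-y) < (n:ℝ) + 1 :=
          lt_of_le_of_lt (le_max_left _ _) (hn.trans (by linarith))
        have h3 : 1 < ((n:ℝ)+1) * (-y) := (div_lt_iff₀ h1).1 h2
        refine ⟨n, Or.inr ⟨by linarith, ?_⟩⟩
        have h4 : 1/((n:ℝ)+1) ≤ -y := by
          rw [div_le_iff₀ (by positivity : (0:ℝ) < (n:ℝ)+1)]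
          nlinarith
        linarith
      · obtain ⟨n, hn⟩ := exists_nat_gt (max (1 / (y - 1)) y)
        have hny : y < n := lt_of_le_of_lt (le_max_right _ _) hn
        have h1 : (0:ℝ) < y - 1 := by linarith
        have h2 : 1 / (y - 1) < (n:ℝ) + 1 :=
          lt_of_le_of_lt (le_max_left _ _) (hn.trans (by linarith))
        have h3 : 1 < ((n:ℝ)+1) * (y - 1) := (div_lt_iff₀ h1).1 h2
        refine ⟨n, Or.inl ⟨?_, by linarith⟩⟩
        have h4 : 1/((n:ℝ)+1) ≤ y - 1 := by
          rw [div_le_iff₀ (by positivity : (0:ℝ) < (n:ℝ)+1)]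
          nlinarith
        linarith
    exact ae_iff.2 hbad
  -- clamped version of l1
  set l1' : S → ℝ := fun x => min (max (l1 x) 0) 1 with hl1'def
  have hl1'meas : Measurable l1' := (hl1.max measurable_const).min measurable_const
  have hl1'nn : ∀ x, 0 ≤ l1' x := fun x => le_min (le_max_right _ _) zero_le_one
  have hl1'le : ∀ x, l1' x ≤ 1 := fun x => min_le_right _ _
  have hl1'abs : ∀ x, |l1' x| ≤ 1 := fun x => abs_le.2 ⟨by linarith [hl1'nn x], hl1'le x⟩
  have haeq : ∀ᵐ ω ∂P, l1' (X ω) = l1 (X ω) := by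
    refine hae.mono fun ω h => ?_
    rw [hl1'def]
    simp only
    rw [max_eq_left h.1, min_eq_left h.2]
  -- key identity
  have Hkey2 : ∀ g : S → ℝ, Measurable g → ∀ C : ℝ, (∀ x, |g x| ≤ C) →
      ∫ ω, A1 ω * g (X ω) ∂P = ∫ ω, l1 (X ω) * g (X ω) ∂P := by
    intro g hg C hgC
    set g0 : S → ℝ := fun x => g x / e x with hg0def
    have hg0meas : Measurable g0 := hg.div he
    have hg0bd : ∀ x, |g0 x| ≤ |C| / ε := fun x => by
      rw [hg0def]
      simp only
      rw [abs_div]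
      exact div_le_div₀ (abs_nonneg C) ((hgC x).trans (le_abs_self C)) hε (heabs x)
    have h1 := hl1v' g0 hg0meas ⟨|C|/ε, hg0bd⟩
    set ψ : ℝ × ℝ → ℝ := fun v => min (max v.2 0) 1 with hψdef
    have hψmeas : Measurable ψ := (measurable_snd.max measurable_const).min measurable_const
    have hψbd : ∀ v : ℝ × ℝ, |ψ v| ≤ 1 := fun v => by
      have h0 : 0 ≤ ψ v := le_min (le_max_right _ _) zero_le_one
      have h2 : ψ v ≤ 1 := min_le_right _ _
      exact abs_le.2 ⟨by linarith, h2⟩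
    have h2 := hUnconf ψ hψmeas ⟨1, hψbd⟩ g0 hg0meas ⟨|C|/ε, hg0bd⟩
    have eψ : ∀ ω, ψ (A0 ω, A1 ω) = A1 ω := fun ω => by
      rcases hA1_01 ω with h | h <;> simp [hψdef, h]
    simp only [eψ] at h2
    have hegg : (fun ω => e (X ω) * A1 ω * g0 (X ω)) = fun ω => A1 ω * g (X ω) := by
      funext ω
      have hne : e (X ω) ≠ 0 := ne_of_gt (hepos _)
      rw [hg0def]
      simp only
      field_simp
    have h3 : ∫ ω, Z ω * l1 (X ω) * g0 (X ω) ∂P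
        = ∫ ω, Z ω * (l1' (X ω) * g0 (X ω)) ∂P :=
      integral_congr_ae (haeq.mono fun ω h => by dsimp only; rw [h]; ring)
    have h4 := hVe (fun x => l1' x * g0 x) (hl1'meas.mul hg0meas)
      ⟨|C|/ε, fun x => by
        rw [abs_mul]
        have := mul_le_mul (hl1'abs x) (hg0bd x) (abs_nonneg _) zero_le_one
        simpa using this⟩
    have h5 : ∫ ω, e (X ω) * (l1' (X ω) * g0 (X ω)) ∂P = ∫ ω, l1 (X ω) * g (X ω) ∂P := by
      refine integral_congr_ae (haeq.mono fun ω h => ?_)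
      have hne : e (X ω) ≠ 0 := ne_of_gt (hepos _)
      dsimp only
      rw [h, hg0def]
      simp only
      field_simp
    calc ∫ ω, A1 ω * g (X ω) ∂P
        = ∫ ω, e (X ω) * A1 ω * g0 (X ω) ∂P := by rw [hegg]
      _ = ∫ ω, Z ω * A1 ω * g0 (X ω) ∂P := h2.symm
      _ = ∫ ω, Z ω * l1 (X ω) * g0 (X ω) ∂P := h1
      _ = ∫ ω, Z ω * (l1' (X ω) * g0 (X ω)) ∂P := h3
      _ = ∫ ω, e (X ω) * (l1' (X ω) * g0 (X ω)) ∂P := h4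
      _ = ∫ ω, l1 (X ω) * g (X ω) ∂P := h5
  -- integrability of l1(X) * g(X)
  have hintl1g : ∀ g : S → ℝ, Measurable g → (∀ x, |g x| ≤ 1) →
      Integrable (fun ω => l1 (X ω) * g (X ω)) P := by
    intro g hg hgb
    have h1 : Integrable (fun ω => l1' (X ω) * g (X ω)) P :=
      stmt15_intg_of_bdd ((hl1'meas.comp hX).mul (hg.comp hX)) 1 (fun ω => by
        rw [abs_mul]
        simpa using mul_le_mul (hl1'abs (X ω)) (hgb (X ω)) (abs_nonneg _) zero_le_one)
    exact h1.congr (haeq.mono fun ω h => by dsimp only; rw [h])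
  -- null complement from monotonicity
  have hcompl : P ({ω | A0 ω ≤ A1 ω}ᶜ) = 0 := by
    rw [measure_compl (measurableSet_le hA0 hA1) (measure_ne_top _ _), hMono]
    simp
  -- the main per-set computation
  have main : ∀ B : Set Ω, MeasurableSet B → ∀ g : S → ℝ, Measurable g →
      (∀ ω, g (X ω) = if ω ∈ B then 1 else 0) → (∀ x, |g x| ≤ 1) →
      ∫ ω, (1 - l1 (X ω)) * g (X ω) ∂P = (P ({ω | A1 ω = 0 ∧ A0 ω = 0} ∩ B)).toReal := by
    intro B hB g hg hgB hgb
    have hintg : Integrable (fun ω => g (X ω)) P :=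
      stmt15_intg_of_bdd (hg.comp hX) 1 (fun ω => hgb _)
    have hintl := hintl1g g hg hgb
    have hintA1g : Integrable (fun ω => A1 ω * g (X ω)) P :=
      stmt15_intg_of_bdd (hA1.mul (hg.comp hX)) 1 (fun ω => by
        rw [abs_mul]
        simpa using mul_le_mul (hA1abs ω) (hgb (X ω)) (abs_nonneg _) zero_le_one)
    have step1 : ∫ ω, (1 - l1 (X ω)) * g (X ω) ∂P
        = ∫ ω, g (X ω) ∂P - ∫ ω, l1 (X ω) * g (X ω) ∂P := by
      rw [← integral_sub hintg hintl]
      exact integral_congr_ae (Filter.Eventually.of_forall fun ω => by ring)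
    have step2 := (Hkey2 g hg 1 hgb).symm
    have step3 : ∫ ω, g (X ω) ∂P - ∫ ω, A1 ω * g (X ω) ∂P
        = ∫ ω, (1 - A1 ω) * g (X ω) ∂P := by
      rw [← integral_sub hintg hintA1g]
      exact integral_congr_ae (Filter.Eventually.of_forall fun ω => by ring)
    have step4 : (fun ω => (1 - A1 ω) * g (X ω))
        = ({ω | A1 ω = 0} ∩ B).indicator (1 : Ω → ℝ) := by
      funext ω
      by_cases hb : ω ∈ B
      · rcases hA1_01 ω with h | h
        · have hm : ω ∈ {ω | A1 ω = 0} ∩ B := ⟨h, hb⟩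
          rw [hgB ω, if_pos hb, Set.indicator_of_mem hm, h]
          norm_num
        · have hm : ω ∉ {ω | A1 ω = 0} ∩ B := by
            intro hc
            have : A1 ω = 0 := hc.1
            rw [h] at this
            exact one_ne_zero this
          rw [hgB ω, if_pos hb, Set.indicator_of_notMem hm, h]
          ring
      · have hm : ω ∉ {ω | A1 ω = 0} ∩ B := fun hc => hb hc.2
        rw [hgB ω, if_neg hb, Set.indicator_of_notMem hm]
        ring
    have hsetA1 : MeasurableSet {ω | A1 ω = 0} := hA1 (measurableSet_singleton 0)
    have step5 : ∫ ω, ({ω | A1 ω = 0} ∩ B).indicator (1 : Ω → ℝ) ω ∂P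
        = (P ({ω | A1 ω = 0} ∩ B)).toReal := integral_indicator_one (hsetA1.inter hB)
    have hswap : P ({ω | A1 ω = 0 ∧ A0 ω = 0} ∩ B) = P ({ω | A1 ω = 0} ∩ B) := by
      refine le_antisymm (measure_mono fun ω hω => ⟨hω.1.1, hω.2⟩) ?_
      have hsub : {ω | A1 ω = 0} ∩ B
          ⊆ ({ω | A1 ω = 0 ∧ A0 ω = 0} ∩ B) ∪ {ω | A0 ω ≤ A1 ω}ᶜ := by
        intro ω hω
        by_cases hle : A0 ω ≤ A1 ω
        · left
          refine ⟨⟨hω.1, ?_⟩, hω.2⟩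
          rcases hA0_01 ω with h | h
          · exact h
          · exfalso
            have h1 : A1 ω = 0 := hω.1
            rw [h, h1] at hle
            linarith
        · right
          exact hle
      calc P ({ω | A1 ω = 0} ∩ B)
          ≤ P (({ω | A1 ω = 0 ∧ A0 ω = 0} ∩ B) ∪ {ω | A0 ω ≤ A1 ω}ᶜ) := measure_mono hsub
        _ ≤ P ({ω | A1 ω = 0 ∧ A0 ω = 0} ∩ B) + P ({ω | A0 ω ≤ A1 ω}ᶜ) := measure_union_le _ _
        _ = P ({ω | A1 ω = 0 ∧ A0 ω = 0} ∩ B) := by rw [hcompl, add_zero]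
    rw [step1, step2, step3, step4, step5, hswap]
  -- conclude
  intro T0 hT0
  set g1 : S → ℝ := fun x => if f x ∈ T0 then 1 else 0 with hg1def
  have hg1meas : Measurable g1 := Measurable.ite (hf hT0) measurable_const measurable_const
  have hg1b : ∀ x, |g1 x| ≤ 1 := fun x => by
    rw [hg1def]
    by_cases hx : f x ∈ T0 <;> simp [hx]
  have hB1 : MeasurableSet {ω | f (X ω) ∈ T0} := hX (hf hT0)
  have hgB1 : ∀ ω, g1 (X ω) = if ω ∈ {ω | f (X ω) ∈ T0} then 1 else 0 := fun ω => by
    rw [hg1def]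
    by_cases hx : f (X ω) ∈ T0 <;> simp [hx]
  have part1 : ∫ ω, (1 - l1 (X ω)) * (if f (X ω) ∈ T0 then (1:ℝ) else 0) ∂P
      = (P ({ω | A1 ω = 0 ∧ A0 ω = 0} ∩ {ω | f (X ω) ∈ T0})).toReal :=
    main {ω | f (X ω) ∈ T0} hB1 g1 hg1meas hgB1 hg1b
  have hden : ∫ ω, (1 - l1 (X ω)) ∂P = (P {ω | A1 ω = 0 ∧ A0 ω = 0}).toReal := by
    have h := main Set.univ MeasurableSet.univ (fun _ => 1) measurable_const
      (fun ω => by simp) (fun x => by norm_num)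
    simpa using h
  exact ⟨part1, by rw [part1, hden]⟩
end
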